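/- arXiv:1607.00414 — 7 statements merged into one kernel-verified Lean document; each statement's English description precedes it below -/
import Mathlib

section
/- Suppose τ(t)/t → q as t → ∞ for some q ∈ [0,1), t − τ(t) → ∞ as t → ∞, and a > b·(1/(1−q))^γ > 0. Suppose g satisfies: g(0) = 0; g(x) > 0 for all x > 0; g is continuous on [0,∞); g is increasing on (0,δ₁) for some δ₁ > 0; and there is γ ≥ 1 such that g∘G⁻¹ ∈ RV_∞(−γ). If x is a solution of the delay equation with x(t) → 0 as t → ∞, then 0 < liminf_{t→∞} G(x(t))/t ≤ limsup_{t→∞} G(x(t))/t < +∞. -/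
open Filter Set Real MeasureTheory

/-- `f` is regularly varying at infinity with index `α`. -/
def RVatTop (f : ℝ → ℝ) (α : ℝ) : Prop :=
  ∀ lam : ℝ, 0 < lam →
    Filter.Tendsto (fun t => f (lam * t) / f t) Filter.atTop (nhds (lam ^ α))

/-- `G(y) = ∫_y^1 du / g(u)`. -/
noncomputable def Gfun (g : ℝ → ℝ) : ℝ → ℝ := fun y => ∫ u in y..(1:ℝ), 1 / g u

/-!
In the variable `y = G ∘ x` the equation reads `y' = a - b g(x(t - τ t)) / g(x t)`, so
`y' ≤ a` and `y` grows at most linearly. For the lower bound, `y → ∞` because `x → 0`, and for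
large `t` the delayed time `t - τ t` lies in `[λ t, t]` for some `λ < 1 - q`. As long as
`y s ≥ κ s` up to time `t`, this gives `y (t - τ t) ≥ λ y t`; since `g ∘ G⁻¹` is eventually
nonincreasing and regularly varying with index `-γ`, the ratio `g(x(t - τ t)) / g(x t)` is then
at most some `ρ > λ^(-γ)` with `b ρ < a`. Hence `y' ≥ a - b ρ > κ` wherever `y` touches the
line `κ t` from above, so it never crosses it.
-/

open Topology

section Gfun

variable {g : ℝ → ℝ} (hgpos : ∀ y, 0 < y → 0 < g y) (hgcont : ContinuousOn g (Ioi 0))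
include hgpos hgcont

theorem hasDerivAt_Gfun {y : ℝ} (hy : 0 < y) : HasDerivAt (Gfun g) (-(1 / g y)) y := by
  have hinv : ContinuousOn (fun u => 1 / g u) (Ioi 0) :=
    continuousOn_const.div hgcont fun u hu => (hgpos u hu).ne'
  have hint : IntervalIntegrable (fun u => 1 / g u) volume y 1 :=
    (hinv.mono fun u hu => lt_of_lt_of_le (lt_min hy one_pos) hu.1).intervalIntegrable
  exact intervalIntegral.integral_hasDerivAt_left hint
    (hinv.stronglyMeasurableAtFilter isOpen_Ioi y hy) (hinv.continuousAt (Ioi_mem_nhds hy))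

theorem Gfun_strictAntiOn : StrictAntiOn (Gfun g) (Ioi 0) := by
  refine strictAntiOn_of_deriv_neg (convex_Ioi 0)
    (fun y hy => (hasDerivAt_Gfun hgpos hgcont hy).continuousAt.continuousWithinAt) ?_
  intro y hy
  rw [interior_Ioi] at hy
  rw [(hasDerivAt_Gfun hgpos hgcont hy).deriv, neg_lt_zero]
  exact one_div_pos.2 (hgpos y hy)

theorem hasDerivAt_Gfun_comp {x : ℝ → ℝ} {a b d t : ℝ}
    (hx : HasDerivAt x (-a * g (x t) + b * d) t) (hxt : 0 < x t) :
    HasDerivAt (fun s => Gfun g (x s)) (a - b * (d / g (x t))) t := by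
  have hgx := (hgpos _ hxt).ne'
  refine ((hasDerivAt_Gfun hgpos hgcont hxt).comp t hx).congr_deriv ?_
  field_simp
  ring

end Gfun

theorem RVatTop.eventually_le_mul_of_antitoneOn {φ : ℝ → ℝ} {α lam ρ Z : ℝ}
    (hφ : RVatTop φ α) (hanti : AntitoneOn φ (Ici Z)) (hpos : ∀ᶠ u in atTop, 0 < φ u)
    (hlam : 0 < lam) (hρ : lam ^ α < ρ) :
    ∀ᶠ u in atTop, ∀ v, lam * u ≤ v → φ v ≤ ρ * φ u := by
  filter_upwards [(hφ lam hlam).eventually_lt_const hρ, hpos,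
    (tendsto_id.const_mul_atTop hlam).eventually_ge_atTop Z] with u hratio hu hZ v hv
  calc φ v ≤ φ (lam * u) := hanti hZ (hZ.trans hv) hv
    _ ≤ ρ * φ u := ((div_lt_iff₀ hu).1 hratio).le

section RightInverse

variable {G Ginv : ℝ → ℝ} (hG : StrictAntiOn G (Ioi 0))
  (hinv : ∀ z, 0 ≤ z → 0 < Ginv z ∧ G (Ginv z) = z)
include hG hinv

theorem le_iff_le_of_rightInverse {z c : ℝ} (hz : 0 ≤ z) (hc : 0 < c) :
    Ginv z ≤ c ↔ G c ≤ z := by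
  rw [← hG.le_iff_ge hc (hinv z hz).1, (hinv z hz).2]

theorem antitoneOn_of_rightInverse : AntitoneOn Ginv (Ici 0) := fun z₁ hz₁ _ hz₂ h =>
  (le_iff_le_of_rightInverse hG hinv hz₂ (hinv z₁ hz₁).1).2 ((hinv z₁ hz₁).2.le.trans h)

theorem rightInverse_apply_self {y : ℝ} (hy : 0 < y) (hGy : 0 ≤ G y) : Ginv (G y) = y :=
  hG.injOn (hinv _ hGy).1 hy (hinv _ hGy).2

theorem tendsto_comp_atTop_of_tendsto_zero {x : ℝ → ℝ} (hx : Tendsto x atTop (𝓝 0))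
    (hxpos : ∀ᶠ t in atTop, 0 < x t) : Tendsto (fun t => G (x t)) atTop atTop := by
  refine tendsto_atTop.2 fun M => ?_
  obtain ⟨hpos, hGM⟩ := hinv (max M 0) (le_max_right _ _)
  filter_upwards [hx.eventually (eventually_lt_nhds hpos), hxpos] with t hxt hxt₀
  exact (le_max_left _ _).trans (hGM ▸ (hG hxt₀ hpos hxt).le)

theorem exists_antitoneOn_comp_rightInverse {g : ℝ → ℝ} {δ : ℝ} (hδ : 0 < δ)
    (hg : MonotoneOn g (Ioo 0 δ)) : ∃ Z, AntitoneOn (fun z => g (Ginv z)) (Ici Z) := by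
  have hmem : ∀ z ∈ Ici (max 0 (G (δ / 2))), Ginv z ∈ Ioo 0 δ := fun z hz => by
    have hz₀ : 0 ≤ z := (le_max_left _ _).trans hz
    refine ⟨(hinv z hz₀).1, ?_⟩
    have := (le_iff_le_of_rightInverse hG hinv hz₀ (half_pos hδ)).2 ((le_max_right _ _).trans hz)
    linarith
  refine ⟨max 0 (G (δ / 2)), fun z₁ hz₁ z₂ hz₂ h => hg (hmem z₂ hz₂) (hmem z₁ hz₁) ?_⟩
  exact antitoneOn_of_rightInverse hG hinv (mem_Ici.2 ((le_max_left _ _).trans hz₁))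
    (mem_Ici.2 ((le_max_left _ _).trans hz₂)) h

theorem eventually_delay_ratio_le {g x σ : ℝ → ℝ} {α δ lam ρ : ℝ}
    (hgpos : ∀ y, 0 < y → 0 < g y) (hδ : 0 < δ) (hg : MonotoneOn g (Ioo 0 δ))
    (hRV : RVatTop (fun z => g (Ginv z)) α) (hlam : 0 < lam) (hρ : lam ^ α < ρ)
    (hxpos : ∀ᶠ t in atTop, 0 < x t) (hy : Tendsto (fun t => G (x t)) atTop atTop)
    (hσ : Tendsto σ atTop atTop) :
    ∀ᶠ t in atTop, lam * G (x t) ≤ G (x (σ t)) → g (x (σ t)) ≤ ρ * g (x t) := by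
  have hxinv : ∀ᶠ t in atTop, Ginv (G (x t)) = x t := by
    filter_upwards [hxpos, hy.eventually_ge_atTop 0] with t hxt hyt
    exact rightInverse_apply_self hG hinv hxt hyt
  obtain ⟨Z, hZ⟩ := exists_antitoneOn_comp_rightInverse hG hinv hδ hg
  have hφ := hRV.eventually_le_mul_of_antitoneOn hZ
    ((eventually_ge_atTop 0).mono fun z hz => hgpos _ (hinv z hz).1) hlam hρ
  filter_upwards [hy.eventually hφ, hxinv, hσ.eventually hxinv] with t hφt hxt hxσ hdelay
  simpa only [hxt, hxσ] using hφt _ hdelay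

end RightInverse

theorem nonneg_of_deriv_pos_at_first_zero {f f' : ℝ → ℝ} {T₀ T : ℝ} (hT : T₀ < T)
    (hf : ∀ t, T₀ < t → HasDerivAt f (f' t) t) (hinit : ∀ t ∈ Icc T₀ T, 0 ≤ f t)
    (hzero : ∀ t, T ≤ t → (∀ s ∈ Icc T₀ t, 0 ≤ f s) → f t = 0 → 0 < f' t) :
    ∀ t, T₀ ≤ t → 0 ≤ f t := by
  by_contra! hneg
  set S := {t | T₀ ≤ t ∧ f t < 0}
  have hSbdd : BddBelow S := ⟨T₀, fun s hs => hs.1⟩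
  set t₁ := sInf S
  have hbefore : ∀ s ∈ Ico T₀ t₁, 0 ≤ f s := fun s hs =>
    not_lt.1 fun h => hs.2.not_ge (csInf_le hSbdd ⟨hs.1, h⟩)
  have hTt₁ : T ≤ t₁ := le_csInf hneg fun s hs =>
    not_lt.1 fun h => hs.2.not_ge (hinit s ⟨hs.1, h.le⟩)
  have ht₁ : T₀ < t₁ := hT.trans_le hTt₁
  have hcont := (hf t₁ ht₁).continuousAt
  have hft₁ : 0 ≤ f t₁ :=
    ge_of_tendsto (hcont.tendsto.mono_left nhdsWithin_le_nhds)
      (eventually_of_mem (Ioo_mem_nhdsLT ht₁) fun s hs => hbefore s (Ioo_subset_Ico_self hs))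
  -- `f ≥ 0` just to the right of `t₁`, contradicting the choice of `t₁`
  have hright : ∀ᶠ s in 𝓝[>] t₁, 0 ≤ f s := by
    rcases hft₁.lt_or_eq with hpos | hzero₁
    · exact nhdsWithin_le_nhds ((hcont.eventually (lt_mem_nhds hpos)).mono fun _ => le_of_lt)
    have hhist : ∀ s ∈ Icc T₀ t₁, 0 ≤ f s := fun s hs =>
      hs.2.eq_or_lt.elim (fun h => h ▸ hft₁) fun h => hbefore s ⟨hs.1, h⟩
    have hslope : Tendsto (slope f t₁) (𝓝[>] t₁) (𝓝 (f' t₁)) :=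
      (hasDerivAt_iff_tendsto_slope.1 (hf t₁ ht₁)).mono_left
        (nhdsWithin_mono _ fun s hs => ne_of_gt hs)
    filter_upwards [hslope.eventually (eventually_gt_nhds (hzero t₁ hTt₁ hhist hzero₁.symm)),
      self_mem_nhdsWithin] with s hs hts
    rw [slope_def_field, ← hzero₁, sub_zero] at hs
    exact (div_pos_iff_of_pos_right (sub_pos.2 hts)).1 hs |>.le
  obtain ⟨u, hu, hIoo⟩ := mem_nhdsGT_iff_exists_Ioo_subset.1 hright
  obtain ⟨s, hsS, hsu⟩ := exists_lt_of_csInf_lt hneg hu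
  rcases (csInf_le hSbdd hsS).eq_or_lt with h | h
  · exact hsS.2.not_ge (h ▸ hft₁)
  · exact hsS.2.not_ge (hIoo ⟨h, hsu⟩)

theorem exists_pos_eventually_mul_le_of_delay {y y' σ : ℝ → ℝ} {lam η : ℝ}
    (hlam : 0 < lam) (hη : 0 < η)
    (hy : ∀ᶠ t in atTop, HasDerivAt y (y' t) t) (hy₁ : ∀ᶠ t in atTop, 1 ≤ y t)
    (hσ : ∀ᶠ t in atTop, σ t ∈ Icc (lam * t) t)
    (hy' : ∀ᶠ t in atTop, lam * y t ≤ y (σ t) → η ≤ y' t) :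
    ∃ κ > 0, ∀ᶠ t in atTop, κ * t ≤ y t := by
  obtain ⟨T, hT⟩ := eventually_atTop.1
    ((eventually_gt_atTop 0).and (hy.and (hy₁.and (hσ.and hy'))))
  have hTpos : 0 < T := (hT T le_rfl).1
  -- delayed times of `t ≥ T₁` stay in `[T, t]`; `κ ≤ 1 / T₁` starts the barrier on `[T, T₁]`
  set T₁ := T / lam + T
  have hTT₁ : T < T₁ := lt_add_of_pos_left T (div_pos hTpos hlam)
  have hT₁ : T ≤ lam * T₁ := by
    have : lam * T₁ = T + lam * T := by rw [mul_add, mul_div_cancel₀ _ hlam.ne']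
    nlinarith
  set κ := min (η / 2) (1 / T₁)
  have hκ : 0 < κ := lt_min (half_pos hη) (one_div_pos.2 (hTpos.trans hTT₁))
  refine ⟨κ, hκ, (eventually_ge_atTop T).mono fun t ht => sub_nonneg.1 <|
    nonneg_of_deriv_pos_at_first_zero (f := fun t => y t - κ * t) (f' := fun t => y' t - κ)
      hTT₁ (fun s hs => ?_) (fun s hs => ?_) (fun s hs hhist hzero => ?_) t ht⟩
  · exact (hT s hs.le).2.1.sub (((hasDerivAt_id s).const_mul κ).congr_deriv (mul_one κ))
  · refine sub_nonneg.2 ?_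
    calc κ * s ≤ 1 / T₁ * T₁ := mul_le_mul (min_le_right _ _) hs.2 (hTpos.le.trans hs.1)
          (one_div_pos.2 (hTpos.trans hTT₁)).le
      _ = 1 := one_div_mul_cancel (hTpos.trans hTT₁).ne'
      _ ≤ y s := (hT s hs.1).2.2.1
  · obtain ⟨-, -, -, ⟨hσl, hσu⟩, hη'⟩ := hT s (hTT₁.le.trans hs)
    have hσT : T ≤ σ s := hT₁.trans ((mul_le_mul_of_nonneg_left hs hlam.le).trans hσl)
    have hdelay : lam * y s ≤ y (σ s) :=
      calc lam * y s = κ * (lam * s) := by rw [sub_eq_zero.1 hzero]; ring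
        _ ≤ κ * σ s := mul_le_mul_of_nonneg_left hσl hκ.le
        _ ≤ y (σ s) := sub_nonneg.1 (hhist (σ s) ⟨hσT, hσu⟩)
    linarith [hη' hdelay, min_le_left (η / 2) (1 / T₁)]

theorem liminf_div_pos_of_eventually_mul_le {y : ℝ → ℝ}
    (hy : ∃ κ > 0, ∀ᶠ t in atTop, κ * t ≤ y t) :
    0 < liminf (fun t => ((y t / t : ℝ) : EReal)) atTop := by
  obtain ⟨κ, hκ, hκy⟩ := hy
  refine (EReal.coe_pos.2 hκ).trans_le (le_liminf_of_le (by isBoundedDefault) ?_)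
  filter_upwards [hκy, eventually_gt_atTop 0] with t ht ht₀
  exact EReal.coe_le_coe_iff.2 ((le_div_iff₀ ht₀).2 ht)

theorem limsup_div_lt_top_of_deriv_le {y y' : ℝ → ℝ} {C : ℝ}
    (hy : ∀ᶠ t in atTop, HasDerivAt y (y' t) t) (hy' : ∀ᶠ t in atTop, y' t ≤ C) :
    limsup (fun t => ((y t / t : ℝ) : EReal)) atTop < ⊤ := by
  obtain ⟨T, hT⟩ := eventually_atTop.1 (hy.and hy')
  have hgrowth : ∀ t, T ≤ t → y t - y T ≤ C * (t - T) := fun t ht =>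
    (convex_Ici T).image_sub_le_mul_sub_of_deriv_le
      (fun s hs => (hT s hs).1.continuousAt.continuousWithinAt)
      (fun s hs => (hT s (interior_subset hs)).1.differentiableAt.differentiableWithinAt)
      (fun s hs => (hT s (interior_subset hs)).1.deriv ▸ (hT s (interior_subset hs)).2)
      T self_mem_Ici t ht ht
  refine (limsup_le_of_le (by isBoundedDefault) ?_).trans_lt
    (EReal.coe_lt_top (|y T - C * T| + C))
  filter_upwards [eventually_ge_atTop (max T 1)] with t ht
  have ht₁ : 1 ≤ t := (le_max_right _ _).trans ht
  rw [EReal.coe_le_coe_iff, div_le_iff₀ (one_pos.trans_le ht₁)]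
  nlinarith [hgrowth t ((le_max_left _ _).trans ht), le_abs_self (y T - C * T),
    mul_le_mul_of_nonneg_left ht₁ (abs_nonneg (y T - C * T))]

theorem exists_lt_mul_rpow_neg_lt {a b c γ : ℝ} (hc : 0 < c) (h : b * (1 / c) ^ γ < a) :
    ∃ lam, 0 < lam ∧ lam < c ∧ b * lam ^ (-γ) < a := by
  rw [one_div, Real.inv_rpow hc.le, ← Real.rpow_neg hc.le] at h
  have hcont : ContinuousAt (fun l : ℝ => b * l ^ (-γ)) c :=
    continuousAt_const.mul (Real.continuousAt_rpow_const c (-γ) (Or.inl hc.ne'))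
  obtain ⟨lam, hlam, hmem⟩ :=
    (((hcont.eventually (gt_mem_nhds h)).filter_mono nhdsWithin_le_nhds).and
      (Ioo_mem_nhdsLT hc)).exists
  exact ⟨lam, hmem.1, hmem.2, hlam⟩

theorem eventually_delay_mem_Icc {τ : ℝ → ℝ} {q lam : ℝ} (hτnn : ∀ t, 0 ≤ t → 0 ≤ τ t)
    (hτ : Tendsto (fun t => τ t / t) atTop (𝓝 q)) (hlam : lam < 1 - q) :
    ∀ᶠ t in atTop, t - τ t ∈ Icc (lam * t) t := by
  filter_upwards [hτ.eventually (gt_mem_nhds (by linarith : q < 1 - lam)),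
    eventually_gt_atTop 0] with t h ht
  rw [div_lt_iff₀ ht] at h
  exact ⟨by linarith, sub_le_self _ (hτnn t ht.le)⟩

theorem stmt2_general
    (a b q γ τb δ₁ : ℝ) (τ g x Ginv : ℝ → ℝ)
    (hb : 0 < b)
    (hτnn : ∀ t : ℝ, 0 ≤ t → 0 ≤ τ t)
    -- delay growth hypotheses
    (hq1 : q < 1)
    (hτq : Filter.Tendsto (fun t => τ t / t) Filter.atTop (nhds q))
    (httau : Filter.Tendsto (fun t => t - τ t) Filter.atTop Filter.atTop)
    -- size condition on a and b
    (habq : b * (1 / (1 - q)) ^ γ < a)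
    -- hypotheses on g
    (hgpos : ∀ y : ℝ, 0 < y → 0 < g y)
    (hgcont : ContinuousOn g (Set.Ici 0))
    (hδ₁ : 0 < δ₁)
    (hginc : StrictMonoOn g (Set.Ioo 0 δ₁))
    -- the inverse of G
    (hGinv_right : ∀ z : ℝ, 0 ≤ z → Ginv z ∈ Set.Ioc (0:ℝ) 1 ∧ Gfun g (Ginv z) = z)
    (hRV : RVatTop (fun z => g (Ginv z)) (-γ))
    -- x is a solution of the delay equation
    (hxpos : ∀ t : ℝ, -τb ≤ t → 0 < x t)
    (hode : ∀ t : ℝ, 0 < t →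
      HasDerivAt x (-a * g (x t) + b * g (x (t - τ t))) t)
    (hx0 : Filter.Tendsto x Filter.atTop (nhds 0)) :
    0 < Filter.liminf (fun t => ((Gfun g (x t) / t : ℝ) : EReal)) Filter.atTop ∧
    Filter.liminf (fun t => ((Gfun g (x t) / t : ℝ) : EReal)) Filter.atTop ≤
      Filter.limsup (fun t => ((Gfun g (x t) / t : ℝ) : EReal)) Filter.atTop ∧
    Filter.limsup (fun t => ((Gfun g (x t) / t : ℝ) : EReal)) Filter.atTop < ⊤ := by
  have hgcont' : ContinuousOn g (Ioi 0) := hgcont.mono Ioi_subset_Ici_self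
  have hG := Gfun_strictAntiOn hgpos hgcont'
  have hGinv : ∀ z, 0 ≤ z → 0 < Ginv z ∧ Gfun g (Ginv z) = z :=
    fun z hz => ⟨(hGinv_right z hz).1.1, (hGinv_right z hz).2⟩
  obtain ⟨lam, hlam, hlamq, hlama⟩ := exists_lt_mul_rpow_neg_lt (sub_pos.2 hq1) habq
  obtain ⟨ρ, hρ, hρa⟩ := exists_between ((lt_div_iff₀' hb).2 hlama)
  have hη : 0 < a - b * ρ := sub_pos.2 ((lt_div_iff₀' hb).1 hρa)
  have hxpos' : ∀ᶠ t in atTop, 0 < x t := (eventually_ge_atTop (-τb)).mono hxpos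
  have hytop := tendsto_comp_atTop_of_tendsto_zero hG hGinv hx0 hxpos'
  have hy : ∀ᶠ t in atTop, HasDerivAt (fun s => Gfun g (x s))
      (a - b * (g (x (t - τ t)) / g (x t))) t := by
    filter_upwards [eventually_gt_atTop 0, hxpos'] with t ht hxt
    exact hasDerivAt_Gfun_comp hgpos hgcont' (hode t ht) hxt
  have hratio := eventually_delay_ratio_le hG hGinv hgpos hδ₁ hginc.monotoneOn hRV hlam hρ
    hxpos' hytop httau
  refine ⟨liminf_div_pos_of_eventually_mul_le ?_, liminf_le_limsup,
    limsup_div_lt_top_of_deriv_le hy (C := a) ?_⟩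
  · refine exists_pos_eventually_mul_le_of_delay (σ := fun t => t - τ t) hlam hη hy
      (hytop.eventually_ge_atTop 1) (eventually_delay_mem_Icc hτnn hτq hlamq) ?_
    filter_upwards [hratio, hxpos'] with t hratio_t hxt hdelay
    have := (div_le_iff₀ (hgpos _ hxt)).2 (hratio_t hdelay)
    linarith [mul_le_mul_of_nonneg_left this hb.le]
  · filter_upwards [hxpos', httau.eventually hxpos'] with t hxt hxσ
    linarith [mul_nonneg hb.le (div_nonneg (hgpos _ hxσ).le (hgpos _ hxt).le)]

theorem stmt2
    (a b q γ τb δ₁ : ℝ) (τ g ψ x Ginv : ℝ → ℝ)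
    (hb : 0 < b) (hab : b < a) (hτb : 0 < τb)
    (hτcont : ContinuousOn τ (Set.Ici 0))
    (hτnn : ∀ t : ℝ, 0 ≤ t → 0 ≤ τ t)
    (hτinf : IsGLB {y : ℝ | ∃ t : ℝ, 0 ≤ t ∧ y = t - τ t} (-τb))
    -- delay growth hypotheses
    (hq0 : 0 ≤ q) (hq1 : q < 1)
    (hτq : Filter.Tendsto (fun t => τ t / t) Filter.atTop (nhds q))
    (httau : Filter.Tendsto (fun t => t - τ t) Filter.atTop Filter.atTop)
    -- size condition on a and b
    (hγ : 1 ≤ γ)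
    (hbqpos : 0 < b * (1 / (1 - q)) ^ γ)
    (habq : b * (1 / (1 - q)) ^ γ < a)
    -- hypotheses on g
    (hg0 : g 0 = 0)
    (hgpos : ∀ y : ℝ, 0 < y → 0 < g y)
    (hgcont : ContinuousOn g (Set.Ici 0))
    (hδ₁ : 0 < δ₁)
    (hginc : StrictMonoOn g (Set.Ioo 0 δ₁))
    -- the inverse of G
    (hGinv_left : ∀ y ∈ Set.Ioc (0:ℝ) 1, Ginv (Gfun g y) = y)
    (hGinv_right : ∀ z : ℝ, 0 ≤ z → Ginv z ∈ Set.Ioc (0:ℝ) 1 ∧ Gfun g (Ginv z) = z)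
    (hRV : RVatTop (fun z => g (Ginv z)) (-γ))
    -- x is a solution of the delay equation
    (hψcont : ContinuousOn ψ (Set.Icc (-τb) 0))
    (hψpos : ∀ t ∈ Set.Icc (-τb) 0, 0 < ψ t)
    (hxcont : ContinuousOn x (Set.Ici (-τb)))
    (hxpos : ∀ t : ℝ, -τb ≤ t → 0 < x t)
    (hxinit : ∀ t ∈ Set.Icc (-τb) 0, x t = ψ t)
    (hode : ∀ t : ℝ, 0 < t →
      HasDerivAt x (-a * g (x t) + b * g (x (t - τ t))) t)
    (hx0 : Filter.Tendsto x Filter.atTop (nhds 0)) :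
    0 < Filter.liminf (fun t => ((Gfun g (x t) / t : ℝ) : EReal)) Filter.atTop ∧
    Filter.liminf (fun t => ((Gfun g (x t) / t : ℝ) : EReal)) Filter.atTop ≤
      Filter.limsup (fun t => ((Gfun g (x t) / t : ℝ) : EReal)) Filter.atTop ∧
    Filter.limsup (fun t => ((Gfun g (x t) / t : ℝ) : EReal)) Filter.atTop < ⊤ :=
  stmt2_general a b q γ τb δ₁ τ g x Ginv hb hτnn hq1 hτq httau habq hgpos hgcont hδ₁ hginc
    hGinv_right hRV hxpos hode hx0
end

section
/- Suppose t − τ(t) → ∞ and τ(t)/t → q ∈ (0,1) as t → ∞, and a < b·(1/(1−q))^{β/(β−1)} (with a > b > 0). Suppose g satisfies: g(0) = 0; g(x) > 0 for all x > 0; g is continuous on [0,∞); g is C¹ on (0,δ₁) with g′(x) > 0 there, for some δ₁ > 0; and g′ ∈ RV_0(β−1) for some β > 1. If x is a solution of the delay equation with x(t) → 0 as t → ∞, then lim_{t→∞} log x(t) / log t = −(1/β)·(1/log(1/(1−q)))·log(a/b). -/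
/-!
By Cauchy's mean value theorem `g` is regularly varying at `0` with index `β`, so for small `u`
the ratio `g (λ u) / g u` is close to `λ ^ β`, and `g u ≥ C u ^ p` for every `p > β`.

Let `α = log (a / b) / (β log (1 / (1 - q)))`, so that `b (1 - q) ^ (-α β) = a`. For `c ≠ α`
compare `x` with `y t = K t ^ (-c)` at the first time the two graphs touch. Since
`t - τ t ≈ (1 - q) t`, the delayed value `y (t - τ t)` is about `(1 - q) ^ (-c) y t`, so the
right-hand side of the equation along `y` is about `(b (1 - q) ^ (-c β) - a) g (y t)`.
If `c > α` this is positive while `y` decreases, so `y` is a strict subsolution and `x ≥ y`.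
If `c < α` it is at most `-m g (y t) ≤ -m C y ^ (1 + 1 / c)`, using `1 + 1 / c > β`, which holds
because `α (β - 1) < 1` by the size condition on `a / b`; and `y' = -c K ^ (-1 / c) y ^ (1 + 1 / c)`
is larger once `K` is large, so `y` is a strict supersolution and `x ≤ y`. Taking logarithms,
`log x t / log t → -α`.
-/

open Filter Set Real

/-- `f` is regularly varying at `0` (from the right) with index `β`. -/
def RVatZero (f : ℝ → ℝ) (β : ℝ) : Prop :=
  ∀ lam : ℝ, 0 < lam →
    Filter.Tendsto (fun y => f (lam * y) / f y) (nhdsWithin 0 (Set.Ioi 0))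
      (nhds (lam ^ β))

open Topology

theorem eventually_nhdsGT_zero_mul_lt {lam δ : ℝ} (hδ : 0 < δ) :
    ∀ᶠ u in 𝓝[>] (0 : ℝ), lam * u < δ :=
  (((continuous_const_mul lam).tendsto' 0 0 (mul_zero lam)).eventually
    (eventually_lt_nhds hδ)).filter_mono nhdsWithin_le_nhds

theorem eventually_nhdsGT_zero_lt {δ : ℝ} (hδ : 0 < δ) : ∀ᶠ u in 𝓝[>] (0 : ℝ), u < δ :=
  (eventually_lt_nhds hδ).filter_mono nhdsWithin_le_nhds

theorem exists_apply_mul_div_eq_deriv_ratio {g g' : ℝ → ℝ} {δ lam u : ℝ} (hg0 : g 0 = 0)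
    (hgcont : ContinuousOn g (Ici 0)) (hgpos : ∀ y, 0 < y → 0 < g y)
    (hg : ∀ y ∈ Ioo 0 δ, HasDerivAt g (g' y) y) (hg'pos : ∀ y ∈ Ioo 0 δ, 0 < g' y)
    (hlam : 0 < lam) (hu : 0 < u) (huδ : u < δ) (hlu : lam * u < δ) :
    ∃ ξ ∈ Ioo 0 u, g (lam * u) / g u = lam * (g' (lam * ξ) / g' ξ) := by
  have hIoo : ∀ ξ ∈ Ioo 0 u, ξ ∈ Ioo 0 δ := fun ξ hξ => ⟨hξ.1, hξ.2.trans huδ⟩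
  have hlamIoo : ∀ ξ ∈ Ioo 0 u, lam * ξ ∈ Ioo 0 δ := fun ξ hξ =>
    ⟨mul_pos hlam hξ.1, (mul_lt_mul_of_pos_left hξ.2 hlam).trans hlu⟩
  obtain ⟨ξ, hξ, h⟩ := exists_ratio_hasDerivAt_eq_ratio_slope
    (fun v => g (lam * v)) (fun v => g' (lam * v) * lam) hu
    (hgcont.comp (continuous_const_mul lam).continuousOn fun v hv => mul_nonneg hlam.le hv.1)
    (fun ξ hξ => (hg _ (hlamIoo ξ hξ)).comp ξ
      (((hasDerivAt_id ξ).const_mul lam).congr_deriv (mul_one lam)))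
    g g' (hgcont.mono Icc_subset_Ici_self) fun ξ hξ => hg ξ (hIoo ξ hξ)
  refine ⟨ξ, hξ, ?_⟩
  have := hgpos u hu
  have := hg'pos ξ (hIoo ξ hξ)
  simp only [mul_zero, hg0, sub_zero] at h
  field_simp
  linarith

namespace RVatZero

variable {g : ℝ → ℝ} {β : ℝ}

theorem of_hasDerivAt {g' : ℝ → ℝ} {δ : ℝ} (hδ : 0 < δ) (hg0 : g 0 = 0)
    (hgcont : ContinuousOn g (Ici 0)) (hgpos : ∀ y, 0 < y → 0 < g y)
    (hg : ∀ y ∈ Ioo 0 δ, HasDerivAt g (g' y) y) (hg'pos : ∀ y ∈ Ioo 0 δ, 0 < g' y)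
    (hg' : RVatZero g' (β - 1)) : RVatZero g β := by
  intro lam hlam
  have hlim : Tendsto (fun ξ => lam * (g' (lam * ξ) / g' ξ)) (𝓝[>] 0) (𝓝 (lam ^ β)) := by
    convert (hg' lam hlam).const_mul lam using 2
    rw [rpow_sub_one hlam.ne', mul_div_cancel₀ _ hlam.ne']
  rw [tendsto_def]
  intro V hV
  obtain ⟨d, hd, hdV⟩ := (nhdsGT_basis 0).mem_iff.1 (tendsto_def.1 hlim V hV)
  filter_upwards [eventually_nhdsGT_zero_lt hδ, eventually_nhdsGT_zero_mul_lt hδ, Ioo_mem_nhdsGT hd]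
    with u huδ hlu hu
  obtain ⟨ξ, hξ, heq⟩ :=
    exists_apply_mul_div_eq_deriv_ratio hg0 hgcont hgpos hg hg'pos hlam hu.1 huδ hlu
  rw [mem_preimage, heq]
  exact hdV ⟨hξ.1, hξ.2.trans hu.2⟩

theorem eventually_le_mul (hg : RVatZero g β) (hgpos : ∀ y, 0 < y → 0 < g y) {lam r : ℝ}
    (hlam : 0 < lam) (hr : lam ^ β < r) : ∀ᶠ u in 𝓝[>] 0, g (lam * u) ≤ r * g u := by
  filter_upwards [(hg lam hlam).eventually (eventually_lt_nhds hr), self_mem_nhdsWithin]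
    with u hu (hu0 : 0 < u)
  exact ((div_lt_iff₀ (hgpos u hu0)).1 hu).le

theorem eventually_mul_le (hg : RVatZero g β) (hgpos : ∀ y, 0 < y → 0 < g y) {lam r : ℝ}
    (hlam : 0 < lam) (hr : r < lam ^ β) : ∀ᶠ u in 𝓝[>] 0, r * g u ≤ g (lam * u) := by
  filter_upwards [(hg lam hlam).eventually (eventually_gt_nhds hr), self_mem_nhdsWithin]
    with u hu (hu0 : 0 < u)
  exact ((lt_div_iff₀ (hgpos u hu0)).1 hu).le

end RVatZero

theorem le_of_apply_two_mul_le {φ : ℝ → ℝ} {d m : ℝ} (hd : 0 < d)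
    (hφ : ∀ u ∈ Ioo 0 d, φ (2 * u) ≤ φ u) (hm : ∀ u ∈ Icc d (2 * d), m ≤ φ u) :
    ∀ u ∈ Ioc 0 (2 * d), m ≤ φ u := by
  have hdyadic : ∀ n : ℕ, ∀ u ∈ Icc (d / 2 ^ n) (2 * d), m ≤ φ u := by
    intro n
    induction n with
    | zero => simpa using hm
    | succ n ih =>
      rintro u ⟨hu₁, hu₂⟩
      rcases le_or_gt d u with h | h
      · exact hm u ⟨h, hu₂⟩
      have hu : 0 < u := lt_of_lt_of_le (by positivity) hu₁
      refine (ih (2 * u) ⟨?_, by linarith⟩).trans (hφ u ⟨hu, h⟩)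
      rw [pow_succ, ← div_div] at hu₁
      linarith
  rintro u ⟨hu, hu₂⟩
  obtain ⟨n, hn⟩ := exists_pow_lt_of_lt_one (div_pos hu hd) (by norm_num : (1 / 2 : ℝ) < 1)
  refine hdyadic n u ⟨?_, hu₂⟩
  rw [one_div_pow, div_lt_div_iff₀ (by positivity) hd] at hn
  rw [div_le_iff₀ (by positivity)]
  linarith

theorem RVatZero.exists_mul_rpow_le {g : ℝ → ℝ} {β : ℝ} (hg : RVatZero g β)
    (hgpos : ∀ y, 0 < y → 0 < g y) (hgcont : ContinuousOn g (Ioi 0)) {p : ℝ} (hp : β < p) :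
    ∃ C, 0 < C ∧ ∀ᶠ u in 𝓝[>] 0, C * u ^ p ≤ g u := by
  obtain ⟨d, hd, hdoubling⟩ := (nhdsGT_basis 0).eventually_iff.1
    (hg.eventually_le_mul hgpos two_pos (rpow_lt_rpow_of_exponent_lt one_lt_two hp))
  set φ := fun u => g u / u ^ p
  have hφ : ∀ u ∈ Ioo 0 d, φ (2 * u) ≤ φ u := fun u hu => by
    have := hu.1
    simp only [φ]
    rw [mul_rpow two_pos.le hu.1.le, ← div_div, div_le_div_iff_of_pos_right (by positivity)]
    exact (div_le_iff₀' (by positivity)).2 (hdoubling hu)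
  have hφcont : ContinuousOn φ (Icc d (2 * d)) :=
    (hgcont.mono fun u hu => hd.trans_le hu.1).div
      (continuousOn_id.rpow_const fun u hu => Or.inl (hd.trans_le hu.1).ne')
      fun u hu => (rpow_pos_of_pos (hd.trans_le hu.1) p).ne'
  obtain ⟨z, hz, hmin⟩ := isCompact_Icc.exists_isMinOn (nonempty_Icc.2 (by linarith)) hφcont
  have hz0 : 0 < z := hd.trans_le hz.1
  refine ⟨φ z, div_pos (hgpos z hz0) (by positivity), ?_⟩
  filter_upwards [Ioo_mem_nhdsGT (by linarith : (0 : ℝ) < 2 * d)] with u hu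
  have := hu.1
  exact (le_div_iff₀ (by positivity)).1
    (le_of_apply_two_mul_le hd hφ (fun v hv => hmin hv) u ⟨hu.1, hu.2.le⟩)

theorem exists_first_contact {u v u' v' : ℝ → ℝ} {t₀ T : ℝ}
    (hu : ∀ t, T ≤ t → HasDerivAt u (u' t) t) (hv : ∀ t, T ≤ t → HasDerivAt v (v' t) t)
    (hinit : ∀ t ∈ Icc t₀ T, u t ≤ v t) (hT : u T < v T) (hcontact : ∃ t, T ≤ t ∧ v t ≤ u t) :
    ∃ t₁, T < t₁ ∧ u t₁ = v t₁ ∧ (∀ s ∈ Icc t₀ t₁, u s ≤ v s) ∧ v' t₁ ≤ u' t₁ := by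
  set S := Ici T ∩ (fun t => v t - u t) ⁻¹' Iic 0
  have hS : IsClosed S := by
    refine ContinuousOn.preimage_isClosed_of_isClosed (fun t ht => ?_) isClosed_Ici isClosed_Iic
    exact ((hv t ht).continuousAt.sub (hu t ht).continuousAt).continuousWithinAt
  obtain ⟨t₂, ht₂, h₂⟩ := hcontact
  have hbdd : BddBelow S := ⟨T, fun t ht => ht.1⟩
  have ht₁ : sInf S ∈ S := hS.csInf_mem ⟨t₂, ht₂, sub_nonpos.2 h₂⟩ hbdd
  set t₁ := sInf S
  have hbefore : ∀ s ∈ Ico T t₁, u s < v s := fun s hs =>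
    not_le.1 fun h => (csInf_le hbdd ⟨hs.1, sub_nonpos.2 h⟩).not_gt hs.2
  have hTt₁ : T < t₁ := ht₁.1.lt_of_ne fun h => (sub_pos.2 hT).not_ge (h ▸ ht₁.2)
  have hd : HasDerivAt (fun t => v t - u t) (v' t₁ - u' t₁) t₁ :=
    (hv t₁ ht₁.1).sub (hu t₁ ht₁.1)
  have hleft : ∀ᶠ s in 𝓝[<] t₁, 0 < v s - u s := by
    filter_upwards [Ioo_mem_nhdsLT hTt₁] with s hs
    exact sub_pos.2 (hbefore s ⟨hs.1.le, hs.2⟩)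
  have heq : v t₁ - u t₁ = 0 :=
    le_antisymm ht₁.2 (ge_of_tendsto (hd.continuousAt.tendsto.mono_left nhdsWithin_le_nhds)
      (hleft.mono fun _ h => h.le))
  refine ⟨t₁, hTt₁, (sub_eq_zero.1 heq).symm, fun s hs => ?_, sub_nonpos.1 ?_⟩
  · rcases le_or_gt s T with h | h
    · exact hinit s ⟨hs.1, h⟩
    rcases hs.2.lt_or_eq with h' | rfl
    · exact (hbefore s ⟨h.le, h'⟩).le
    · exact (sub_eq_zero.1 heq).ge
  -- `v - u` decreases to `0` on the left of `t₁`, so its slopes there are negative.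
  refine le_of_tendsto ((hasDerivWithinAt_iff_tendsto_slope' self_notMem_Iio).1
    hd.hasDerivWithinAt) ?_
  filter_upwards [hleft, self_mem_nhdsWithin] with s hs (hst : s < t₁)
  rw [slope_def_field, heq, sub_zero]
  exact div_nonpos_of_nonneg_of_nonpos hs.le (sub_nonpos.2 hst.le)

section Comparison

variable {a b t₀ T : ℝ} {g x y y' τ : ℝ → ℝ} {s : Set ℝ}

theorem lt_of_strict_supersolution (hb : 0 ≤ b) (hg : MonotoneOn g s)
    (hτ : ∀ t, T ≤ t → t₀ ≤ t - τ t ∧ t - τ t ≤ t)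
    (hxs : ∀ t, t₀ ≤ t → x t ∈ s) (hys : ∀ t, t₀ ≤ t → y t ∈ s)
    (hx : ∀ t, T ≤ t → HasDerivAt x (-a * g (x t) + b * g (x (t - τ t))) t)
    (hy : ∀ t, T ≤ t → HasDerivAt y (y' t) t)
    (hsuper : ∀ t, T ≤ t → -a * g (y t) + b * g (y (t - τ t)) < y' t)
    (hinit : ∀ t ∈ Icc t₀ T, x t ≤ y t) (hT : x T < y T) :
    ∀ t, T ≤ t → x t < y t := by
  by_contra! hcontact
  obtain ⟨t₁, hTt₁, heq, hhist, hderiv⟩ := exists_first_contact hx hy hinit hT hcontact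
  obtain ⟨hτ₀, hτ₁⟩ := hτ t₁ hTt₁.le
  have hdelay : g (x (t₁ - τ t₁)) ≤ g (y (t₁ - τ t₁)) :=
    hg (hxs _ hτ₀) (hys _ hτ₀) (hhist _ ⟨hτ₀, hτ₁⟩)
  have := hsuper t₁ hTt₁.le
  rw [heq] at hderiv
  linarith [mul_le_mul_of_nonneg_left hdelay hb]

theorem lt_of_strict_subsolution (hb : 0 ≤ b) (hg : MonotoneOn g s)
    (hτ : ∀ t, T ≤ t → t₀ ≤ t - τ t ∧ t - τ t ≤ t)
    (hxs : ∀ t, t₀ ≤ t → x t ∈ s) (hys : ∀ t, t₀ ≤ t → y t ∈ s)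
    (hx : ∀ t, T ≤ t → HasDerivAt x (-a * g (x t) + b * g (x (t - τ t))) t)
    (hy : ∀ t, T ≤ t → HasDerivAt y (y' t) t)
    (hsub : ∀ t, T ≤ t → y' t < -a * g (y t) + b * g (y (t - τ t)))
    (hinit : ∀ t ∈ Icc t₀ T, y t ≤ x t) (hT : y T < x T) :
    ∀ t, T ≤ t → y t < x t := by
  by_contra! hcontact
  obtain ⟨t₁, hTt₁, heq, hhist, hderiv⟩ := exists_first_contact hy hx hinit hT hcontact
  obtain ⟨hτ₀, hτ₁⟩ := hτ t₁ hTt₁.le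
  have hdelay : g (y (t₁ - τ t₁)) ≤ g (x (t₁ - τ t₁)) :=
    hg (hys _ hτ₀) (hxs _ hτ₀) (hhist _ ⟨hτ₀, hτ₁⟩)
  have := hsub t₁ hTt₁.le
  rw [← heq] at hderiv
  linarith [mul_le_mul_of_nonneg_left hdelay hb]

end Comparison

theorem eventually_delayed_time_bounds {τ : ℝ → ℝ} {q ρ σ : ℝ}
    (hτ : Tendsto (fun t => τ t / t) atTop (𝓝 q)) (hρ : ρ < 1 - q) (hσ : 1 - q < σ) :
    ∀ᶠ t in atTop, ρ * t ≤ t - τ t ∧ t - τ t ≤ σ * t := by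
  filter_upwards [hτ.eventually (eventually_lt_nhds (by linarith : q < 1 - ρ)),
    hτ.eventually (eventually_gt_nhds (by linarith : 1 - σ < q)), eventually_gt_atTop 0]
    with t h₁ h₂ ht
  rw [div_lt_iff₀ ht] at h₁
  rw [lt_div_iff₀ ht] at h₂
  constructor <;> linarith

section PowerLaw

variable {K c t : ℝ}

theorem mul_rpow_neg_le_of_le {s : ℝ} (hK : 0 ≤ K) (hc : 0 ≤ c) (hs : 0 < s) (hst : s ≤ t) :
    K * t ^ (-c) ≤ K * s ^ (-c) :=
  mul_le_mul_of_nonneg_left (rpow_le_rpow_of_nonpos hs hst (neg_nonpos.2 hc)) hK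

theorem mul_mul_rpow_neg {r : ℝ} (hr : 0 ≤ r) (ht : 0 ≤ t) :
    K * (r * t) ^ (-c) = r ^ (-c) * (K * t ^ (-c)) := by
  rw [mul_rpow hr ht]
  ring

theorem hasDerivAt_mul_rpow_neg (ht : 0 < t) :
    HasDerivAt (fun t => K * t ^ (-c)) (-(c / t) * (K * t ^ (-c))) t := by
  refine ((hasDerivAt_rpow_const (Or.inl ht.ne')).const_mul K).congr_deriv ?_
  rw [rpow_sub_one ht.ne']
  ring

theorem mul_rpow_neg_rpow_one_add_one_div (hK : 0 < K) (hc : c ≠ 0) (ht : 0 < t) :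
    (K * t ^ (-c)) ^ (1 + 1 / c) = K ^ (1 / c) / t * (K * t ^ (-c)) := by
  rw [rpow_add (by positivity), rpow_one, mul_rpow hK.le (rpow_nonneg ht.le _), ← rpow_mul ht.le,
    neg_mul, mul_one_div_cancel hc, rpow_neg_one]
  ring

variable {a b r C δ δ₁ ρ σ T : ℝ} {g τ : ℝ → ℝ}

theorem mul_rpow_neg_strict_supersolution (hb : 0 < b) (hc : 0 < c) (hK : 0 < K) (hρ : 0 < ρ)
    (hT : 0 < T) (hgmono : MonotoneOn g (Ioo 0 δ₁))
    (hsmall : ∀ u ∈ Ioo 0 δ, g (ρ ^ (-c) * u) ≤ r * g u ∧ C * u ^ (1 + 1 / c) ≤ g u ∧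
      ρ ^ (-c) * u < δ₁ ∧ u < δ₁)
    (hyδ : ∀ t, ρ * T ≤ t → K * t ^ (-c) < δ)
    (hdelay : ∀ t, T ≤ t → ρ * t ≤ t - τ t ∧ t - τ t ≤ t)
    (hm : 0 < a - b * r) (hcK : c < (a - b * r) * C * K ^ (1 / c)) (t : ℝ) (ht : T ≤ t) :
    -a * g (K * t ^ (-c)) + b * g (K * (t - τ t) ^ (-c)) < -(c / t) * (K * t ^ (-c)) := by
  have ht0 : 0 < t := hT.trans_le ht
  obtain ⟨hρt, hτt⟩ := hdelay t ht
  have hs : ρ * T ≤ t - τ t := (mul_le_mul_of_nonneg_left ht hρ.le).trans hρt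
  have hs0 : 0 < t - τ t := (mul_pos hρ hT).trans_le hs
  have hy : 0 < K * t ^ (-c) := by positivity
  obtain ⟨hgr, hCg, hρy, -⟩ := hsmall _ ⟨hy, hyδ t (hs.trans hτt)⟩
  have hdelayed : g (K * (t - τ t) ^ (-c)) ≤ r * g (K * t ^ (-c)) := by
    refine (hgmono ⟨by positivity, (hsmall _ ⟨by positivity, hyδ _ hs⟩).2.2.2⟩
      ⟨by positivity, hρy⟩ ?_).trans hgr
    rw [← mul_mul_rpow_neg hρ.le ht0.le]
    exact mul_rpow_neg_le_of_le hK.le hc.le (mul_pos hρ ht0) hρt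
  rw [mul_rpow_neg_rpow_one_add_one_div hK hc.ne' ht0] at hCg
  have hrate : c / t * (K * t ^ (-c)) < (a - b * r) * C * K ^ (1 / c) / t * (K * t ^ (-c)) :=
    mul_lt_mul_of_pos_right (div_lt_div_of_pos_right hcK ht0) hy
  have h1 := mul_le_mul_of_nonneg_left hdelayed hb.le
  have h2 := mul_le_mul_of_nonneg_left hCg hm.le
  linear_combination h1 + h2 + hrate

theorem mul_rpow_neg_strict_subsolution (hb : 0 < b) (hc : 0 < c) (hK : 0 < K) (hρ : 0 < ρ)
    (hσ : 0 < σ) (hσ1 : σ < 1) (hT : 0 < T) (hgmono : MonotoneOn g (Ioo 0 δ₁))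
    (hsmall : ∀ u ∈ Ioo 0 δ, a / b * g u ≤ g (σ ^ (-c) * u) ∧ σ ^ (-c) * u < δ₁ ∧ u < δ₁)
    (hyδ : ∀ t, ρ * T ≤ t → K * t ^ (-c) < δ)
    (hdelay : ∀ t, T ≤ t → ρ * t ≤ t - τ t ∧ t - τ t ≤ σ * t) (t : ℝ) (ht : T ≤ t) :
    -(c / t) * (K * t ^ (-c)) < -a * g (K * t ^ (-c)) + b * g (K * (t - τ t) ^ (-c)) := by
  have ht0 : 0 < t := hT.trans_le ht
  obtain ⟨hρt, hσt⟩ := hdelay t ht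
  have hs : ρ * T ≤ t - τ t := (mul_le_mul_of_nonneg_left ht hρ.le).trans hρt
  have hs0 : 0 < t - τ t := (mul_pos hρ hT).trans_le hs
  have hy : 0 < K * t ^ (-c) := by positivity
  obtain ⟨hgr, hσy, -⟩ :=
    hsmall _ ⟨hy, hyδ t (hs.trans (hσt.trans (mul_le_of_le_one_left ht0.le hσ1.le)))⟩
  have hdelayed : a / b * g (K * t ^ (-c)) ≤ g (K * (t - τ t) ^ (-c)) := by
    refine hgr.trans (hgmono ⟨by positivity, hσy⟩
      ⟨by positivity, (hsmall _ ⟨by positivity, hyδ _ hs⟩).2.2⟩ ?_)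
    rw [← mul_mul_rpow_neg hσ.le ht0.le]
    exact mul_rpow_neg_le_of_le hK.le hc.le hs0 hσt
  have := mul_le_mul_of_nonneg_left hdelayed hb.le
  rw [← mul_assoc, mul_div_cancel₀ _ hb.ne'] at this
  have : 0 < c / t * (K * t ^ (-c)) := by positivity
  linarith

end PowerLaw

section PowerBounds

variable {a b c δ₁ : ℝ} {τ g x : ℝ → ℝ}

theorem exists_eventually_le_mul_rpow_neg_of_small_scale {r C δ ρ : ℝ} (hb : 0 < b) (hc : 0 < c)
    (hρ : 0 < ρ) (hδ : 0 < δ) (hC : 0 < C) (hm : 0 < a - b * r)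
    (hdelay : ∀ᶠ t in atTop, ρ * t ≤ t - τ t ∧ t - τ t ≤ t) (hgmono : MonotoneOn g (Ioo 0 δ₁))
    (hsmall : ∀ u ∈ Ioo 0 δ, g (ρ ^ (-c) * u) ≤ r * g u ∧ C * u ^ (1 + 1 / c) ≤ g u ∧
      ρ ^ (-c) * u < δ₁ ∧ u < δ₁)
    (hxpos : ∀ t, 0 < t → 0 < x t)
    (hx : ∀ t, 0 < t → HasDerivAt x (-a * g (x t) + b * g (x (t - τ t))) t)
    (hx0 : Tendsto x atTop (𝓝 0)) :
    ∃ K, 0 < K ∧ ∀ᶠ t in atTop, x t ≤ K * t ^ (-c) := by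
  set η := δ / 2 * ρ ^ c
  have hη : 0 < η := by positivity
  have hρη : ρ ^ (-c) * η = δ / 2 := by
    rw [mul_comm, mul_assoc, ← rpow_add hρ, add_neg_cancel, rpow_zero, mul_one]
  obtain ⟨T, hT, hTx, hTτ, hTc⟩ : ∃ T, 0 < T ∧ (∀ t, ρ * T ≤ t → x t < η) ∧
      (∀ t, T ≤ t → ρ * t ≤ t - τ t ∧ t - τ t ≤ t) ∧ c < (a - b * r) * C * η ^ (1 / c) * T :=
    ((eventually_gt_atTop 0).and (((tendsto_id.const_mul_atTop hρ).eventually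
      (eventually_forall_ge_atTop.2 (hx0.eventually (eventually_lt_nhds hη)))).and
      ((eventually_forall_ge_atTop.2 hdelay).and
      ((tendsto_id.const_mul_atTop (by positivity)).eventually (eventually_gt_atTop c))))).exists
  have hρT : ρ * T ≤ T := (hTτ T le_rfl).1.trans (hTτ T le_rfl).2
  set K := η * T ^ c
  have hK : 0 < K := by positivity
  have hyT : K * T ^ (-c) = η := by
    rw [mul_assoc, ← rpow_add hT, add_neg_cancel, rpow_zero, mul_one]
  have hKc : K ^ (1 / c) = η ^ (1 / c) * T := by
    rw [mul_rpow hη.le (by positivity), ← rpow_mul hT.le, mul_one_div_cancel hc.ne', rpow_one]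
  have hyδ : ∀ t, ρ * T ≤ t → K * t ^ (-c) < δ := fun t ht => by
    refine (mul_rpow_neg_le_of_le hK.le hc.le (mul_pos hρ hT) ht).trans_lt ?_
    rw [mul_mul_rpow_neg hρ.le hT.le, hyT, hρη]
    linarith
  refine ⟨K, hK, eventually_atTop.2 ⟨T, fun t ht => (lt_of_strict_supersolution (t₀ := ρ * T)
    (y := fun t => K * t ^ (-c)) hb.le hgmono (fun t ht => ⟨?_, (hTτ t ht).2⟩) ?_ ?_
    (fun t ht => hx t (hT.trans_le ht)) (fun t ht => hasDerivAt_mul_rpow_neg (hT.trans_le ht))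
    (mul_rpow_neg_strict_supersolution hb hc hK hρ hT hgmono hsmall hyδ hTτ hm (hKc ▸ ?_))
    ?_ ?_ t ht).le⟩⟩
  · exact (mul_le_mul_of_nonneg_left ht hρ.le).trans (hTτ t ht).1
  · exact fun t ht => ⟨hxpos t ((mul_pos hρ hT).trans_le ht),
      (hTx t ht).trans (hyT ▸ (hsmall _ ⟨by positivity, hyδ T hρT⟩).2.2.2)⟩
  · exact fun t ht => ⟨by have := (mul_pos hρ hT).trans_le ht; positivity,
      (hsmall _ ⟨by have := (mul_pos hρ hT).trans_le ht; positivity, hyδ t ht⟩).2.2.2⟩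
  · linarith
  · exact fun t ht => (hTx t ht.1).le.trans (hyT ▸ mul_rpow_neg_le_of_le hK.le hc.le
      ((mul_pos hρ hT).trans_le ht.1) ht.2)
  · exact (hTx T hρT).trans_eq hyT.symm

theorem exists_eventually_mul_rpow_neg_le_of_small_scale {δ ρ σ : ℝ} (hb : 0 < b) (hc : 0 < c)
    (hρ : 0 < ρ) (hσ : 0 < σ) (hσ1 : σ < 1) (hδ : 0 < δ)
    (hdelay : ∀ᶠ t in atTop, ρ * t ≤ t - τ t ∧ t - τ t ≤ σ * t) (hgmono : MonotoneOn g (Ioo 0 δ₁))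
    (hsmall : ∀ u ∈ Ioo 0 δ, a / b * g u ≤ g (σ ^ (-c) * u) ∧ σ ^ (-c) * u < δ₁ ∧ u < δ₁)
    (hxpos : ∀ t, 0 < t → 0 < x t)
    (hx : ∀ t, 0 < t → HasDerivAt x (-a * g (x t) + b * g (x (t - τ t))) t)
    (hx0 : Tendsto x atTop (𝓝 0)) :
    ∃ K, 0 < K ∧ ∀ᶠ t in atTop, K * t ^ (-c) ≤ x t := by
  obtain ⟨T, hT, hTx, hTτ⟩ : ∃ T, 0 < T ∧ (∀ t, ρ * T ≤ t → x t < δ) ∧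
      (∀ t, T ≤ t → ρ * t ≤ t - τ t ∧ t - τ t ≤ σ * t) :=
    ((eventually_gt_atTop 0).and (((tendsto_id.const_mul_atTop hρ).eventually
      (eventually_forall_ge_atTop.2 (hx0.eventually (eventually_lt_nhds hδ)))).and
      (eventually_forall_ge_atTop.2 hdelay))).exists
  have hρT : ρ * T < T := ((hTτ T le_rfl).1.trans (hTτ T le_rfl).2).trans_lt
    (mul_lt_of_lt_one_left hT hσ1)
  have hρT0 : 0 < ρ * T := mul_pos hρ hT
  obtain ⟨z, hz, hzmin⟩ := isCompact_Icc.exists_isMinOn (nonempty_Icc.2 hρT.le)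
    fun t ht => (hx t (hρT0.trans_le ht.1)).continuousAt.continuousWithinAt
  set K := x z * (ρ * T) ^ c
  have hK : 0 < K := mul_pos (hxpos z (hρT0.trans_le hz.1)) (by positivity)
  have hyρT : K * (ρ * T) ^ (-c) = x z := by
    rw [mul_assoc, ← rpow_add hρT0, add_neg_cancel, rpow_zero, mul_one]
  have hyz : ∀ t, ρ * T ≤ t → K * t ^ (-c) ≤ x z := fun t ht =>
    hyρT ▸ mul_rpow_neg_le_of_le hK.le hc.le hρT0 ht
  have hyδ : ∀ t, ρ * T ≤ t → K * t ^ (-c) < δ := fun t ht => (hyz t ht).trans_lt (hTx z hz.1)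
  refine ⟨K, hK, eventually_atTop.2 ⟨T, fun t ht => (lt_of_strict_subsolution (t₀ := ρ * T)
    (y := fun t => K * t ^ (-c)) hb.le hgmono (fun t ht => ⟨?_, ?_⟩) ?_ ?_
    (fun t ht => hx t (hT.trans_le ht)) (fun t ht => hasDerivAt_mul_rpow_neg (hT.trans_le ht))
    (mul_rpow_neg_strict_subsolution hb hc hK hρ hσ hσ1 hT hgmono hsmall hyδ hTτ)
    (fun t ht => (hyz t ht.1).trans (hzmin ht)) ?_ t ht).le⟩⟩
  · exact (mul_le_mul_of_nonneg_left ht hρ.le).trans (hTτ t ht).1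
  · exact (hTτ t ht).2.trans (mul_le_of_le_one_left (hT.trans_le ht).le hσ1.le)
  · exact fun t ht => ⟨hxpos t (hρT0.trans_le ht), (hsmall _ ⟨hxpos t (hρT0.trans_le ht),
      hTx t ht⟩).2.2⟩
  · exact fun t ht => ⟨by have := hρT0.trans_le ht; positivity,
      (hsmall _ ⟨by have := hρT0.trans_le ht; positivity, hyδ t ht⟩).2.2⟩
  · refine (mul_lt_mul_of_pos_left (rpow_lt_rpow_of_neg hρT0 hρT (neg_lt_zero.2 hc)) hK).trans_le ?_
    exact hyρT ▸ hzmin ⟨hρT.le, le_rfl⟩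

theorem exists_eventually_le_mul_rpow_neg {q β : ℝ} (hb : 0 < b) (hq0 : 0 < q) (hq1 : q < 1)
    (hτ : Tendsto (fun t => τ t / t) atTop (𝓝 q)) (hc : 0 < c) (hcβ : c * (β - 1) < 1)
    (habc : b * (1 - q) ^ (-(c * β)) < a) (hδ₁ : 0 < δ₁) (hgmono : MonotoneOn g (Ioo 0 δ₁))
    (hgRV : RVatZero g β) (hgpos : ∀ y, 0 < y → 0 < g y) (hgcont : ContinuousOn g (Ioi 0))
    (hxpos : ∀ t, 0 < t → 0 < x t)
    (hx : ∀ t, 0 < t → HasDerivAt x (-a * g (x t) + b * g (x (t - τ t))) t)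
    (hx0 : Tendsto x atTop (𝓝 0)) :
    ∃ K, 0 < K ∧ ∀ᶠ t in atTop, x t ≤ K * t ^ (-c) := by
  have hq : 0 < 1 - q := sub_pos.2 hq1
  have hcont : ContinuousAt (fun θ => b * θ ^ (-(c * β))) (1 - q) :=
    continuousAt_const.mul (continuousAt_rpow_const _ _ (Or.inl hq.ne'))
  obtain ⟨ρ, ⟨hρa, hρ⟩, hρq⟩ := (((hcont.eventually_lt_const habc).and (eventually_gt_nhds hq)
    |>.filter_mono nhdsWithin_le_nhds).and self_mem_nhdsWithin).exists (f := 𝓝[<] (1 - q))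
  have hlamβ : (ρ ^ (-c)) ^ β < a / b := by
    rwa [lt_div_iff₀' hb, ← rpow_mul hρ.le, neg_mul]
  obtain ⟨r, hlamr, hra⟩ := exists_between hlamβ
  have hp : β < 1 + 1 / c := by
    have : β - 1 < 1 / c := by rw [lt_div_iff₀ hc]; linarith
    linarith
  obtain ⟨C, hC, hCg⟩ := hgRV.exists_mul_rpow_le hgpos hgcont hp
  obtain ⟨δ, hδ, hsmall⟩ := (nhdsGT_basis 0).eventually_iff.1
    ((hgRV.eventually_le_mul hgpos (rpow_pos_of_pos hρ _) hlamr).and (hCg.and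
      ((eventually_nhdsGT_zero_mul_lt hδ₁).and (eventually_nhdsGT_zero_lt hδ₁))))
  refine exists_eventually_le_mul_rpow_neg_of_small_scale (r := r) hb hc hρ hδ hC
    (by linarith [(lt_div_iff₀' hb).1 hra])
    ((eventually_delayed_time_bounds hτ hρq (by linarith : 1 - q < 1)).mono fun t h =>
      ⟨h.1, h.2.trans_eq (one_mul t)⟩) hgmono (fun u hu => hsmall hu) hxpos hx hx0

theorem exists_eventually_mul_rpow_neg_le {q β : ℝ} (hb : 0 < b) (hq0 : 0 < q) (hq1 : q < 1)
    (hτ : Tendsto (fun t => τ t / t) atTop (𝓝 q)) (hc : 0 < c)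
    (habc : a < b * (1 - q) ^ (-(c * β))) (hδ₁ : 0 < δ₁) (hgmono : MonotoneOn g (Ioo 0 δ₁))
    (hgRV : RVatZero g β) (hgpos : ∀ y, 0 < y → 0 < g y)
    (hxpos : ∀ t, 0 < t → 0 < x t)
    (hx : ∀ t, 0 < t → HasDerivAt x (-a * g (x t) + b * g (x (t - τ t))) t)
    (hx0 : Tendsto x atTop (𝓝 0)) :
    ∃ K, 0 < K ∧ ∀ᶠ t in atTop, K * t ^ (-c) ≤ x t := by
  have hq : 0 < 1 - q := sub_pos.2 hq1
  have hcont : ContinuousAt (fun θ => b * θ ^ (-(c * β))) (1 - q) :=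
    continuousAt_const.mul (continuousAt_rpow_const _ _ (Or.inl hq.ne'))
  obtain ⟨σ, ⟨hσa, hσ1⟩, hσq⟩ := (((hcont.eventually_const_lt habc).and
    (eventually_lt_nhds (by linarith : 1 - q < 1)) |>.filter_mono nhdsWithin_le_nhds).and
    self_mem_nhdsWithin).exists (f := 𝓝[>] (1 - q))
  have hσ : 0 < σ := hq.trans hσq
  obtain ⟨ρ, hρ, hρq⟩ := exists_between hq
  have hlamβ : a / b < (σ ^ (-c)) ^ β := by
    rwa [div_lt_iff₀' hb, ← rpow_mul hσ.le, neg_mul]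
  obtain ⟨δ, hδ, hsmall⟩ := (nhdsGT_basis 0).eventually_iff.1
    ((hgRV.eventually_mul_le hgpos (rpow_pos_of_pos hσ _) hlamβ).and
      ((eventually_nhdsGT_zero_mul_lt hδ₁).and (eventually_nhdsGT_zero_lt hδ₁)))
  refine exists_eventually_mul_rpow_neg_le_of_small_scale hb hc hρ hσ hσ1 hδ
    (eventually_delayed_time_bounds hτ hρq hσq) hgmono (fun u hu => hsmall hu) hxpos hx hx0

end PowerBounds

theorem log_mul_rpow_neg_div_log {K c t : ℝ} (hK : 0 < K) (ht : 1 < t) :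
    log (K * t ^ (-c)) / log t = log K / log t - c := by
  have ht0 : 0 < t := zero_lt_one.trans ht
  have := log_pos ht
  rw [log_mul hK.ne' (rpow_pos_of_pos ht0 _).ne', log_rpow ht0]
  field_simp
  ring

theorem tendsto_log_div_log_of_rpow_bounds {x : ℝ → ℝ} {α : ℝ} (hα : 0 < α)
    (hup : ∀ c, 0 < c → c < α → ∃ K, 0 < K ∧ ∀ᶠ t in atTop, x t ≤ K * t ^ (-c))
    (hlow : ∀ c, α < c → ∃ K, 0 < K ∧ ∀ᶠ t in atTop, K * t ^ (-c) ≤ x t) :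
    Tendsto (fun t => log (x t) / log t) atTop (𝓝 (-α)) := by
  have hlim : ∀ K c, Tendsto (fun t => log K / log t - c) atTop (𝓝 (-c)) := fun K c => by
    simpa using (tendsto_const_nhds.div_atTop tendsto_log_atTop).sub_const c
  rw [tendsto_order]
  constructor
  · intro e he
    obtain ⟨c, hαc, hce⟩ := exists_between (lt_neg_of_lt_neg he)
    obtain ⟨K, hK, hbound⟩ := hlow c hαc
    filter_upwards [hbound, eventually_gt_atTop 1,
      (hlim K c).eventually (eventually_gt_nhds (lt_neg_of_lt_neg hce))] with t h ht hlog
    rw [← log_mul_rpow_neg_div_log hK ht] at hlog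
    have : 0 < K * t ^ (-c) := by have := zero_lt_one.trans ht; positivity
    exact hlog.trans_le (div_le_div_of_nonneg_right (log_le_log this h) (log_nonneg ht.le))
  · intro e he
    obtain ⟨c, hc, hcα⟩ := exists_between (max_lt (neg_lt_of_neg_lt he) hα)
    obtain ⟨K, hK, hbound⟩ := hup c ((le_max_right _ _).trans_lt hc) hcα
    obtain ⟨K', hK', hpos⟩ := hlow (α + 1) (by linarith)
    filter_upwards [hbound, hpos, eventually_gt_atTop 1, (hlim K c).eventually
      (eventually_lt_nhds (neg_lt_of_neg_lt ((le_max_left _ _).trans_lt hc)))]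
      with t h hx ht hlog
    rw [← log_mul_rpow_neg_div_log hK ht] at hlog
    have : 0 < x t := lt_of_lt_of_le (by have := zero_lt_one.trans ht; positivity) hx
    exact (div_le_div_of_nonneg_right (log_le_log this h) (log_nonneg ht.le)).trans_lt hlog

section Threshold

variable {a b β θ : ℝ}

theorem strictMono_mul_rpow_neg_mul (hb : 0 < b) (hβ : 0 < β) (hθ : 0 < θ) (hθ1 : θ < 1) :
    StrictMono fun c => b * θ ^ (-(c * β)) := fun _ _ h =>
  mul_lt_mul_of_pos_left
    (rpow_lt_rpow_of_exponent_gt hθ hθ1 (neg_lt_neg (mul_lt_mul_of_pos_right h hβ))) hb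

theorem mul_rpow_neg_mul_eq (ha : 0 < a) (hb : 0 < b) (hβ : β ≠ 0) (hθ : 0 < θ) (hθ1 : θ ≠ 1) :
    b * θ ^ (-(1 / β * (1 / log (1 / θ)) * log (a / b) * β)) = a := by
  have hlog : log θ ≠ 0 := log_ne_zero_of_pos_of_ne_one hθ hθ1
  have : -(1 / β * (1 / log (1 / θ)) * log (a / b) * β) = log (a / b) / log θ := by
    rw [one_div θ, log_inv]
    field_simp
  rw [this, rpow_def_of_pos hθ, mul_div_cancel₀ _ hlog, exp_log (div_pos ha hb)]
  field_simp

end Threshold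

theorem stmt8_general
    (a b β q τb δ₁ : ℝ) (τ g g' x : ℝ → ℝ)
    (hb : 0 < b) (hab : b < a) (hτb : 0 < τb)
    -- delay growth hypotheses
    (hq0 : 0 < q) (hq1 : q < 1)
    (hτq : Filter.Tendsto (fun t => τ t / t) Filter.atTop (nhds q))
    -- size condition on a and b
    (hβ : 1 < β)
    (habq : a < b * (1 / (1 - q)) ^ (β / (β - 1)))
    -- hypotheses on g
    (hg0 : g 0 = 0)
    (hgpos : ∀ y : ℝ, 0 < y → 0 < g y)
    (hgcont : ContinuousOn g (Set.Ici 0))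
    (hδ₁ : 0 < δ₁)
    (hgderiv : ∀ y ∈ Set.Ioo (0:ℝ) δ₁, HasDerivAt g (g' y) y)
    (hg'pos : ∀ y ∈ Set.Ioo (0:ℝ) δ₁, 0 < g' y)
    (hg'RV : RVatZero g' (β - 1))
    -- x is a solution of the delay equation
    (hxpos : ∀ t : ℝ, -τb ≤ t → 0 < x t)
    (hode : ∀ t : ℝ, 0 < t →
      HasDerivAt x (-a * g (x t) + b * g (x (t - τ t))) t)
    (hx0 : Filter.Tendsto x Filter.atTop (nhds 0)) :
    Filter.Tendsto (fun t => Real.log (x t) / Real.log t) Filter.atTop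
      (nhds (-(1 / β) * (1 / Real.log (1 / (1 - q))) * Real.log (a / b))) := by
  have hq : 0 < 1 - q := by linarith
  set α := 1 / β * (1 / log (1 / (1 - q))) * log (a / b)
  have hα : 0 < α := by
    have := log_pos ((one_lt_div hb).2 hab)
    have := log_pos (one_lt_one_div hq (by linarith : 1 - q < 1))
    positivity
  have hF := strictMono_mul_rpow_neg_mul (β := β) hb (by linarith) hq (by linarith : 1 - q < 1)
  have hFα : b * (1 - q) ^ (-(α * β)) = a :=
    mul_rpow_neg_mul_eq (hb.trans hab) hb (by positivity) hq (by linarith)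
  have hαβ : α < 1 / (β - 1) := by
    refine hF.lt_iff_lt.1 (hFα.trans_lt (habq.trans_eq ?_))
    rw [one_div (1 - q), inv_rpow hq.le, ← rpow_neg hq.le]
    ring_nf
  have hgmono : MonotoneOn g (Ioo 0 δ₁) :=
    (strictMonoOn_of_hasDerivWithinAt_pos (convex_Ioo 0 δ₁)
      (fun y hy => (hgderiv y hy).continuousAt.continuousWithinAt)
      (by simpa using fun y hy => (hgderiv y hy).hasDerivWithinAt)
      (by simpa using hg'pos)).monotoneOn
  have hgRV : RVatZero g β := .of_hasDerivAt hδ₁ hg0 hgcont hgpos hgderiv hg'pos hg'RV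
  have hxpos' : ∀ t, 0 < t → 0 < x t := fun t ht => hxpos t (by linarith)
  have hup := fun c (hc : 0 < c) (hcα : c < α) => exists_eventually_le_mul_rpow_neg hb hq0 hq1
    hτq hc ((lt_div_iff₀ (by linarith)).1 (hcα.trans hαβ)) ((hF hcα).trans_eq hFα) hδ₁ hgmono hgRV
    hgpos (hgcont.mono Ioi_subset_Ici_self) hxpos' hode hx0
  have hlow := fun c (hcα : α < c) => exists_eventually_mul_rpow_neg_le hb hq0 hq1 hτq
    (hα.trans hcα) (hFα.symm.trans_lt (hF hcα)) hδ₁ hgmono hgRV hgpos hxpos' hode hx0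
  convert tendsto_log_div_log_of_rpow_bounds hα hup hlow using 2
  ring

theorem stmt8
    (a b β q τb δ₁ : ℝ) (τ g g' ψ x : ℝ → ℝ)
    (hb : 0 < b) (hab : b < a) (hτb : 0 < τb)
    (hτcont : ContinuousOn τ (Set.Ici 0))
    (hτnn : ∀ t : ℝ, 0 ≤ t → 0 ≤ τ t)
    (hτinf : IsGLB {y : ℝ | ∃ t : ℝ, 0 ≤ t ∧ y = t - τ t} (-τb))
    -- delay growth hypotheses
    (httau : Filter.Tendsto (fun t => t - τ t) Filter.atTop Filter.atTop)
    (hq0 : 0 < q) (hq1 : q < 1)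
    (hτq : Filter.Tendsto (fun t => τ t / t) Filter.atTop (nhds q))
    -- size condition on a and b
    (hβ : 1 < β)
    (habq : a < b * (1 / (1 - q)) ^ (β / (β - 1)))
    -- hypotheses on g
    (hg0 : g 0 = 0)
    (hgpos : ∀ y : ℝ, 0 < y → 0 < g y)
    (hgcont : ContinuousOn g (Set.Ici 0))
    (hδ₁ : 0 < δ₁)
    (hgderiv : ∀ y ∈ Set.Ioo (0:ℝ) δ₁, HasDerivAt g (g' y) y)
    (hg'cont : ContinuousOn g' (Set.Ioo 0 δ₁))
    (hg'pos : ∀ y ∈ Set.Ioo (0:ℝ) δ₁, 0 < g' y)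
    (hg'RV : RVatZero g' (β - 1))
    -- x is a solution of the delay equation
    (hψcont : ContinuousOn ψ (Set.Icc (-τb) 0))
    (hψpos : ∀ t ∈ Set.Icc (-τb) 0, 0 < ψ t)
    (hxcont : ContinuousOn x (Set.Ici (-τb)))
    (hxpos : ∀ t : ℝ, -τb ≤ t → 0 < x t)
    (hxinit : ∀ t ∈ Set.Icc (-τb) 0, x t = ψ t)
    (hode : ∀ t : ℝ, 0 < t →
      HasDerivAt x (-a * g (x t) + b * g (x (t - τ t))) t)
    (hx0 : Filter.Tendsto x Filter.atTop (nhds 0)) :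
    Filter.Tendsto (fun t => Real.log (x t) / Real.log t) Filter.atTop
      (nhds (-(1 / β) * (1 / Real.log (1 / (1 - q))) * Real.log (a / b))) :=
  stmt8_general a b β q τb δ₁ τ g g' x hb hab hτb hq0 hq1 hτq hβ habq hg0 hgpos hgcont hδ₁ hgderiv
    hg'pos hg'RV hxpos hode hx0
end

section
/- Let τ : [0,∞) → [0,∞) be continuous with t − τ(t) → ∞ as t → ∞, and let σ be a positive continuous function on [0,∞) such that ∫_{t−τ(t)}^t ds/σ(s) → 1 as t → ∞ and σ(t)/t → λ as t → ∞, where λ ∈ [0,∞] is an extended real. Then τ(t)/t → 1 − e^{−λ} as t → ∞ (with the convention e^{−∞} := 0, so τ(t)/t → 1 when λ = ∞). -/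
/-!
Write `u t = t - τ t`, so that `τ t / t = 1 - exp (-log (t / u t))`. Since `∫_u^t ds / s = log (t / u)`,
bounds `c s ≤ σ s ≤ d s` on `[u t, t]`, valid for large `t` whenever `c < λ < d`, give
`c I t ≤ log (t / u t) ≤ d I t` with `I t = ∫_u^t ds / σ s → 1`; hence `log (t / u t) → λ`.
-/

open Filter Set Real MeasureTheory Topology

section IntegralComparison

variable {σ : ℝ → ℝ} {a b c : ℝ}

lemma intervalIntegrable_one_div_of_pos (hab : a ≤ b) (hσ : ContinuousOn σ (Icc a b))
    (hpos : ∀ s ∈ Icc a b, 0 < σ s) : IntervalIntegrable (fun s => 1 / σ s) volume a b := by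
  rw [← uIcc_of_le hab] at hσ hpos
  exact intervalIntegral.intervalIntegrable_one_div (fun s hs => (hpos s hs).ne') hσ

lemma log_div_le_mul_integral_one_div (ha : 0 < a) (hab : a ≤ b) (hσ : ContinuousOn σ (Icc a b))
    (hpos : ∀ s ∈ Icc a b, 0 < σ s) (hle : ∀ s ∈ Icc a b, σ s ≤ c * s) :
    log (b / a) ≤ c * ∫ s in a..b, 1 / σ s := by
  have hs : ∀ s ∈ Icc a b, 0 < s := fun s hs => ha.trans_le hs.1
  calc log (b / a) = ∫ s in a..b, 1 / s :=
        (integral_one_div fun h => (hs 0 (by rwa [uIcc_of_le hab] at h)).false).symm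
    _ ≤ ∫ s in a..b, c * (1 / σ s) := by
        refine intervalIntegral.integral_mono_on hab
          (intervalIntegrable_one_div_of_pos hab continuousOn_id hs)
          ((intervalIntegrable_one_div_of_pos hab hσ hpos).const_mul c) fun s hsI => ?_
        rw [mul_one_div, div_le_div_iff₀ (hs s hsI) (hpos s hsI), one_mul]
        exact hle s hsI
    _ = c * ∫ s in a..b, 1 / σ s := intervalIntegral.integral_const_mul c _

lemma mul_integral_one_div_le_log_div (ha : 0 < a) (hab : a ≤ b) (hσ : ContinuousOn σ (Icc a b))
    (hpos : ∀ s ∈ Icc a b, 0 < σ s) (hle : ∀ s ∈ Icc a b, c * s ≤ σ s) :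
    c * ∫ s in a..b, 1 / σ s ≤ log (b / a) := by
  have hs : ∀ s ∈ Icc a b, 0 < s := fun s hs => ha.trans_le hs.1
  calc c * ∫ s in a..b, 1 / σ s = ∫ s in a..b, c * (1 / σ s) :=
        (intervalIntegral.integral_const_mul c _).symm
    _ ≤ ∫ s in a..b, 1 / s := by
        refine intervalIntegral.integral_mono_on hab
          ((intervalIntegrable_one_div_of_pos hab hσ hpos).const_mul c)
          (intervalIntegrable_one_div_of_pos hab continuousOn_id hs) fun s hsI => ?_
        rw [mul_one_div, div_le_div_iff₀ (hpos s hsI) (hs s hsI), one_mul]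
        exact hle s hsI
    _ = log (b / a) := integral_one_div fun h => (hs 0 (by rwa [uIcc_of_le hab] at h)).false

end IntegralComparison

lemma EReal.tendsto_of_forall_mul_le {α : Type*} {l : Filter α} {r f g : α → ℝ} {lam : EReal}
    (hr : Tendsto (fun t => (r t : EReal)) l (𝓝 lam)) (hg : Tendsto g l (𝓝 1))
    (hup : ∀ c : ℝ, (∀ᶠ t in l, r t < c) → ∀ᶠ t in l, f t ≤ c * g t)
    (hlow : ∀ c : ℝ, (∀ᶠ t in l, c < r t) → ∀ᶠ t in l, c * g t ≤ f t) :
    Tendsto (fun t => (f t : EReal)) l (𝓝 lam) := by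
  have hcg (c : ℝ) : Tendsto (fun t => ((c * g t : ℝ) : EReal)) l (𝓝 (c : EReal)) :=
    EReal.tendsto_coe.2 (by simpa using hg.const_mul c)
  refine tendsto_order.2 ⟨fun a ha => ?_, fun a ha => ?_⟩
  · obtain ⟨c, hac, hc⟩ := EReal.lt_iff_exists_real_btwn.1 ha
    filter_upwards [hlow c (by simpa using (tendsto_order.1 hr).1 _ hc),
      (tendsto_order.1 (hcg c)).1 _ hac] with t hle hlt
    exact hlt.trans_le (EReal.coe_le_coe_iff.2 hle)
  · obtain ⟨c, hc, hca⟩ := EReal.lt_iff_exists_real_btwn.1 ha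
    filter_upwards [hup c (by simpa using (tendsto_order.1 hr).2 _ hc),
      (tendsto_order.1 (hcg c)).2 _ hca] with t hle hlt
    exact (EReal.coe_le_coe_iff.2 hle).trans_lt hlt

open Classical in
lemma tendsto_one_sub_exp_neg_of_tendsto_coe {α : Type*} {l : Filter α} {x : α → ℝ} {lam : EReal}
    (hlam : lam ≠ ⊥) (hx : Tendsto (fun t => (x t : EReal)) l (𝓝 lam)) :
    Tendsto (fun t => 1 - exp (-x t)) l
      (𝓝 (if lam = ⊤ then (1 : ℝ) else 1 - exp (-lam.toReal))) := by
  induction lam using EReal.rec with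
  | bot => exact absurd rfl hlam
  | coe c =>
    simpa using tendsto_const_nhds.sub ((continuous_exp.tendsto _).comp (EReal.tendsto_coe.1 hx).neg)
  | top =>
    simpa using tendsto_const_nhds.sub
      (tendsto_exp_atBot.comp (tendsto_neg_atTop_atBot.comp (EReal.tendsto_coe_nhds_top_iff.1 hx)))

lemma div_eq_one_sub_exp_neg_log {t u : ℝ} (ht : 0 < t) (hu : 0 < u) :
    (t - u) / t = 1 - exp (-log (t / u)) := by
  rw [exp_neg, exp_log (div_pos ht hu), inv_div]
  field_simp

open Classical in
theorem stmt10_general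
    (τ σ : ℝ → ℝ) (lam : EReal)
    (hτnn : ∀ t : ℝ, 0 ≤ t → 0 ≤ τ t)
    (httau : Filter.Tendsto (fun t => t - τ t) Filter.atTop Filter.atTop)
    (hσcont : ContinuousOn σ (Set.Ici 0))
    (hσpos : ∀ t : ℝ, 0 ≤ t → 0 < σ t)
    (hστ : Filter.Tendsto (fun t => ∫ s in (t - τ t)..t, 1 / σ s)
      Filter.atTop (nhds 1))
    (hlam0 : 0 ≤ lam)
    (hσt : Filter.Tendsto (fun t => ((σ t / t : ℝ) : EReal)) Filter.atTop
      (nhds lam)) :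
    Filter.Tendsto (fun t => τ t / t) Filter.atTop
      (nhds (if lam = ⊤ then (1:ℝ) else 1 - Real.exp (-lam.toReal))) := by
  have hu : ∀ᶠ t in atTop, 0 < t - τ t ∧ t - τ t ≤ t := by
    filter_upwards [httau.eventually_gt_atTop 0, eventually_ge_atTop 0] with t h1 h2
    exact ⟨h1, by linarith [hτnn t h2]⟩
  have hσ (t : ℝ) (ht : 0 < t - τ t) : ContinuousOn σ (Icc (t - τ t) t) :=
    hσcont.mono fun s hs => ht.le.trans hs.1
  have hσ₀ (t : ℝ) (ht : 0 < t - τ t) : ∀ s ∈ Icc (t - τ t) t, 0 < σ s :=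
    fun s hs => hσpos s (ht.le.trans hs.1)
  have hlog : Tendsto (fun t => (log (t / (t - τ t)) : EReal)) atTop (𝓝 lam) := by
    refine EReal.tendsto_of_forall_mul_le hσt hστ (fun c hc => ?_) (fun c hc => ?_)
    · filter_upwards [hu, httau.eventually_forall_ge_atTop (hc.and (eventually_gt_atTop 0))]
        with t ⟨ht, htu⟩ hle
      exact log_div_le_mul_integral_one_div ht htu (hσ t ht) (hσ₀ t ht)
        fun s hs => ((div_lt_iff₀ (hle s hs.1).2).1 (hle s hs.1).1).le
    · filter_upwards [hu, httau.eventually_forall_ge_atTop (hc.and (eventually_gt_atTop 0))]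
        with t ⟨ht, htu⟩ hle
      exact mul_integral_one_div_le_log_div ht htu (hσ t ht) (hσ₀ t ht)
        fun s hs => ((lt_div_iff₀ (hle s hs.1).2).1 (hle s hs.1).1).le
  refine (tendsto_one_sub_exp_neg_of_tendsto_coe (ne_bot_of_le_ne_bot EReal.zero_ne_bot hlam0)
    hlog).congr' ?_
  filter_upwards [hu] with t ⟨ht, htu⟩
  rw [← div_eq_one_sub_exp_neg_log (ht.trans_le htu) ht, sub_sub_cancel]

open Classical in
theorem stmt10
    (τ σ : ℝ → ℝ) (lam : EReal)
    (hτcont : ContinuousOn τ (Set.Ici 0))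
    (hτnn : ∀ t : ℝ, 0 ≤ t → 0 ≤ τ t)
    (httau : Filter.Tendsto (fun t => t - τ t) Filter.atTop Filter.atTop)
    (hσcont : ContinuousOn σ (Set.Ici 0))
    (hσpos : ∀ t : ℝ, 0 ≤ t → 0 < σ t)
    (hστ : Filter.Tendsto (fun t => ∫ s in (t - τ t)..t, 1 / σ s)
      Filter.atTop (nhds 1))
    (hlam0 : 0 ≤ lam)
    (hσt : Filter.Tendsto (fun t => ((σ t / t : ℝ) : EReal)) Filter.atTop
      (nhds lam)) :
    Filter.Tendsto (fun t => τ t / t) Filter.atTop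
      (nhds (if lam = ⊤ then (1:ℝ) else 1 - Real.exp (-lam.toReal))) :=
  stmt10_general τ σ lam hτnn httau hσcont hσpos hστ hlam0 hσt
end

section
/- Let τ : [0,∞) → [0,∞) be continuous with τ̄ := −inf_{t≥0}(t − τ(t)) finite and positive, and suppose there is β ∈ (0,1) such that lim_{t→∞} log(t − τ(t)) / log t = β. Then there exists a function σ which is nonnegative and continuous on [−τ̄,∞) satisfying ∫_0^t ds/σ(s) → ∞ and σ(t) → ∞ as t → ∞ and ∫_{t−τ(t)}^t ds/σ(s) → 1 as t → ∞, and moreover lim_{t→∞} (∫_0^t ds/σ(s)) / log log t = 1/log(1/β). -/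
/-!
Take `σ(s) = L · s · log s` for `s ≥ e` (frozen to its value at `e` below `e`), with
`L = log (1/β)`. Then `1/σ` has antiderivative `log (log s) / L`, which gives the growth
`∫₀ᵗ 1/σ ~ log log t / L` at once, and over the delay window
`∫_{t-τ(t)}^t 1/σ = -log (log (t - τ t) / log t) / L → -log β / L = 1`.
The hypothesis on `log (t - τ t) / log t` forces `t - τ t → ∞`, since `t - τ t` is bounded below
by `-τ̄`; this puts the window eventually inside `[e, ∞)`, where the antiderivative is valid.
-/

open Filter Real

noncomputable def sigmaLogLog (L s : ℝ) : ℝ :=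
  L * (max (exp 1) s * log (max (exp 1) s))

section sigmaLogLog

variable {L : ℝ}

lemma one_le_log_of_exp_one_le {s : ℝ} (hs : exp 1 ≤ s) : 1 ≤ log s :=
  (le_log_iff_exp_le ((exp_pos 1).trans_le hs)).mpr hs

lemma one_le_log_max_exp_one (s : ℝ) : 1 ≤ log (max (exp 1) s) :=
  one_le_log_of_exp_one_le (le_max_left _ _)

lemma sigmaLogLog_of_exp_one_le {s : ℝ} (hs : exp 1 ≤ s) : sigmaLogLog L s = L * (s * log s) := by
  rw [sigmaLogLog, max_eq_right hs]

lemma continuous_sigmaLogLog (L : ℝ) : Continuous (sigmaLogLog L) := by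
  have hmax : Continuous fun s : ℝ => max (exp 1) s := continuous_const.max continuous_id
  exact continuous_const.mul
    (hmax.mul (hmax.log fun s => ((exp_pos 1).trans_le (le_max_left _ s)).ne'))

lemma sigmaLogLog_pos (hL : 0 < L) (s : ℝ) : 0 < sigmaLogLog L s :=
  mul_pos hL (mul_pos ((exp_pos 1).trans_le (le_max_left _ _))
    (one_pos.trans_le (one_le_log_max_exp_one s)))

lemma sigmaLogLog_ne_zero (hL : L ≠ 0) (s : ℝ) : sigmaLogLog L s ≠ 0 :=
  mul_ne_zero hL (mul_ne_zero ((exp_pos 1).trans_le (le_max_left _ _)).ne'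
    (one_pos.trans_le (one_le_log_max_exp_one s)).ne')

lemma continuous_one_div_sigmaLogLog (hL : L ≠ 0) : Continuous fun s => 1 / sigmaLogLog L s :=
  continuous_const.div (continuous_sigmaLogLog L) (sigmaLogLog_ne_zero hL)

lemma tendsto_sigmaLogLog_atTop (hL : 0 < L) : Tendsto (sigmaLogLog L) atTop atTop := by
  refine tendsto_atTop_mono' atTop ?_ (tendsto_id.const_mul_atTop hL)
  filter_upwards [eventually_ge_atTop (exp 1)] with s hs
  rw [sigmaLogLog_of_exp_one_le hs, id]
  exact mul_le_mul_of_nonneg_left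
    (le_mul_of_one_le_right ((exp_pos 1).le.trans hs) (one_le_log_of_exp_one_le hs)) hL.le

lemma hasDerivAt_log_log_div {x : ℝ} (hx : exp 1 ≤ x) :
    HasDerivAt (fun x => log (log x) / L) (1 / sigmaLogLog L x) x := by
  have hx0 : 0 < x := (exp_pos 1).trans_le hx
  have hlog : 0 < log x := one_pos.trans_le (one_le_log_of_exp_one_le hx)
  refine (((hasDerivAt_log hlog.ne').comp x (hasDerivAt_log hx0.ne')).div_const L).congr_deriv ?_
  rw [sigmaLogLog_of_exp_one_le hx, one_div, mul_inv, mul_inv]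
  ring

lemma integral_inv_sigmaLogLog (hL : L ≠ 0) {a b : ℝ} (ha : exp 1 ≤ a) (hb : exp 1 ≤ b) :
    ∫ s in a..b, 1 / sigmaLogLog L s = (log (log b) - log (log a)) / L := by
  rw [sub_div]
  refine intervalIntegral.integral_eq_sub_of_hasDerivAt
    (fun x hx => hasDerivAt_log_log_div (le_trans (le_min ha hb) hx.1)) ?_
  exact (continuous_one_div_sigmaLogLog hL).intervalIntegrable _ _

lemma integral_zero_inv_sigmaLogLog (hL : L ≠ 0) {t : ℝ} (ht : exp 1 ≤ t) :
    ∫ s in (0:ℝ)..t, 1 / sigmaLogLog L s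
      = (∫ s in (0:ℝ)..exp 1, 1 / sigmaLogLog L s) + log (log t) / L := by
  have hint := continuous_one_div_sigmaLogLog hL
  rw [← intervalIntegral.integral_add_adjacent_intervals (hint.intervalIntegrable 0 (exp 1))
    (hint.intervalIntegrable (exp 1) t), integral_inv_sigmaLogLog hL le_rfl ht,
    log_exp, log_one, sub_zero]

lemma tendsto_integral_inv_sigmaLogLog_atTop (hL : 0 < L) :
    Tendsto (fun t => ∫ s in (0:ℝ)..t, 1 / sigmaLogLog L s) atTop atTop := by
  have hloglog : Tendsto (fun t => log (log t)) atTop atTop :=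
    tendsto_log_atTop.comp tendsto_log_atTop
  refine (tendsto_atTop_add_const_left _ (∫ s in (0:ℝ)..exp 1, 1 / sigmaLogLog L s)
    (hloglog.atTop_div_const hL)).congr' ?_
  filter_upwards [eventually_ge_atTop (exp 1)] with t ht
  exact (integral_zero_inv_sigmaLogLog hL.ne' ht).symm

lemma tendsto_integral_inv_sigmaLogLog_div_log_log (hL : L ≠ 0) :
    Tendsto (fun t => (∫ s in (0:ℝ)..t, 1 / sigmaLogLog L s) / log (log t))
      atTop (nhds (1 / L)) := by
  set C := ∫ s in (0:ℝ)..exp 1, 1 / sigmaLogLog L s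
  have hmodel : Tendsto (fun x : ℝ => C / x + 1 / L) atTop (nhds (0 + 1 / L)) :=
    (tendsto_const_nhds.div_atTop tendsto_id).add tendsto_const_nhds
  rw [zero_add] at hmodel
  refine (hmodel.comp (tendsto_log_atTop.comp tendsto_log_atTop)).congr' ?_
  filter_upwards [eventually_ge_atTop (exp 1),
    (tendsto_log_atTop.comp tendsto_log_atTop).eventually_ne_atTop 0] with t ht hne
  simp only [Function.comp_apply] at hne ⊢
  rw [integral_zero_inv_sigmaLogLog hL ht, add_div, div_right_comm, div_self hne]

lemma tendsto_integral_inv_sigmaLogLog_window (hL : L ≠ 0) {β : ℝ} (hβ : β ≠ 0) {g : ℝ → ℝ}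
    (hg : Tendsto g atTop atTop)
    (hlim : Tendsto (fun t => log (g t) / log t) atTop (nhds β)) :
    Tendsto (fun t => ∫ s in g t..t, 1 / sigmaLogLog L s) atTop (nhds (-log β / L)) := by
  refine (((continuousAt_log hβ).neg.div_const L).tendsto.comp hlim).congr' ?_
  filter_upwards [hg.eventually_ge_atTop (exp 1), eventually_ge_atTop (exp 1)] with t hgt ht
  have hlog : ∀ {x}, exp 1 ≤ x → log x ≠ 0 := fun hx =>
    (one_pos.trans_le (one_le_log_of_exp_one_le hx)).ne'
  rw [integral_inv_sigmaLogLog hL hgt ht, Function.comp_apply, Pi.neg_apply,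
    log_div (hlog hgt) (hlog ht)]
  ring

end sigmaLogLog

lemma tendsto_log_atTop_of_tendsto_log_div_log {f : ℝ → ℝ} {β : ℝ} (hβ : 0 < β)
    (hlim : Tendsto (fun t => log (f t) / log t) atTop (nhds β)) :
    Tendsto (fun t => log (f t)) atTop atTop := by
  refine tendsto_atTop_mono' atTop ?_ (tendsto_log_atTop.const_mul_atTop (half_pos hβ))
  filter_upwards [hlim.eventually (eventually_gt_nhds (half_lt_self hβ)),
    tendsto_log_atTop.eventually_gt_atTop 0] with t hratio hlog
  exact ((lt_div_iff₀ hlog).mp hratio).le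

lemma tendsto_atTop_of_tendsto_log_of_eventually_ge {α : Type*} {l : Filter α} {f : α → ℝ}
    {c : ℝ} (hf : ∀ᶠ t in l, -c ≤ f t) (hlog : Tendsto (fun t => log (f t)) l atTop) :
    Tendsto f l atTop := by
  -- `log x = log |x| ≤ |x|` for every real `x`, so `|f| → ∞`; the lower bound fixes the sign.
  have habs : Tendsto (fun t => |f t|) l atTop :=
    tendsto_atTop_mono (fun t => (log_abs (f t)).symm.le.trans (log_le_self (abs_nonneg _))) hlog
  refine tendsto_atTop_mono' l ?_ habs
  filter_upwards [hf, habs.eventually_gt_atTop c] with t hlow hbig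
  have hpos : 0 < f t := by
    by_contra! h
    rw [abs_of_nonpos h] at hbig
    linarith
  exact (abs_of_pos hpos).le

theorem stmt11_general
    (β τb : ℝ) (τ : ℝ → ℝ)
    (hτinf : IsGLB {y : ℝ | ∃ t : ℝ, 0 ≤ t ∧ y = t - τ t} (-τb))
    (hβ0 : 0 < β) (hβ1 : β < 1)
    (hlim : Filter.Tendsto (fun t => Real.log (t - τ t) / Real.log t)
      Filter.atTop (nhds β)) :
    ∃ σ : ℝ → ℝ,
      ContinuousOn σ (Set.Ici (-τb)) ∧
      (∀ t : ℝ, -τb ≤ t → 0 ≤ σ t) ∧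
      Filter.Tendsto (fun t => ∫ s in (0:ℝ)..t, 1 / σ s)
        Filter.atTop Filter.atTop ∧
      Filter.Tendsto σ Filter.atTop Filter.atTop ∧
      Filter.Tendsto (fun t => ∫ s in (t - τ t)..t, 1 / σ s)
        Filter.atTop (nhds 1) ∧
      Filter.Tendsto
        (fun t => (∫ s in (0:ℝ)..t, 1 / σ s) / Real.log (Real.log t))
        Filter.atTop (nhds (1 / Real.log (1 / β))) := by
  set L := log (1 / β) with hLdef
  have hL : 0 < L := log_pos ((one_lt_div hβ0).mpr hβ1)
  have hdelay : Tendsto (fun t => t - τ t) atTop atTop :=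
    tendsto_atTop_of_tendsto_log_of_eventually_ge
      ((eventually_ge_atTop 0).mono fun t ht => hτinf.1 ⟨t, ht, rfl⟩)
      (tendsto_log_atTop_of_tendsto_log_div_log hβ0 hlim)
  have hwindow := tendsto_integral_inv_sigmaLogLog_window hL.ne' hβ0.ne' hdelay hlim
  have hlogβ : -log β = L := by rw [hLdef, one_div, log_inv]
  rw [hlogβ, div_self hL.ne'] at hwindow
  exact ⟨sigmaLogLog L, (continuous_sigmaLogLog L).continuousOn,
    fun t _ => (sigmaLogLog_pos hL t).le, tendsto_integral_inv_sigmaLogLog_atTop hL,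
    tendsto_sigmaLogLog_atTop hL, hwindow, tendsto_integral_inv_sigmaLogLog_div_log_log hL.ne'⟩

theorem stmt11
    (β τb : ℝ) (τ : ℝ → ℝ)
    (hτcont : ContinuousOn τ (Set.Ici 0))
    (hτnn : ∀ t : ℝ, 0 ≤ t → 0 ≤ τ t)
    (hτb : 0 < τb)
    (hτinf : IsGLB {y : ℝ | ∃ t : ℝ, 0 ≤ t ∧ y = t - τ t} (-τb))
    (hβ0 : 0 < β) (hβ1 : β < 1)
    (hlim : Filter.Tendsto (fun t => Real.log (t - τ t) / Real.log t)
      Filter.atTop (nhds β)) :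
    ∃ σ : ℝ → ℝ,
      ContinuousOn σ (Set.Ici (-τb)) ∧
      (∀ t : ℝ, -τb ≤ t → 0 ≤ σ t) ∧
      Filter.Tendsto (fun t => ∫ s in (0:ℝ)..t, 1 / σ s)
        Filter.atTop Filter.atTop ∧
      Filter.Tendsto σ Filter.atTop Filter.atTop ∧
      Filter.Tendsto (fun t => ∫ s in (t - τ t)..t, 1 / σ s)
        Filter.atTop (nhds 1) ∧
      Filter.Tendsto
        (fun t => (∫ s in (0:ℝ)..t, 1 / σ s) / Real.log (Real.log t))
        Filter.atTop (nhds (1 / Real.log (1 / β))) :=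
  stmt11_general β τb τ hτinf hβ0 hβ1 hlim
end

section
/- Let τ : [0,∞) → [0,∞) be continuous with τ̄ := −inf_{t≥0}(t − τ(t)) finite and positive. Suppose φ : [0,∞) → ℝ is continuous, increasing with φ(t) → ∞ as t → ∞, φ ∈ RV_∞(0), the map x ↦ log φ(e^x) is in RV_∞(0), and lim_{t→∞} (t − τ(t)) / (t/φ(t)) = 1. Then there exists a function σ which is nonnegative and continuous on [−τ̄,∞) satisfying ∫_0^t ds/σ(s) → ∞ and σ(t) → ∞ as t → ∞ and ∫_{t−τ(t)}^t ds/σ(s) → 1 as t → ∞, and moreover lim_{t→∞} σ(t)/(t·log φ(t)) = 1 and lim_{t→∞} (∫_0^t ds/σ(s)) / (log t / log φ(t)) = 1. -/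
/-!
Put h(x) := log φ(eˣ). The substitution s = eˣ turns ∫ ds / (s log φ(s)) into ∫ dx / h(x), so we
take σ(t) = t log φ(t) for large t. Since h is nondecreasing with h(2x)/h(x) → 1, both
R(X) = h(X)/X and R(X) = (∫_A^X dx/h) · h(X)/X satisfy a contraction R(2X) ≤ θ R(X) + K, which
gives h(X) = o(X) and Karamata's asymptotics ∫_A^X dx/h ~ X/h(X); the latter yields the two
statements about ∫₀ᵗ ds/σ. The delay integral becomes ∫ dx/h over [log(t - τ(t)), log t], an
interval of length h(log t) + o(1) on which h varies by a factor tending to 1.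
-/

open Filter Set Real MeasureTheory

open Topology

theorem eventually_le_of_contraction {R : ℝ → ℝ} {q θ K M B ε : ℝ} (hq : 1 < q)
    (hθ₀ : 0 ≤ θ) (hθ₁ : θ < 1) (hM : 0 < M) (hε : 0 < ε) (hbdd : ∀ X ∈ Icc M (q * M), R X ≤ B)
    (hrec : ∀ X, M ≤ X → R (q * X) ≤ θ * R X + K) :
    ∀ᶠ X in atTop, R X ≤ K / (1 - θ) + ε := by
  set S := K / (1 - θ)
  have hS : θ * S + K = S := by
    simp only [S]; field_simp [(sub_pos.2 hθ₁).ne']; ring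
  set D := max (B - S) 0
  have hq₀ : 0 < q := one_pos.trans hq
  have hstep : ∀ X, M ≤ X / q → R X ≤ θ * R (X / q) + K := fun X hX => by
    simpa [mul_div_cancel₀ X hq₀.ne'] using hrec (X / q) hX
  have hbounded : ∀ n : ℕ, ∀ X ∈ Icc M (q ^ (n + 1) * M), R X ≤ S + D := by
    intro n
    induction n with
    | zero =>
      intro X hX
      linarith [hbdd X (by simpa using hX), le_max_left (B - S) 0]
    | succ n ih =>
      rintro X ⟨hMX, hXM⟩
      by_cases hsmall : X ≤ q * M
      · linarith [hbdd X ⟨hMX, hsmall⟩, le_max_left (B - S) 0]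
      have hXq : X / q ∈ Icc M (q ^ (n + 1) * M) := by
        constructor
        · rw [le_div_iff₀ hq₀]; linarith
        · rw [div_le_iff₀ hq₀, ← mul_right_comm, ← pow_succ]; exact hXM
      have := mul_le_mul_of_nonneg_left (ih _ hXq) hθ₀
      nlinarith [hstep X hXq.1, le_max_right (B - S) 0]
  have hdecay : ∀ n : ℕ, ∀ X, q ^ n * M ≤ X → R X ≤ S + θ ^ n * D := by
    intro n
    induction n with
    | zero =>
      intro X hX
      obtain ⟨n, hn⟩ := pow_unbounded_of_one_lt (X / M) hq
      rw [div_lt_iff₀ hM] at hn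
      simpa using hbounded n X ⟨by simpa using hX, by nlinarith [pow_succ q n, pow_pos hq₀ n]⟩
    | succ n ih =>
      intro X hX
      have hXq : q ^ n * M ≤ X / q := by rwa [le_div_iff₀ hq₀, mul_right_comm, ← pow_succ]
      have hM' : M ≤ X / q := le_trans (by nlinarith [one_le_pow₀ hq.le (n := n)]) hXq
      have := mul_le_mul_of_nonneg_left (ih _ hXq) hθ₀
      have hfix : θ * (S + θ ^ n * D) + K = S + θ ^ (n + 1) * D := by
        rw [pow_succ]; linear_combination hS
      linarith [hstep X hM']
  have hgeom : Tendsto (fun n : ℕ => θ ^ n * D) atTop (𝓝 0) := by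
    simpa using (tendsto_pow_atTop_nhds_zero_of_lt_one hθ₀ hθ₁).mul_const D
  obtain ⟨n, hn⟩ := (hgeom.eventually_lt_const hε).exists
  filter_upwards [eventually_ge_atTop (q ^ n * M)] with X hX
  linarith [hdecay n X hX]

theorem AntitoneOn.sub_mul_le_intervalIntegral {g : ℝ → ℝ} {a b : ℝ} (hab : a ≤ b)
    (hg : AntitoneOn g (Icc a b)) : (b - a) * g b ≤ ∫ x in a..b, g x := by
  have hint : IntervalIntegrable g volume a b := (uIcc_of_le hab ▸ hg).intervalIntegrable
  simpa using intervalIntegral.integral_mono_on hab intervalIntegrable_const hint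
    fun x hx => hg hx (right_mem_Icc.2 hab) hx.2

theorem AntitoneOn.intervalIntegral_le_sub_mul {g : ℝ → ℝ} {a b : ℝ} (hab : a ≤ b)
    (hg : AntitoneOn g (Icc a b)) : ∫ x in a..b, g x ≤ (b - a) * g a := by
  have hint : IntervalIntegrable g volume a b := (uIcc_of_le hab ▸ hg).intervalIntegrable
  simpa using intervalIntegral.integral_mono_on hab hint intervalIntegrable_const
    fun x hx => hg (left_mem_Icc.2 hab) hx hx.1

section SlowGrowth

variable {h : ℝ → ℝ} {A : ℝ}

theorem antitoneOn_one_div (hmono : MonotoneOn h (Ici A)) (hpos : ∀ x, A ≤ x → 0 < h x) :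
    AntitoneOn (fun x => 1 / h x) (Ici A) := fun _ hx _ hy hxy =>
  one_div_le_one_div_of_le (hpos _ hx) (hmono hx hy hxy)

theorem exists_forall_apply_two_mul_le (hpos : ∀ x, A ≤ x → 0 < h x)
    (hdouble : Tendsto (fun x => h (2 * x) / h x) atTop (𝓝 1)) {c : ℝ} (hc : 1 < c) :
    ∃ M, 0 < M ∧ A ≤ M ∧ ∀ x, M ≤ x → h (2 * x) ≤ c * h x := by
  obtain ⟨N, hN⟩ := (hdouble.eventually_lt_const hc).exists_forall_of_atTop
  refine ⟨max N (max A 1), by positivity, le_max_of_le_right (le_max_left _ _), fun x hx => ?_⟩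
  have hA : A ≤ x := le_trans (le_max_of_le_right (le_max_left _ _)) hx
  exact ((div_lt_iff₀ (hpos x hA)).1 (hN x (le_trans (le_max_left _ _) hx))).le

theorem tendsto_apply_div_self_nhds_zero (hmono : MonotoneOn h (Ici A))
    (hpos : ∀ x, A ≤ x → 0 < h x) (hdouble : Tendsto (fun x => h (2 * x) / h x) atTop (𝓝 1)) :
    Tendsto (fun x => h x / x) atTop (𝓝 0) := by
  obtain ⟨M, hM, hAM, hMdouble⟩ :=
    exists_forall_apply_two_mul_le hpos hdouble (c := 3 / 2) (by norm_num)
  have hupper : ∀ ε > 0, ∀ᶠ x in atTop, h x / x ≤ 0 / (1 - 3 / 4) + ε := fun ε hε =>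
    eventually_le_of_contraction (R := fun x => h x / x) (B := h (2 * M) / M) one_lt_two
      (by norm_num) (by norm_num) hM hε
      (fun x hx => div_le_div₀ (hpos _ (by linarith)).le (hmono (hAM.trans hx.1)
        (by simp; linarith) hx.2) hM hx.1)
      (fun x hx => by
        have hx₀ : 0 < x := hM.trans_le hx
        rw [div_le_iff₀ (by positivity)]
        field_simp
        linarith [hMdouble x hx])
  refine tendsto_order.2 ⟨fun a ha => ?_, fun b hb => ?_⟩
  · filter_upwards [eventually_ge_atTop M] with x hx
    exact ha.trans_le (div_nonneg (hpos x (hAM.trans hx)).le (hM.trans_le hx).le)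
  · filter_upwards [hupper (b / 2) (half_pos hb)] with x hx
    linarith

theorem intervalIntegrable_one_div (hmono : MonotoneOn h (Ici A)) (hpos : ∀ x, A ≤ x → 0 < h x)
    {a b : ℝ} (ha : A ≤ a) (hb : A ≤ b) : IntervalIntegrable (fun x => 1 / h x) volume a b :=
  ((antitoneOn_one_div hmono hpos).mono fun _ hx => (le_min ha hb).trans hx.1).intervalIntegrable

theorem one_sub_div_le_integral_one_div_mul (hmono : MonotoneOn h (Ici A))
    (hpos : ∀ x, A ≤ x → 0 < h x) {X : ℝ} (hAX : A ≤ X) (hX : 0 < X) :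
    1 - A / X ≤ (∫ x in A..X, 1 / h x) * (h X / X) := by
  have hanti : AntitoneOn (fun x => 1 / h x) (Icc A X) :=
    (antitoneOn_one_div hmono hpos).mono Icc_subset_Ici_self
  have hJ := hanti.sub_mul_le_intervalIntegral hAX
  have hhX := hpos X hAX
  calc 1 - A / X = (X - A) * (1 / h X) * (h X / X) := by field_simp
    _ ≤ _ := by gcongr

theorem integral_one_div_mul_apply_two_mul_le (hmono : MonotoneOn h (Ici A))
    (hpos : ∀ x, A ≤ x → 0 < h x) {c X : ℝ} (hAX : A ≤ X) (hX : 0 < X)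
    (hdouble : h (2 * X) ≤ c * h X) :
    (∫ x in A..2 * X, 1 / h x) * (h (2 * X) / (2 * X)) ≤
      c / 2 * ((∫ x in A..X, 1 / h x) * (h X / X)) + c / 2 := by
  have hAX₂ : A ≤ 2 * X := by linarith
  have hhX := hpos X hAX
  have hsplit := intervalIntegral.integral_add_adjacent_intervals
    (intervalIntegrable_one_div hmono hpos le_rfl hAX)
    (intervalIntegrable_one_div hmono hpos hAX hAX₂)
  have htail : ∫ x in X..2 * X, 1 / h x ≤ X * (1 / h X) := by
    have hanti : AntitoneOn (fun x => 1 / h x) (Icc X (2 * X)) :=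
      (antitoneOn_one_div hmono hpos).mono fun _ hx => hAX.trans hx.1
    simpa [two_mul] using hanti.intervalIntegral_le_sub_mul (by linarith)
  have hJ₂ : 0 ≤ ∫ x in A..2 * X, 1 / h x :=
    intervalIntegral.integral_nonneg hAX₂ fun x hx => (one_div_pos.2 (hpos x hx.1)).le
  have hc : 0 ≤ c * h X / (2 * X) := div_nonneg ((hpos _ hAX₂).le.trans hdouble) (by positivity)
  calc (∫ x in A..2 * X, 1 / h x) * (h (2 * X) / (2 * X))
      ≤ (∫ x in A..2 * X, 1 / h x) * (c * h X / (2 * X)) := by gcongr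
    _ ≤ ((∫ x in A..X, 1 / h x) + X * (1 / h X)) * (c * h X / (2 * X)) := by
        rw [← hsplit]
        gcongr
    _ = _ := by field_simp

theorem tendsto_integral_one_div_mul_div_self (hmono : MonotoneOn h (Ici A))
    (hpos : ∀ x, A ≤ x → 0 < h x) (hdouble : Tendsto (fun x => h (2 * x) / h x) atTop (𝓝 1)) :
    Tendsto (fun X => (∫ x in A..X, 1 / h x) * (h X / X)) atTop (𝓝 1) := by
  refine tendsto_order.2 ⟨fun a ha => ?_, fun b hb => ?_⟩
  · have hlim : Tendsto (fun X => 1 - A / X) atTop (𝓝 1) := by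
      simpa using (tendsto_const_nhds (x := (1 : ℝ))).sub
        ((tendsto_const_nhds (x := A)).div_atTop tendsto_id)
    filter_upwards [hlim.eventually_const_lt ha, eventually_ge_atTop A, eventually_gt_atTop 0]
      with X hX hAX hX₀
    exact hX.trans_le (one_sub_div_le_integral_one_div_mul hmono hpos hAX hX₀)
  set δ := min (1 / 2) ((b - 1) / 8)
  have hδ₀ : 0 < δ := lt_min (by norm_num) (by linarith)
  have hδ₁ : δ ≤ 1 / 2 := min_le_left _ _
  have hδb : δ ≤ (b - 1) / 8 := min_le_right _ _
  obtain ⟨M, hM, hAM, hMdouble⟩ :=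
    exists_forall_apply_two_mul_le hpos hdouble (c := 1 + δ) (by linarith)
  have hbdd : ∀ X ∈ Icc M (2 * M), (∫ x in A..X, 1 / h x) * (h X / X) ≤
      (2 * M - A) * (1 / h A) * (h (2 * M) / M) := by
    rintro X ⟨hMX, hXM⟩
    have hAX : A ≤ X := hAM.trans hMX
    have hJ :=
      ((antitoneOn_one_div hmono hpos).mono fun _ hx => hx.1).intervalIntegral_le_sub_mul hAX
    have hhA := hpos A le_rfl
    refine mul_le_mul (hJ.trans (by gcongr)) ?_ (div_nonneg (hpos X hAX).le (hM.trans_le hMX).le)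
      (mul_nonneg (by linarith) (by positivity))
    exact div_le_div₀ (hpos _ (by linarith)).le (hmono hAX (by simp; linarith) hXM) hM hMX
  -- `(1 + δ) / (1 - δ)` is the fixed point of `R ↦ (1 + δ) / 2 * (R + 1)`.
  have hupper := eventually_le_of_contraction one_lt_two (by positivity) (by linarith) hM hδ₀
    hbdd fun X hX => integral_one_div_mul_apply_two_mul_le hmono hpos (hAM.trans hX)
      (hM.trans_le hX) (hMdouble X hX)
  have hfix : (1 + δ) / 2 / (1 - (1 + δ) / 2) ≤ 1 + 4 * δ := by
    rw [div_le_iff₀ (by linarith)]; nlinarith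
  filter_upwards [hupper] with X hX
  linarith

theorem tendsto_self_div_apply_atTop (hmono : MonotoneOn h (Ici A))
    (hpos : ∀ x, A ≤ x → 0 < h x) (hdouble : Tendsto (fun x => h (2 * x) / h x) atTop (𝓝 1)) :
    Tendsto (fun x => x / h x) atTop atTop := by
  have hpos' : ∀ᶠ x in atTop, h x / x ∈ Ioi 0 := by
    filter_upwards [eventually_ge_atTop A, eventually_gt_atTop 0] with x hA hx
    exact div_pos (hpos x hA) hx
  simpa [Pi.inv_def] using (tendsto_nhdsWithin_iff.2
    ⟨tendsto_apply_div_self_nhds_zero hmono hpos hdouble, hpos'⟩).inv_tendsto_nhdsGT_zero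

theorem tendsto_integral_one_div_atTop (hmono : MonotoneOn h (Ici A))
    (hpos : ∀ x, A ≤ x → 0 < h x) (hdouble : Tendsto (fun x => h (2 * x) / h x) atTop (𝓝 1)) :
    Tendsto (fun X => ∫ x in A..X, 1 / h x) atTop atTop := by
  refine ((tendsto_integral_one_div_mul_div_self hmono hpos hdouble).pos_mul_atTop one_pos
    (tendsto_self_div_apply_atTop hmono hpos hdouble)).congr' ?_
  filter_upwards [eventually_ge_atTop A, eventually_gt_atTop 0] with X hA hX
  have := (hpos X hA).ne'
  field_simp

theorem tendsto_const_add_integral_one_div_mul_div_self (hmono : MonotoneOn h (Ici A))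
    (hpos : ∀ x, A ≤ x → 0 < h x) (hdouble : Tendsto (fun x => h (2 * x) / h x) atTop (𝓝 1))
    (c : ℝ) : Tendsto (fun X => (c + ∫ x in A..X, 1 / h x) * (h X / X)) atTop (𝓝 1) := by
  simpa [add_mul] using ((tendsto_apply_div_self_nhds_zero hmono hpos hdouble).const_mul c).add
    (tendsto_integral_one_div_mul_div_self hmono hpos hdouble)

theorem tendsto_self_sub_apply_atTop (hmono : MonotoneOn h (Ici A))
    (hpos : ∀ x, A ≤ x → 0 < h x) (hdouble : Tendsto (fun x => h (2 * x) / h x) atTop (𝓝 1)) :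
    Tendsto (fun x => x - h x) atTop atTop := by
  have hlim : Tendsto (fun x => 1 - h x / x) atTop (𝓝 1) := by
    simpa using (tendsto_apply_div_self_nhds_zero hmono hpos hdouble).const_sub 1
  refine (tendsto_id.atTop_mul_pos one_pos hlim).congr' ?_
  filter_upwards [eventually_gt_atTop 0] with x hx
  simp only [id]
  field_simp

theorem tendsto_integral_one_div_of_tendsto_sub_div {α : Type*} {l : Filter α} {X Y : α → ℝ}
    (hmono : MonotoneOn h (Ici A)) (hpos : ∀ x, A ≤ x → 0 < h x)
    (hdouble : Tendsto (fun x => h (2 * x) / h x) atTop (𝓝 1)) (hX : Tendsto X l atTop)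
    (hYX : ∀ᶠ i in l, Y i ≤ X i) (hlen : Tendsto (fun i => (X i - Y i) / h (X i)) l (𝓝 1)) :
    Tendsto (fun i => ∫ x in Y i..X i, 1 / h x) l (𝓝 1) := by
  -- `X - Y ~ h X = o(X)`, so eventually `X / 2 ≤ Y`, and `h` is nearly constant on `[X / 2, X]`.
  have hrel : Tendsto (fun i => (X i - Y i) / X i) l (𝓝 0) := by
    have hprod : Tendsto (fun i => (X i - Y i) / h (X i) * (h (X i) / X i)) l (𝓝 0) := by
      simpa using hlen.mul ((tendsto_apply_div_self_nhds_zero hmono hpos hdouble).comp hX)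
    refine hprod.congr' ?_
    filter_upwards [hX.eventually_ge_atTop A] with i hi
    have := (hpos _ hi).ne'
    field_simp
  have hhalf : Tendsto (fun i => h (X i) / h (X i / 2)) l (𝓝 1) := by
    simpa [Function.comp_def, mul_div_cancel₀] using hdouble.comp (hX.atTop_div_const two_pos)
  have hupper : Tendsto (fun i => (X i - Y i) / h (X i) * (h (X i) / h (X i / 2))) l (𝓝 1) := by
    simpa using hlen.mul hhalf
  have hbounds : ∀ᶠ i in l, (X i - Y i) / h (X i) ≤ ∫ x in Y i..X i, 1 / h x ∧
      ∫ x in Y i..X i, 1 / h x ≤ (X i - Y i) / h (X i) * (h (X i) / h (X i / 2)) := by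
    filter_upwards [hX.eventually_ge_atTop (2 * A), hX.eventually_gt_atTop 0,
      hrel.eventually_lt_const (by norm_num : (0 : ℝ) < 1 / 2), hYX] with i hA hX₀ hrel hYX
    have hYhalf : X i / 2 ≤ Y i := by rw [div_lt_iff₀ hX₀] at hrel; linarith
    have hAY : A ≤ Y i := by linarith
    have hanti : AntitoneOn (fun x => 1 / h x) (Icc (Y i) (X i)) :=
      (antitoneOn_one_div hmono hpos).mono fun _ hx => hAY.trans hx.1
    have hhalf_pos := hpos (X i / 2) (by linarith)
    refine ⟨by simpa [div_eq_mul_one_div (X i - Y i)] using hanti.sub_mul_le_intervalIntegral hYX,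
      (hanti.intervalIntegral_le_sub_mul hYX).trans ?_⟩
    have hhX := (hpos (X i) (by linarith)).ne'
    rw [mul_one_div, show (X i - Y i) / h (X i) * (h (X i) / h (X i / 2)) =
      (X i - Y i) / h (X i / 2) by field_simp]
    exact div_le_div_of_nonneg_left (by linarith) hhalf_pos (hmono (by simp; linarith) hAY hYhalf)
  exact tendsto_of_tendsto_of_tendsto_of_le_of_le' hlen hupper (hbounds.mono fun _ => And.left)
    (hbounds.mono fun _ => And.right)

end SlowGrowth

/-- The `σ` of the theorem, frozen below `T` so that it is continuous and positive on all of `ℝ`. -/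
noncomputable def logWeight (φ : ℝ → ℝ) (T t : ℝ) : ℝ := max t T * log (φ (max t T))

section LogWeight

variable {φ : ℝ → ℝ} {T : ℝ}

theorem logWeight_of_le {t : ℝ} (ht : T ≤ t) : logWeight φ T t = t * log (φ t) := by
  simp [logWeight, max_eq_left ht]

theorem logWeight_pos (hT : 0 < T) (hφT : ∀ t, T ≤ t → 1 < φ t) (t : ℝ) :
    0 < logWeight φ T t :=
  mul_pos (hT.trans_le (le_max_right t T)) (log_pos (hφT _ (le_max_right t T)))

theorem continuous_logWeight (hφcont : ContinuousOn φ (Ici T)) (hφT : ∀ t, T ≤ t → 1 < φ t) :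
    Continuous (logWeight φ T) := by
  have hmax : Continuous fun t => max t T := continuous_id.max continuous_const
  exact hmax.mul ((hφcont.log fun t ht => (one_pos.trans (hφT t ht)).ne').comp_continuous hmax
    fun t => le_max_right t T)

theorem tendsto_logWeight_atTop (hφinf : Tendsto φ atTop atTop) :
    Tendsto (logWeight φ T) atTop atTop :=
  (tendsto_id.atTop_mul_atTop₀ (tendsto_log_atTop.comp hφinf)).congr'
    ((eventually_ge_atTop T).mono fun _ ht => (logWeight_of_le ht).symm)

theorem tendsto_logWeight_div (hT : 0 < T) (hφT : ∀ t, T ≤ t → 1 < φ t) :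
    Tendsto (fun t => logWeight φ T t / (t * log (φ t))) atTop (𝓝 1) := by
  refine tendsto_const_nhds.congr' ?_
  filter_upwards [eventually_ge_atTop T] with t ht
  rw [logWeight_of_le ht, div_self (mul_pos (hT.trans_le ht) (log_pos (hφT t ht))).ne']

theorem integral_one_div_logWeight (hT : 0 < T) (hφcont : ContinuousOn φ (Ici T))
    (hφT : ∀ t, T ≤ t → 1 < φ t) {a b : ℝ} (ha : T ≤ a) (hb : T ≤ b) :
    ∫ s in a..b, 1 / logWeight φ T s = ∫ x in log a..log b, 1 / log (φ (exp x)) := by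
  have hsub := intervalIntegral.integral_comp_mul_deriv (a := log a) (b := log b)
    (g := fun s => 1 / logWeight φ T s) (fun x _ => hasDerivAt_exp x) continuous_exp.continuousOn
    (continuous_const.div (continuous_logWeight hφcont hφT) fun t => (logWeight_pos hT hφT t).ne')
  rw [exp_log (hT.trans_le ha), exp_log (hT.trans_le hb)] at hsub
  rw [← hsub]
  refine intervalIntegral.integral_congr fun x hx => ?_
  have hTx : T ≤ exp x := (log_le_iff_le_exp hT).1
    ((le_min (log_le_log hT ha) (log_le_log hT hb)).trans hx.1)
  have := (log_pos (hφT _ hTx)).ne'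
  simp only [Function.comp_apply, logWeight_of_le hTx]
  field_simp

theorem integral_zero_one_div_logWeight (hT : 0 < T) (hφcont : ContinuousOn φ (Ici T))
    (hφT : ∀ t, T ≤ t → 1 < φ t) {t : ℝ} (ht : T ≤ t) :
    ∫ s in (0 : ℝ)..t, 1 / logWeight φ T s =
      (∫ s in (0 : ℝ)..T, 1 / logWeight φ T s) + ∫ x in log T..log t, 1 / log (φ (exp x)) := by
  have hint : ∀ a b : ℝ, IntervalIntegrable (fun s => 1 / logWeight φ T s) volume a b :=
    fun a b => (continuous_const.div (continuous_logWeight hφcont hφT)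
      fun t => (logWeight_pos hT hφT t).ne').intervalIntegrable a b
  rw [← integral_one_div_logWeight hT hφcont hφT le_rfl ht,
    intervalIntegral.integral_add_adjacent_intervals (hint 0 T) (hint T t)]

theorem monotoneOn_log_comp_exp (hT : 0 < T) (hφmono : MonotoneOn φ (Ici T))
    (hφT : ∀ t, T ≤ t → 1 < φ t) : MonotoneOn (fun x => log (φ (exp x))) (Ici (log T)) :=
  fun x hx y hy hxy => by
    have hTx : T ≤ exp x := (log_le_iff_le_exp hT).1 hx
    have hTy : T ≤ exp y := (log_le_iff_le_exp hT).1 hy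
    exact log_le_log (one_pos.trans (hφT _ hTx)) (hφmono hTx hTy (exp_le_exp.2 hxy))

theorem log_comp_exp_pos (hT : 0 < T) (hφT : ∀ t, T ≤ t → 1 < φ t) (x : ℝ) (hx : log T ≤ x) :
    0 < log (φ (exp x)) :=
  log_pos (hφT _ ((log_le_iff_le_exp hT).1 hx))

theorem tendsto_self_div_atTop_of_log_comp_exp (hT : 0 < T) (hφmono : MonotoneOn φ (Ici T))
    (hφT : ∀ t, T ≤ t → 1 < φ t)
    (hdouble : Tendsto (fun x => log (φ (exp (2 * x))) / log (φ (exp x))) atTop (𝓝 1)) :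
    Tendsto (fun t => t / φ t) atTop atTop := by
  have hsub := tendsto_self_sub_apply_atTop (monotoneOn_log_comp_exp hT hφmono hφT)
    (log_comp_exp_pos hT hφT) hdouble
  refine (tendsto_exp_atTop.comp (hsub.comp tendsto_log_atTop)).congr' ?_
  filter_upwards [eventually_ge_atTop T] with t ht
  have ht₀ := hT.trans_le ht
  simp [exp_sub, exp_log ht₀, exp_log (one_pos.trans (hφT t ht))]

theorem tendsto_integral_one_div_logWeight_delay {τ : ℝ → ℝ} (hT : 0 < T)
    (hφcont : ContinuousOn φ (Ici T)) (hφmono : MonotoneOn φ (Ici T)) (hφT : ∀ t, T ≤ t → 1 < φ t)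
    (hφinf : Tendsto φ atTop atTop)
    (hdouble : Tendsto (fun x => log (φ (exp (2 * x))) / log (φ (exp x))) atTop (𝓝 1))
    (hτnn : ∀ t, 0 ≤ t → 0 ≤ τ t) (hτφ : Tendsto (fun t => (t - τ t) / (t / φ t)) atTop (𝓝 1)) :
    Tendsto (fun t => ∫ s in (t - τ t)..t, 1 / logWeight φ T s) atTop (𝓝 1) := by
  have hdiv := tendsto_self_div_atTop_of_log_comp_exp hT hφmono hφT hdouble
  have hdelay : Tendsto (fun t => t - τ t) atTop atTop := by
    refine (hτφ.pos_mul_atTop one_pos hdiv).congr' ?_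
    filter_upwards [hdiv.eventually_gt_atTop 0] with t ht
    exact div_mul_cancel₀ _ ht.ne'
  have hratio : Tendsto (fun t => 1 - log ((t - τ t) / (t / φ t)) / log (φ t)) atTop (𝓝 1) := by
    simpa using (((continuousAt_log one_ne_zero).tendsto.comp hτφ).div_atTop
      (tendsto_log_atTop.comp hφinf)).const_sub 1
  -- `log t - log (t - τ t) = log φ(t) - log q(t)` with `q(t) := (t - τ t) / (t / φ t) → 1`.
  have hlen : Tendsto (fun t => (log t - log (t - τ t)) / log (φ (exp (log t)))) atTop (𝓝 1) := by
    refine hratio.congr' ?_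
    filter_upwards [eventually_ge_atTop T, hdelay.eventually_ge_atTop T] with t ht htτ
    have ht₀ := hT.trans_le ht
    have hφ₀ := (log_pos (hφT t ht)).ne'
    rw [exp_log ht₀, log_div (hT.trans_le htτ).ne' (div_pos ht₀ (one_pos.trans (hφT t ht))).ne',
      log_div ht₀.ne' (one_pos.trans (hφT t ht)).ne']
    field_simp
    ring
  refine (tendsto_integral_one_div_of_tendsto_sub_div (monotoneOn_log_comp_exp hT hφmono hφT)
    (log_comp_exp_pos hT hφT) hdouble tendsto_log_atTop ?_ hlen).congr' ?_
  · filter_upwards [hdelay.eventually_gt_atTop 0, eventually_ge_atTop 0] with t ht ht₀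
    exact log_le_log ht (sub_le_self t (hτnn t ht₀))
  · filter_upwards [eventually_ge_atTop T, hdelay.eventually_ge_atTop T] with t ht htτ
    exact (integral_one_div_logWeight hT hφcont hφT htτ ht).symm

end LogWeight

theorem stmt12_general
    (τb : ℝ) (τ φ : ℝ → ℝ)
    (hτnn : ∀ t : ℝ, 0 ≤ t → 0 ≤ τ t)
    -- hypotheses on φ
    (hφcont : ContinuousOn φ (Set.Ici 0))
    (hφmono : StrictMonoOn φ (Set.Ici 0))
    (hφinf : Filter.Tendsto φ Filter.atTop Filter.atTop)
    (hφlogRV : RVatTop (fun y => Real.log (φ (Real.exp y))) 0)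
    (hτφ : Filter.Tendsto (fun t => (t - τ t) / (t / φ t)) Filter.atTop
      (nhds 1)) :
    ∃ σ : ℝ → ℝ,
      ContinuousOn σ (Set.Ici (-τb)) ∧
      (∀ t : ℝ, -τb ≤ t → 0 ≤ σ t) ∧
      Filter.Tendsto (fun t => ∫ s in (0:ℝ)..t, 1 / σ s)
        Filter.atTop Filter.atTop ∧
      Filter.Tendsto σ Filter.atTop Filter.atTop ∧
      Filter.Tendsto (fun t => ∫ s in (t - τ t)..t, 1 / σ s)
        Filter.atTop (nhds 1) ∧
      Filter.Tendsto (fun t => σ t / (t * Real.log (φ t)))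
        Filter.atTop (nhds 1) ∧
      Filter.Tendsto
        (fun t => (∫ s in (0:ℝ)..t, 1 / σ s) / (Real.log t / Real.log (φ t)))
        Filter.atTop (nhds 1) := by
  obtain ⟨T, hT, hφT⟩ : ∃ T, 0 < T ∧ ∀ t, T ≤ t → 1 < φ t := by
    obtain ⟨T, hT⟩ :=
      ((hφinf.eventually_gt_atTop 1).and (eventually_gt_atTop 0)).exists_forall_of_atTop
    exact ⟨T, (hT T le_rfl).2, fun t ht => (hT t ht).1⟩
  have hφcont' := hφcont.mono (Ici_subset_Ici.2 hT.le)
  have hφmono' := hφmono.monotoneOn.mono (Ici_subset_Ici.2 hT.le)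
  have hmono := monotoneOn_log_comp_exp hT hφmono' hφT
  have hpos := log_comp_exp_pos hT hφT
  have hdouble : Tendsto (fun x => log (φ (exp (2 * x))) / log (φ (exp x))) atTop (𝓝 1) := by
    simpa using hφlogRV 2 two_pos
  have hsplit : ∀ᶠ t in atTop, ∫ s in (0 : ℝ)..t, 1 / logWeight φ T s =
      (∫ s in (0 : ℝ)..T, 1 / logWeight φ T s) + ∫ x in log T..log t, 1 / log (φ (exp x)) :=
    (eventually_ge_atTop T).mono fun t ht => integral_zero_one_div_logWeight hT hφcont' hφT ht
  refine ⟨logWeight φ T, (continuous_logWeight hφcont' hφT).continuousOn,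
    fun t _ => (logWeight_pos hT hφT t).le, ?_, tendsto_logWeight_atTop hφinf,
    tendsto_integral_one_div_logWeight_delay hT hφcont' hφmono' hφT hφinf hdouble hτnn hτφ,
    tendsto_logWeight_div hT hφT, ?_⟩
  · exact (tendsto_atTop_add_const_left _ _ ((tendsto_integral_one_div_atTop hmono hpos
      hdouble).comp tendsto_log_atTop)).congr' (hsplit.mono fun _ ht => ht.symm)
  · refine ((tendsto_const_add_integral_one_div_mul_div_self hmono hpos hdouble
      (∫ s in (0 : ℝ)..T, 1 / logWeight φ T s)).comp
      tendsto_log_atTop).congr' ?_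
    filter_upwards [hsplit, eventually_gt_atTop 0] with t ht ht₀
    simp only [Function.comp_apply, ht, exp_log ht₀, div_div_eq_mul_div, mul_div_assoc]

theorem stmt12
    (τb : ℝ) (τ φ : ℝ → ℝ)
    (hτcont : ContinuousOn τ (Set.Ici 0))
    (hτnn : ∀ t : ℝ, 0 ≤ t → 0 ≤ τ t)
    (hτb : 0 < τb)
    (hτinf : IsGLB {y : ℝ | ∃ t : ℝ, 0 ≤ t ∧ y = t - τ t} (-τb))
    -- hypotheses on φ
    (hφcont : ContinuousOn φ (Set.Ici 0))
    (hφmono : StrictMonoOn φ (Set.Ici 0))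
    (hφinf : Filter.Tendsto φ Filter.atTop Filter.atTop)
    (hφRV : RVatTop φ 0)
    (hφlogRV : RVatTop (fun y => Real.log (φ (Real.exp y))) 0)
    (hτφ : Filter.Tendsto (fun t => (t - τ t) / (t / φ t)) Filter.atTop
      (nhds 1)) :
    ∃ σ : ℝ → ℝ,
      ContinuousOn σ (Set.Ici (-τb)) ∧
      (∀ t : ℝ, -τb ≤ t → 0 ≤ σ t) ∧
      Filter.Tendsto (fun t => ∫ s in (0:ℝ)..t, 1 / σ s)
        Filter.atTop Filter.atTop ∧
      Filter.Tendsto σ Filter.atTop Filter.atTop ∧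
      Filter.Tendsto (fun t => ∫ s in (t - τ t)..t, 1 / σ s)
        Filter.atTop (nhds 1) ∧
      Filter.Tendsto (fun t => σ t / (t * Real.log (φ t)))
        Filter.atTop (nhds 1) ∧
      Filter.Tendsto
        (fun t => (∫ s in (0:ℝ)..t, 1 / σ s) / (Real.log t / Real.log (φ t)))
        Filter.atTop (nhds 1) :=
  stmt12_general τb τ φ hτnn hφcont hφmono hφinf hφlogRV hτφ
end

section
/- Let σ be a positive continuous function on [0,∞) such that σ(t)/t → ∞ as t → ∞. Then lim_{t→∞} (∫_0^t ds/σ(s)) / log σ(t) = 0. -/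
/-!
Writing `F t = ∫₀ᵗ ds / σ(s)`, the hypothesis says `1 / σ(s) = o(1 / s)`, so integrating from a
large fixed point on gives `F t = o(log t)`. Since also `σ t ≥ t` for large `t`, we get
`log σ(t) ≥ log t`, and the quotient tends to `0`.
-/

open Filter Set Real MeasureTheory Asymptotics

section IntegralLittleO

variable {E : Type*} [NormedAddCommGroup E] [NormedSpace ℝ E]

theorem norm_intervalIntegral_le_mul_log_div {g : ℝ → E} {a b c : ℝ} (ha : 0 < a) (hab : a ≤ b)
    (hg : ∀ s ∈ Icc a b, ‖g s‖ ≤ c * s⁻¹) :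
    ‖∫ s in a..b, g s‖ ≤ c * log (b / a) := by
  have hzero : (0 : ℝ) ∉ uIcc a b := by
    rw [uIcc_of_le hab]
    exact fun h => ha.not_ge h.1
  have hinv : IntervalIntegrable (fun s : ℝ => c * s⁻¹) volume a b :=
    (continuousOn_const.mul (continuousOn_inv₀.mono (subset_compl_singleton_iff.2 hzero))
      ).intervalIntegrable
  calc ‖∫ s in a..b, g s‖ ≤ ∫ s in a..b, c * s⁻¹ :=
        intervalIntegral.norm_integral_le_of_norm_le hab
          (ae_of_all _ fun s hs => hg s (Ioc_subset_Icc_self hs)) hinv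
    _ = c * log (b / a) := by rw [intervalIntegral.integral_const_mul, integral_inv hzero]

theorem intervalIntegral_isLittleO_log {g : ℝ → E}
    (hint : ∀ t, 0 ≤ t → IntervalIntegrable g volume 0 t) (hg : g =o[atTop] fun s => s⁻¹) :
    (fun t => ∫ s in (0 : ℝ)..t, g s) =o[atTop] log := by
  refine isLittleO_iff.2 fun ε hε => ?_
  obtain ⟨s₁, hs₁⟩ := eventually_atTop.1 (isLittleO_iff.1 hg (half_pos hε))
  set a := max s₁ 1
  have ha : 1 ≤ a := le_max_right _ _
  set C := ‖∫ s in (0 : ℝ)..a, g s‖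
  filter_upwards [eventually_ge_atTop a, tendsto_log_atTop.eventually_ge_atTop (2 * C / ε)]
    with t hat hCt
  have hlog : 0 ≤ log t := log_nonneg (ha.trans hat)
  have hsplit : ∫ s in (0 : ℝ)..t, g s = (∫ s in (0 : ℝ)..a, g s) + ∫ s in a..t, g s :=
    (intervalIntegral.integral_add_adjacent_intervals (hint a (by linarith))
      ((hint t (by linarith)).mono_set
        (uIcc_subset_uIcc_right (mem_uIcc_of_le (by linarith) hat)))).symm
  have htail : ‖∫ s in a..t, g s‖ ≤ ε / 2 * log t := by
    refine (norm_intervalIntegral_le_mul_log_div (c := ε / 2) (by linarith) hat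
      fun s hs => ?_).trans ?_
    · have hs₀ : 0 < s := by linarith [hs.1]
      simpa [abs_of_pos hs₀] using hs₁ s (le_trans (le_max_left _ _) hs.1)
    · gcongr
      · exact div_pos (by linarith) (by linarith)
      · exact div_le_self (by linarith) ha
  have hC : C ≤ ε / 2 * log t := by
    rw [div_le_iff₀ hε] at hCt
    linarith
  calc ‖∫ s in (0 : ℝ)..t, g s‖ ≤ C + ‖∫ s in a..t, g s‖ := hsplit ▸ norm_add_le _ _
    _ ≤ ε / 2 * log t + ε / 2 * log t := add_le_add hC htail
    _ = ε * ‖log t‖ := by rw [Real.norm_of_nonneg hlog]; ring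

end IntegralLittleO

theorem one_div_isLittleO_inv_of_tendsto_div_atTop {σ : ℝ → ℝ}
    (hσ : Tendsto (fun t => σ t / t) atTop atTop) :
    (fun s => 1 / σ s) =o[atTop] fun s => s⁻¹ := by
  rw [isLittleO_iff_tendsto'
    (eventually_gt_atTop 0 |>.mono fun s hs h => absurd h (by positivity))]
  refine hσ.inv_tendsto_atTop.congr fun s => ?_
  simp only [Pi.inv_apply]
  field_simp

theorem eventually_log_pos_and_log_le_log_of_tendsto_div_atTop {σ : ℝ → ℝ}
    (hσ : Tendsto (fun t => σ t / t) atTop atTop) :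
    ∀ᶠ t in atTop, 0 < log t ∧ log t ≤ log (σ t) := by
  filter_upwards [eventually_gt_atTop 1, hσ.eventually_ge_atTop 1] with t ht hσt
  have ht₀ : 0 < t := by linarith
  exact ⟨log_pos ht, log_le_log ht₀ ((one_le_div ht₀).1 hσt)⟩

theorem stmt13
    (σ : ℝ → ℝ)
    (hσcont : ContinuousOn σ (Set.Ici 0))
    (hσpos : ∀ t : ℝ, 0 ≤ t → 0 < σ t)
    (hσt : Filter.Tendsto (fun t => σ t / t) Filter.atTop Filter.atTop) :
    Filter.Tendsto (fun t => (∫ s in (0:ℝ)..t, 1 / σ s) / Real.log (σ t))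
      Filter.atTop (nhds 0) := by
  have hint : ∀ t, 0 ≤ t → IntervalIntegrable (fun s => 1 / σ s) volume 0 t := fun t ht =>
    ContinuousOn.intervalIntegrable <|
      (continuousOn_const.div hσcont fun s hs => (hσpos s hs).ne').mono <| by
        rw [uIcc_of_le ht]; exact Icc_subset_Ici_self
  have hlittleO :=
    intervalIntegral_isLittleO_log hint (one_div_isLittleO_inv_of_tendsto_div_atTop hσt)
  refine squeeze_zero_norm' ?_ (by simpa only [norm_zero] using hlittleO.tendsto_div_nhds_zero.norm)
  filter_upwards [eventually_log_pos_and_log_le_log_of_tendsto_div_atTop hσt] with t ⟨hlog, hlogσ⟩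
  rw [norm_div, norm_div, Real.norm_of_nonneg hlog.le, Real.norm_of_nonneg (hlog.trans_le hlogσ).le]
  exact div_le_div_of_nonneg_left (norm_nonneg _) hlog hlogσ
end

section
/- Suppose g satisfies: g(0) = 0; g(x) > 0 for all x > 0; g is continuous on [0,∞); g is C¹ on (0,δ₁) with g′(x) > 0 there, for some δ₁ > 0; and g′ ∈ RV_0(β−1) for some β > 1. Let x be a positive continuous function on [0,∞) with x(t) → 0 as t → ∞ and liminf_{t→∞} x(t)/G⁻¹(t) ≥ λ for some λ > 0. Let τ : [0,∞) → [0,∞) be continuous with t − τ(t) → ∞ and τ(t)/t → q ∈ (0,1) as t → ∞, let b > 0, and define φ(t) = b·g(x(t−τ(t))) for t large enough that t − τ(t) ≥ 0. Then liminf_{t→∞} φ(t)/g(G⁻¹(t)) ≥ b·λ^β·(1−q)^{−β/(β−1)}. -/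
open Filter Set Real MeasureTheory

/-!
Karamata's theorem at `0` turns `g' ∈ RV₀(β - 1)` into `y g'(y) / g(y) → β`, hence `g ∈ RV₀(β)`.
Integrating the resulting power bounds on `g` gives `G(y) g(y) / y → 1 / (β - 1)`, hence
`G ∈ RV₀(1 - β)`, i.e. `G⁻¹(c t) ≳ c^(-1/(β-1)) G⁻¹(t)`. Since `x(s) ≳ λ G⁻¹(s)` and
`t - τ(t) ≲ (1 - q) t`, monotonicity of `g` near `0` and `g ∈ RV₀(β)` give
`g(x(t - τ(t))) ≳ λ^β g(G⁻¹((1 - q) t)) ≳ λ^β (1 - q)^(-β/(β-1)) g(G⁻¹(t))`,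
where each `≳` holds up to a factor `θ < 1` that can be taken arbitrarily close to `1`.
Karamata's theorem rests on Potter's bounds, that is, on the uniform convergence theorem of
regular variation, which follows from a Steinhaus-type measure argument.
-/

open Topology

lemma exists_mem_add_mem_of_volume_gt {E : Set ℝ} {U u : ℝ} (hE : MeasurableSet E)
    (hEU : E ⊆ Icc 0 (2 * U)) (hvol : ENNReal.ofReal (3 * U / 2) < volume E)
    (hu : u ∈ Icc 0 U) : ∃ e ∈ E, e + u ∈ E := by
  have hsub : (fun s => s + u) ⁻¹' E ⊆ Icc (-U) (2 * U) := fun s hs => by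
    have := hEU hs; constructor <;> linarith [this.1, this.2, hu.1, hu.2]
  have hlt : volume (Icc (-U) (2 * U)) < volume ((fun s => s + u) ⁻¹' E) + volume E := by
    rw [measure_preimage_add_right, Real.volume_Icc,
      show 2 * U - -U = 3 * U / 2 + 3 * U / 2 by ring,
      ENNReal.ofReal_add (by linarith [hu.1, hu.2]) (by linarith [hu.1, hu.2])]
    exact ENNReal.add_lt_add hvol hvol
  obtain ⟨e, heu, he⟩ := nonempty_inter_of_measure_lt_add volume hE hsub
    (hEU.trans (Icc_subset_Icc (by linarith [hu.1, hu.2]) le_rfl)) hlt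
  exact ⟨e, he, heu⟩

/-- The uniform convergence theorem of regular variation, in additive form. -/
theorem tendstoUniformlyOn_sub_of_tendsto_sub {m : ℝ → ℝ} {T₁ U : ℝ}
    (hm : ContinuousOn m (Ioi T₁))
    (hconv : ∀ u, 0 ≤ u → Tendsto (fun t => m (t + u) - m t) atTop (𝓝 0)) :
    TendstoUniformlyOn (fun t u => m (t + u) - m t) 0 atTop (Icc 0 U) := by
  refine TendstoUniformlyOn.mono ?_ (Icc_subset_Icc_right (le_max_left U 1))
  set U := max U 1
  have hU : 0 < U := lt_max_of_lt_right one_pos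
  rw [Metric.tendstoUniformlyOn_iff]
  intro ε hε
  -- closed sets of shifts that are good from time `T₁ + 1 + n` on; they exhaust `[0, 2U]`
  set E : ℕ → Set ℝ := fun n =>
    ⋂ t ∈ Ici (T₁ + 1 + n), Icc 0 (2 * U) ∩ {s | |m (t + s) - m t| ≤ ε / 3}
  have hEU : ∀ n, E n ⊆ Icc 0 (2 * U) := fun n s hs =>
    (mem_iInter₂.1 hs _ self_mem_Ici).1
  have hEmono : Monotone E := fun n n' hnn' s hs => mem_iInter₂.2 fun t ht =>
    mem_iInter₂.1 hs t (le_trans (by gcongr) (mem_Ici.1 ht))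
  have hEclosed : ∀ n, IsClosed (E n) := fun n => isClosed_biInter fun t ht => by
    have hcont : ContinuousOn (fun s => |m (t + s) - m t|) (Icc 0 (2 * U)) :=
      ((hm.comp (continuousOn_const.add continuousOn_id) fun s hs => by
        simp only [mem_Ioi, Pi.add_apply, id]
        linarith [mem_Ici.1 ht, hs.1, (n.cast_nonneg : (0:ℝ) ≤ n)]).sub continuousOn_const).abs
    exact hcont.preimage_isClosed_of_isClosed isClosed_Icc isClosed_Iic
  have hEunion : ⋃ n, E n = Icc 0 (2 * U) := by
    refine (iUnion_subset hEU).antisymm fun s hs => ?_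
    obtain ⟨M, hM⟩ := eventually_atTop.1 ((hconv s hs.1).eventually
      (Metric.closedBall_mem_nhds 0 (by positivity : 0 < ε / 3)))
    obtain ⟨n, hn⟩ := exists_nat_ge (M - (T₁ + 1))
    refine mem_iUnion.2 ⟨n, mem_iInter₂.2 fun t ht => ⟨hs, ?_⟩⟩
    simpa [Real.dist_eq] using hM t (by linarith [mem_Ici.1 ht])
  obtain ⟨n, hn⟩ : ∃ n, ENNReal.ofReal (3 * U / 2) < volume (E n) := by
    have hlim := tendsto_measure_iUnion_atTop (μ := volume) hEmono
    rw [hEunion, Real.volume_Icc] at hlim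
    exact (hlim.eventually (eventually_gt_nhds
      ((ENNReal.ofReal_lt_ofReal_iff (by linarith)).2 (by linarith)))).exists
  filter_upwards [eventually_ge_atTop (T₁ + 1 + n + 2 * U)] with t ht u hu
  obtain ⟨e, he, heu⟩ := exists_mem_add_mem_of_volume_gt (hEclosed n).measurableSet (hEU n) hn hu
  -- both `t` and `t + u` are good shifts of the base point `t - e`
  have hte : T₁ + 1 + n ≤ t - e := by linarith [(hEU n he).2]
  have h₁ := (mem_iInter₂.1 heu (t - e) hte).2
  have h₂ := (mem_iInter₂.1 he (t - e) hte).2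
  simp only [mem_ofPred_eq, sub_add_cancel, show t - e + (e + u) = t + u by ring] at h₁ h₂
  rw [Pi.zero_apply, dist_zero_left, Real.norm_eq_abs]
  linarith [abs_sub_le (m (t + u)) (m (t - e)) (m t), abs_sub_comm (m t) (m (t - e))]

section Potter

variable {f : ℝ → ℝ} {α δ : ℝ}

lemma RVatZero.tendsto_log_sub (hf : RVatZero f α) (hδ : 0 < δ)
    (hpos : ∀ y ∈ Ioo 0 δ, 0 < f y) {s : ℝ} (hs0 : 0 < s) (hs1 : s ≤ 1) :
    Tendsto (fun y => log (f (s * y)) - log (f y)) (𝓝[>] 0) (𝓝 (α * log s)) := by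
  have hlog := ((Real.continuousAt_log (rpow_pos_of_pos hs0 α).ne').tendsto.comp (hf s hs0))
  rw [Real.log_rpow hs0] at hlog
  refine hlog.congr' ?_
  filter_upwards [Ioo_mem_nhdsGT hδ] with y hy
  have hsy : s * y ∈ Ioo 0 δ := ⟨mul_pos hs0 hy.1, by nlinarith [hy.1, hy.2]⟩
  exact Real.log_div (hpos _ hsy).ne' (hpos y hy).ne'

lemma RVatZero.tendsto_log_comp_exp_neg_add_sub (hf : RVatZero f α) (hδ : 0 < δ)
    (hpos : ∀ y ∈ Ioo 0 δ, 0 < f y) {u : ℝ} (hu : 0 ≤ u) :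
    Tendsto (fun t => (log (f (exp (-(t + u)))) + α * (t + u)) - (log (f (exp (-t))) + α * t))
      atTop (𝓝 0) := by
  have hy : Tendsto (fun t : ℝ => exp (-t)) atTop (𝓝[>] 0) :=
    tendsto_nhdsWithin_iff.2 ⟨tendsto_exp_neg_atTop_nhds_zero, .of_forall fun t => exp_pos _⟩
  have hlim := ((hf.tendsto_log_sub hδ hpos (exp_pos (-u))
    (exp_le_one_iff.2 (by linarith))).comp hy).add_const (α * u)
  rw [log_exp, mul_neg, neg_add_cancel] at hlim
  refine hlim.congr fun t => ?_
  simp only [Function.comp_apply, ← exp_add, neg_add]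
  ring_nf

lemma RVatZero.exists_abs_log_sub_le (hf : RVatZero f α) (hδ : 0 < δ)
    (hpos : ∀ y ∈ Ioo 0 δ, 0 < f y) (hcont : ContinuousOn f (Ioo 0 δ)) {ε : ℝ} (hε : 0 < ε) :
    ∃ y₀, 0 < y₀ ∧ y₀ < δ ∧ ∀ y ∈ Ioc 0 y₀, ∀ s ∈ Icc (exp (-1)) 1,
      |log (f (s * y)) - log (f y) - α * log s| ≤ ε := by
  -- the uniform convergence theorem in the variable `t = -log y`
  set m : ℝ → ℝ := fun t => log (f (exp (-t))) + α * t
  have hexp : ∀ t ∈ Ioi (-log δ), exp (-t) ∈ Ioo 0 δ := fun t ht =>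
    ⟨exp_pos _, by rw [← exp_log hδ]; exact exp_lt_exp.2 (by linarith [mem_Ioi.1 ht])⟩
  have hm : ContinuousOn m (Ioi (-log δ)) := by
    refine ContinuousOn.add ?_ (continuousOn_const.mul continuousOn_id)
    refine ContinuousOn.log (hcont.comp (by fun_prop) hexp) fun t ht => (hpos _ (hexp t ht)).ne'
  obtain ⟨T, hT⟩ := eventually_atTop.1 (Metric.tendstoUniformlyOn_iff.1
    (tendstoUniformlyOn_sub_of_tendsto_sub (U := 1) hm
      fun u hu => hf.tendsto_log_comp_exp_neg_add_sub hδ hpos hu) ε hε)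
  set T' := max T (-log δ + 1)
  refine ⟨exp (-T'), exp_pos _, (hexp T' (by simp [T'])).2, fun y hy s hs => ?_⟩
  have hy0 := hy.1
  have hs0 : 0 < s := (exp_pos _).trans_le hs.1
  have hTy : T ≤ -log y := by
    have := log_le_log hy0 hy.2
    rw [log_exp] at this
    linarith [le_max_left T (-log δ + 1)]
  have hu : -log s ∈ Icc (0:ℝ) 1 := by
    constructor
    · linarith [log_nonpos hs0.le hs.2]
    · linarith [(log_le_log (exp_pos _) hs.1).trans_eq' (log_exp (-1))]
  have := hT _ hTy _ hu
  rw [Pi.zero_apply, dist_zero_left, Real.norm_eq_abs] at this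
  have e1 : exp (-(-log y)) = y := by rw [neg_neg, exp_log hy0]
  have e2 : exp (-(-log y + -log s)) = s * y := by
    rw [neg_add, neg_neg, neg_neg, exp_add, exp_log hy0, exp_log hs0, mul_comm]
  simp only [m, e1, e2] at this
  rw [show log (f (s * y)) - log (f y) - α * log s
    = log (f (s * y)) + α * (-log y + -log s) - (log (f y) + α * -log y) by ring]
  exact this.le

lemma RVatZero.exists_abs_log_sub_le_mul (hf : RVatZero f α) (hδ : 0 < δ)
    (hpos : ∀ y ∈ Ioo 0 δ, 0 < f y) (hcont : ContinuousOn f (Ioo 0 δ)) {ε : ℝ} (hε : 0 < ε) :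
    ∃ y₀, 0 < y₀ ∧ y₀ < δ ∧ ∀ y ∈ Ioc 0 y₀, ∀ s ∈ Ioc 0 1,
      |log (f (s * y)) - log (f y) - α * log s| ≤ ε * (2 - log s) := by
  obtain ⟨y₀, hy₀, hy₀δ, hbase⟩ := hf.exists_abs_log_sub_le hδ hpos hcont hε
  refine ⟨y₀, hy₀, hy₀δ, ?_⟩
  -- chain the bound on `[e⁻¹, 1]` along `s, e s, e² s, …`
  have hk : ∀ k : ℕ, ∀ y ∈ Ioc 0 y₀, ∀ s ∈ Icc (exp (-(k + 1))) 1,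
      |log (f (s * y)) - log (f y) - α * log s| ≤ (k + 1) * ε := by
    intro k
    induction k with
    | zero => simpa using hbase
    | succ k ih =>
      intro y hy s hs
      rcases le_or_gt (exp (-(k + 1))) s with hks | hks
      · exact (ih y hy s ⟨hks, hs.2⟩).trans (by push_cast; nlinarith)
      have hs0 : 0 < s := (exp_pos _).trans_le hs.1
      have hes : exp 1 * s ∈ Icc (exp (-(k + 1))) 1 := by
        constructor
        · calc exp (-(k + 1)) = exp 1 * exp (-((k + 1 : ℕ) + 1)) := by
                rw [← exp_add]; push_cast; ring_nf
            _ ≤ exp 1 * s := by gcongr; exact hs.1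
        · calc exp 1 * s ≤ exp 1 * exp (-(k + 1)) := by gcongr
            _ = exp (-k) := by rw [← exp_add]; ring_nf
            _ ≤ 1 := exp_le_one_iff.2 (by simp)
      have hesy : exp 1 * s * y ∈ Ioc 0 y₀ :=
        ⟨by have := hy.1; positivity, by nlinarith [hes.2, hy.1, hy.2]⟩
      have h₁ := hbase _ hesy (exp (-1)) ⟨le_rfl, exp_le_one_iff.2 (by norm_num)⟩
      have h₂ := ih y hy _ hes
      have hs_eq : exp (-1) * (exp 1 * s * y) = s * y := by
        rw [← mul_assoc, ← mul_assoc, ← exp_add]; norm_num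
      rw [hs_eq, log_exp] at h₁
      rw [log_mul (exp_pos 1).ne' hs0.ne', log_exp] at h₂
      push_cast
      calc |log (f (s * y)) - log (f y) - α * log s|
          = |(log (f (s * y)) - log (f (exp 1 * s * y)) - α * -1)
              + (log (f (exp 1 * s * y)) - log (f y) - α * (1 + log s))| := by ring_nf
        _ ≤ ε + (k + 1) * ε := (abs_add_le _ _).trans (add_le_add h₁ h₂)
        _ = (k + 1 + 1) * ε := by ring
  intro y hy s hs
  have hlog : 0 ≤ -log s := by linarith [log_nonpos hs.1.le hs.2]
  have hks : exp (-(⌈-log s⌉₊ + 1)) ≤ s := by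
    calc exp (-(⌈-log s⌉₊ + 1)) ≤ exp (log s) :=
          exp_le_exp.2 (by linarith [Nat.le_ceil (-log s)])
      _ = s := exp_log hs.1
  refine (hk _ y hy s ⟨hks, hs.2⟩).trans ?_
  nlinarith [Nat.ceil_lt_add_one hlog]

theorem RVatZero.potter_bounds (hf : RVatZero f α) (hδ : 0 < δ)
    (hpos : ∀ y ∈ Ioo 0 δ, 0 < f y) (hcont : ContinuousOn f (Ioo 0 δ)) {ε : ℝ} (hε : 0 < ε) :
    ∃ y₀, 0 < y₀ ∧ y₀ < δ ∧ ∀ y ∈ Ioc 0 y₀, ∀ s ∈ Ioc 0 1,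
      exp (-(2 * ε)) * s ^ (α + ε) * f y ≤ f (s * y) ∧
        f (s * y) ≤ exp (2 * ε) * s ^ (α - ε) * f y := by
  obtain ⟨y₀, hy₀, hy₀δ, hlog⟩ := hf.exists_abs_log_sub_le_mul hδ hpos hcont hε
  refine ⟨y₀, hy₀, hy₀δ, fun y hy s hs => ?_⟩
  have hfy := hpos y ⟨hy.1, hy.2.trans_lt hy₀δ⟩
  have hfsy := hpos (s * y) ⟨mul_pos hs.1 hy.1, by nlinarith [hs.1, hs.2, hy.1, hy.2]⟩
  have hb := abs_le.1 (hlog y hy s hs)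
  have hexp : ∀ c a, exp c * s ^ a * f y = exp (c + a * log s + log (f y)) := fun c a => by
    rw [exp_add, exp_add, exp_log hfy, rpow_def_of_pos hs.1, mul_comm (log s)]
  constructor
  · rw [← exp_log hfsy, hexp]
    exact exp_le_exp.2 (by linarith)
  · rw [← exp_log hfsy, hexp]
    exact exp_le_exp.2 (by linarith)

end Potter

lemma tendsto_of_forall_eventually_mem_Icc {ι : Type*} {l : Filter ι} {u : ι → ℝ} {x : ℝ}
    {lo hi : ℝ → ℝ} (hlo : Tendsto lo (𝓝[>] 0) (𝓝 x)) (hhi : Tendsto hi (𝓝[>] 0) (𝓝 x))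
    (h : ∀ᶠ ε in 𝓝[>] 0, ∀ᶠ i in l, u i ∈ Icc (lo ε) (hi ε)) : Tendsto u l (𝓝 x) := by
  refine tendsto_order.2 ⟨fun a ha => ?_, fun a ha => ?_⟩
  · obtain ⟨ε, hε, hu⟩ := ((hlo.eventually (eventually_gt_nhds ha)).and h).exists
    exact hu.mono fun i hi => hε.trans_le hi.1
  · obtain ⟨ε, hε, hu⟩ := ((hhi.eventually (eventually_lt_nhds ha)).and h).exists
    exact hu.mono fun i hi => hi.2.trans_lt hε

lemma le_and_le_of_mul_rpow_le_deriv {g g' : ℝ → ℝ} {y a b A B : ℝ} (hy : 0 < y)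
    (ha : -1 < a) (hb : -1 < b) (hg0 : g 0 = 0) (hgc : ContinuousOn g (Icc 0 y))
    (hd : ∀ v ∈ Ioo 0 y, HasDerivAt g (g' v) v) (hg'c : ContinuousOn g' (Ioc 0 y))
    (hle : ∀ v ∈ Ioc 0 y, A * v ^ a ≤ g' v ∧ g' v ≤ B * v ^ b) :
    A * y ^ (a + 1) / (a + 1) ≤ g y ∧ g y ≤ B * y ^ (b + 1) / (b + 1) := by
  have hAi := (intervalIntegral.intervalIntegrable_rpow' ha (a := 0) (b := y)).const_mul A
  have hBi := (intervalIntegral.intervalIntegrable_rpow' hb (a := 0) (b := y)).const_mul B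
  have hg'i : IntervalIntegrable g' volume 0 y := by
    refine (hAi.norm.add hBi.norm).mono_fun' ?_ ?_
    · rw [uIoc_of_le hy.le]
      exact hg'c.aestronglyMeasurable measurableSet_Ioc
    · rw [uIoc_of_le hy.le]
      refine (ae_restrict_iff' measurableSet_Ioc).2 (.of_forall fun v hv => ?_)
      simp only [Real.norm_eq_abs]
      have := hle v hv
      exact abs_le.2 ⟨by linarith [neg_abs_le (A * v ^ a), abs_nonneg (B * v ^ b)],
        by linarith [le_abs_self (B * v ^ b), abs_nonneg (A * v ^ a)]⟩
  have hftc : ∫ v in 0..y, g' v = g y := by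
    rw [intervalIntegral.integral_eq_sub_of_hasDerivAt_of_le hy.le hgc hd hg'i, hg0, sub_zero]
  have hpow : ∀ (C c : ℝ), -1 < c → ∫ v in 0..y, C * v ^ c = C * y ^ (c + 1) / (c + 1) :=
    fun C c hc => by
      rw [intervalIntegral.integral_const_mul, integral_rpow (Or.inl hc),
        zero_rpow (by linarith), sub_zero, mul_div_assoc]
  rw [← hftc, ← hpow A a ha, ← hpow B b hb]
  exact ⟨intervalIntegral.integral_mono_on_of_le_Ioo hy.le hAi hg'i fun v hv =>
      (hle v (Ioo_subset_Ioc_self hv)).1,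
    intervalIntegral.integral_mono_on_of_le_Ioo hy.le hg'i hBi fun v hv =>
      (hle v (Ioo_subset_Ioc_self hv)).2⟩

lemma exists_bounds_mul_deriv_of_rvAtZero {g g' : ℝ → ℝ} {α δ ε : ℝ} (hδ : 0 < δ)
    (hg0 : g 0 = 0) (hgc : ContinuousOn g (Ico 0 δ))
    (hd : ∀ y ∈ Ioo 0 δ, HasDerivAt g (g' y) y) (hg'c : ContinuousOn g' (Ioo 0 δ))
    (hg'pos : ∀ y ∈ Ioo 0 δ, 0 < g' y) (hrv : RVatZero g' α) (hε : ε ∈ Ioo 0 (α + 1)) :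
    ∃ y₀, 0 < y₀ ∧ y₀ < δ ∧ ∀ y ∈ Ioo 0 y₀, exp (-(2 * ε)) * (y * g' y) ≤ (α + 1 + ε) * g y ∧
      (α + 1 - ε) * g y ≤ exp (2 * ε) * (y * g' y) := by
  obtain ⟨y₀, hy₀, hy₀δ, hpot⟩ := hrv.potter_bounds hδ hg'pos hg'c hε.1
  refine ⟨y₀, hy₀, hy₀δ, fun y hy => ?_⟩
  have hyδ : y ∈ Ioo 0 δ := ⟨hy.1, hy.2.trans hy₀δ⟩
  have hg'y := hg'pos y hyδ
  -- integrate Potter's bounds `g'(v) ≍ (v/y)^(α ± ε) g'(y)` over `v ∈ (0, y]`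
  obtain ⟨hlo, hhi⟩ := le_and_le_of_mul_rpow_le_deriv (g := g) (g' := g') hy.1
    (a := α + ε) (b := α - ε) (A := exp (-(2 * ε)) * g' y / y ^ (α + ε))
    (B := exp (2 * ε) * g' y / y ^ (α - ε)) (by linarith [hε.1, hε.2]) (by linarith [hε.2]) hg0
    (hgc.mono fun v hv => ⟨hv.1, hv.2.trans_lt hyδ.2⟩)
    (fun v hv => hd v ⟨hv.1, hv.2.trans hyδ.2⟩)
    (hg'c.mono fun v hv => ⟨hv.1, hv.2.trans_lt hyδ.2⟩) fun v hv => by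
      have := hpot y ⟨hy.1, hy.2.le⟩ (v / y) ⟨div_pos hv.1 hy.1, (div_le_one hy.1).2 hv.2⟩
      rw [div_mul_cancel₀ v hy.1.ne', div_rpow hv.1.le hy.1.le, div_rpow hv.1.le hy.1.le] at this
      constructor <;> [convert this.1 using 1; convert this.2 using 1] <;> ring
  constructor
  · rw [← div_le_iff₀' (by linarith [hε.1, hε.2])]
    refine (le_of_eq ?_).trans hlo
    have : y ^ (α + ε) ≠ 0 := (rpow_pos_of_pos hy.1 _).ne'
    have : α + 1 + ε ≠ 0 := by linarith [hε.1, hε.2]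
    rw [rpow_add_one hy.1.ne', show α + ε + 1 = α + 1 + ε by ring]; field_simp
  · rw [← le_div_iff₀' (by linarith [hε.2])]
    refine hhi.trans (le_of_eq ?_)
    have : y ^ (α - ε) ≠ 0 := (rpow_pos_of_pos hy.1 _).ne'
    have : α + 1 - ε ≠ 0 := by linarith [hε.2]
    rw [rpow_add_one hy.1.ne', show α - ε + 1 = α + 1 - ε by ring]; field_simp

/-- Karamata's theorem. -/
theorem tendsto_mul_deriv_div_of_rvAtZero {g g' : ℝ → ℝ} {α δ : ℝ} (hα : -1 < α) (hδ : 0 < δ)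
    (hg0 : g 0 = 0) (hgc : ContinuousOn g (Ico 0 δ))
    (hd : ∀ y ∈ Ioo 0 δ, HasDerivAt g (g' y) y) (hg'c : ContinuousOn g' (Ioo 0 δ))
    (hg'pos : ∀ y ∈ Ioo 0 δ, 0 < g' y) (hrv : RVatZero g' α) :
    Tendsto (fun y => y * g' y / g y) (𝓝[>] 0) (𝓝 (α + 1)) := by
  have hlim : ∀ c : ℝ, Tendsto (fun ε => exp (c * ε) * (α + 1 + c / 2 * ε)) (𝓝[>] 0)
      (𝓝 (α + 1)) := fun c => by
    have : Continuous (fun ε => exp (c * ε) * (α + 1 + c / 2 * ε)) := by fun_prop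
    simpa using (this.tendsto 0).mono_left nhdsWithin_le_nhds
  refine tendsto_of_forall_eventually_mem_Icc (hlim (-2)) (hlim 2) ?_
  filter_upwards [Ioo_mem_nhdsGT (by linarith : (0:ℝ) < α + 1)] with ε hε
  obtain ⟨y₀, hy₀, hy₀δ, hbounds⟩ :=
    exists_bounds_mul_deriv_of_rvAtZero hδ hg0 hgc hd hg'c hg'pos hrv hε
  filter_upwards [Ioo_mem_nhdsGT hy₀] with y hy
  obtain ⟨hlo, hhi⟩ := hbounds y hy
  have hgy : 0 < g y := by
    have := hg'pos y ⟨hy.1, hy.2.trans hy₀δ⟩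
    have : 0 < exp (-(2 * ε)) * (y * g' y) := by have := hy.1; positivity
    nlinarith [hε.1]
  have hE : exp (2 * ε) * exp (-(2 * ε)) = 1 := by rw [← exp_add]; simp
  constructor
  · rw [le_div_iff₀ hgy]
    calc exp (-2 * ε) * (α + 1 + -2 / 2 * ε) * g y = exp (-(2 * ε)) * ((α + 1 - ε) * g y) := by
          ring_nf
      _ ≤ exp (-(2 * ε)) * (exp (2 * ε) * (y * g' y)) := by gcongr
      _ = y * g' y := by rw [← mul_assoc, mul_comm (exp _), hE, one_mul]
  · rw [div_le_iff₀ hgy]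
    calc y * g' y = exp (2 * ε) * (exp (-(2 * ε)) * (y * g' y)) := by
          rw [← mul_assoc, hE, one_mul]
      _ ≤ exp (2 * ε) * ((α + 1 + ε) * g y) := by gcongr
      _ = _ := by ring

lemma rpow_le_div_and_div_le_rpow {g g' : ℝ → ℝ} {p P y₀ : ℝ}
    (hpos : ∀ v ∈ Ioc 0 y₀, 0 < g v) (hd : ∀ v ∈ Ioc 0 y₀, HasDerivAt g (g' v) v)
    (hmem : ∀ v ∈ Ioc 0 y₀, v * g' v / g v ∈ Icc p P) {z y : ℝ} (hz : 0 < z) (hzy : z ≤ y)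
    (hy : y ≤ y₀) : (z / y) ^ P ≤ g z / g y ∧ g z / g y ≤ (z / y) ^ p := by
  -- `log g - r log` is monotone for `r = p` and antitone for `r = P`
  have hderiv : ∀ r, ∀ v ∈ Ioc 0 y₀, HasDerivAt (fun w => log (g w) - r * log w)
      ((v * g' v / g v - r) / v) v := fun r v hv => by
    refine (((hd v hv).log (hpos v hv).ne').sub
      ((hasDerivAt_log hv.1.ne').const_mul r)).congr_deriv ?_
    have := (hpos v hv).ne'; have := hv.1.ne'
    field_simp
  have hcont : ∀ r, ContinuousOn (fun w => log (g w) - r * log w) (Ioc 0 y₀) :=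
    fun r v hv => (hderiv r v hv).continuousAt.continuousWithinAt
  have hderiv' : ∀ r, ∀ v ∈ interior (Ioc 0 y₀), HasDerivWithinAt
      (fun w => log (g w) - r * log w) ((v * g' v / g v - r) / v) (interior (Ioc 0 y₀)) v :=
    fun r v hv => (hderiv r v (interior_subset hv)).hasDerivWithinAt
  have hmono := monotoneOn_of_hasDerivWithinAt_nonneg (convex_Ioc 0 y₀) (hcont p) (hderiv' p)
    fun v hv => div_nonneg (sub_nonneg.2 (hmem v (interior_subset hv)).1)
      (interior_subset hv : v ∈ Ioc 0 y₀).1.le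
  have hanti := antitoneOn_of_hasDerivWithinAt_nonpos (convex_Ioc 0 y₀) (hcont P) (hderiv' P)
    fun v hv => div_nonpos_of_nonpos_of_nonneg (sub_nonpos.2 (hmem v (interior_subset hv)).2)
      (interior_subset hv : v ∈ Ioc 0 y₀).1.le
  have hzI : z ∈ Ioc 0 y₀ := ⟨hz, hzy.trans hy⟩
  have hyI : y ∈ Ioc 0 y₀ := ⟨hz.trans_le hzy, hy⟩
  have hexp : ∀ r, (z / y) ^ r = exp (r * (log z - log y)) := fun r => by
    rw [rpow_def_of_pos (div_pos hz hyI.1), log_div hz.ne' hyI.1.ne', mul_comm]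
  rw [← exp_log (div_pos (hpos z hzI) (hpos y hyI)), log_div (hpos z hzI).ne' (hpos y hyI).ne',
    hexp, hexp]
  have h₁ := hmono hzI hyI hzy
  have h₂ := hanti hzI hyI hzy
  simp only at h₁ h₂
  constructor <;> exact exp_le_exp.2 (by linarith)

lemma integral_div_rpow {y y₀ r : ℝ} (hy : 0 < y) (hyy₀ : y ≤ y₀) (hr : 1 < r) :
    ∫ v in y..y₀, (y / v) ^ r = y * (1 - y ^ (r - 1) * y₀ ^ (1 - r)) / (r - 1) := by
  have hcongr : EqOn (fun v => (y / v) ^ r) (fun v => y ^ r * v ^ (-r)) (uIcc y y₀) :=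
    fun v hv => by
      have hv0 : 0 < v := hy.trans_le (uIcc_of_le hyy₀ ▸ hv).1
      simp only
      rw [div_rpow hy.le hv0.le, rpow_neg hv0.le, div_eq_mul_inv]
  have h0 : (0:ℝ) ∉ uIcc y y₀ := by rw [uIcc_of_le hyy₀]; exact fun h => hy.not_ge h.1
  rw [intervalIntegral.integral_congr hcongr, intervalIntegral.integral_const_mul,
    integral_rpow (Or.inr ⟨by linarith, h0⟩), show -r + 1 = 1 - r by ring]
  have hyr : y ^ r = y * y ^ (r - 1) := by
    rw [← rpow_one_add' hy.le (by linarith), add_sub_cancel]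
  have hyy : y ^ (1 - r) = (y ^ (r - 1))⁻¹ := by rw [← rpow_neg hy.le, neg_sub]
  have : y ^ (r - 1) ≠ 0 := (rpow_pos_of_pos hy _).ne'
  have : r - 1 ≠ 0 := by linarith
  have : 1 - r ≠ 0 := by linarith
  rw [hyr, hyy]
  field_simp
  ring

lemma mul_integral_inv_mem_Icc {g : ℝ → ℝ} {y y₀ p P : ℝ} (hy : 0 < y) (hyy₀ : y ≤ y₀)
    (hp : 1 < p) (hP : 1 < P) (hpos : ∀ v ∈ Icc y y₀, 0 < g v) (hcont : ContinuousOn g (Icc y y₀))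
    (hratio : ∀ v ∈ Icc y y₀, (y / v) ^ P ≤ g y / g v ∧ g y / g v ≤ (y / v) ^ p) :
    g y * ∫ v in y..y₀, 1 / g v ∈
      Icc (y * (1 - y ^ (P - 1) * y₀ ^ (1 - P)) / (P - 1))
        (y * (1 - y ^ (p - 1) * y₀ ^ (1 - p)) / (p - 1)) := by
  have hint : ∀ {f : ℝ → ℝ}, ContinuousOn f (Icc y y₀) → IntervalIntegrable f volume y y₀ :=
    fun hf => hf.intervalIntegrable_of_Icc hyy₀
  have hg : ContinuousOn (fun v => g y / g v) (Icc y y₀) :=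
    continuousOn_const.div hcont fun v hv => (hpos v hv).ne'
  have hrpow : ∀ r : ℝ, ContinuousOn (fun v => (y / v) ^ r) (Icc y y₀) := fun r v hv =>
    ((continuousAt_const.div continuousAt_id (hy.trans_le hv.1).ne').rpow_const
      (Or.inl (div_pos hy (hy.trans_le hv.1)).ne')).continuousWithinAt
  rw [← intervalIntegral.integral_const_mul, ← integral_div_rpow hy hyy₀ hp,
    ← integral_div_rpow hy hyy₀ hP]
  simp only [mul_one_div]
  exact ⟨intervalIntegral.integral_mono_on hyy₀ (hint (hrpow P)) (hint hg) fun v hv =>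
      (hratio v hv).1,
    intervalIntegral.integral_mono_on hyy₀ (hint hg) (hint (hrpow p)) fun v hv =>
      (hratio v hv).2⟩

lemma tendsto_const_mul_nhdsGT_zero {c : ℝ} (hc : 0 < c) :
    Tendsto (fun y => c * y) (𝓝[>] 0) (𝓝[>] 0) :=
  tendsto_iff_comap.2 (comap_mulLeft_nhdsGT_zero hc).ge

lemma eventually_sub_le_mul_of_tendsto_div {τ : ℝ → ℝ} {q c : ℝ}
    (hτq : Tendsto (fun t => τ t / t) atTop (𝓝 q)) (hc : 1 - q < c) :
    ∀ᶠ t in atTop, t - τ t ≤ c * t := by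
  filter_upwards [hτq.eventually (eventually_gt_nhds (by linarith : 1 - c < q)),
    eventually_gt_atTop 0] with t ht ht0
  rw [lt_div_iff₀ ht0] at ht
  linarith

/-- The lower bound obtained from the scales `λθ`, `c = (1 - q)/θ` and
`μ = (θ² / (1 - q))^(1/(β-1))`, chosen so that `μ^(β-1) c = θ < 1`. -/
noncomputable def boundConstant (b β q lam θ : ℝ) : ℝ :=
  b * (θ * (lam * θ) ^ β) * (θ * ((θ ^ 2 / (1 - q)) ^ (β - 1)⁻¹) ^ β)

lemma tendsto_boundConstant {b β q lam : ℝ} (hq1 : q < 1) (hlam : 0 < lam) :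
    Tendsto (boundConstant b β q lam) (𝓝[<] 1)
      (𝓝 (b * lam ^ β * (1 - q) ^ (-(β / (β - 1))))) := by
  have hq : 0 < 1 - q := by linarith
  have hcont : ContinuousAt (boundConstant b β q lam) 1 := by
    show ContinuousAt
      (fun θ => b * (θ * (lam * θ) ^ β) * (θ * ((θ ^ 2 / (1 - q)) ^ (β - 1)⁻¹) ^ β)) 1
    fun_prop (disch := first | positivity | (left; positivity))
  convert hcont.tendsto.mono_left nhdsWithin_le_nhds using 2
  rw [boundConstant, one_pow, one_div, mul_one, one_mul, one_mul, ← rpow_mul (inv_pos.2 hq).le,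
    inv_rpow hq.le, ← rpow_neg hq.le, mul_assoc]
  ring_nf

structure StandingHyp (g g' : ℝ → ℝ) (β δ : ℝ) : Prop where
  map_zero : g 0 = 0
  pos : ∀ y, 0 < y → 0 < g y
  continuousOn : ContinuousOn g (Ici 0)
  delta_pos : 0 < δ
  hasDerivAt : ∀ y ∈ Ioo 0 δ, HasDerivAt g (g' y) y
  continuousOn_deriv : ContinuousOn g' (Ioo 0 δ)
  deriv_pos : ∀ y ∈ Ioo 0 δ, 0 < g' y
  one_lt : 1 < β
  rvAtZero_deriv : RVatZero g' (β - 1)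

namespace StandingHyp

variable {g g' : ℝ → ℝ} {β δ : ℝ} {Ginv : ℝ → ℝ}

lemma tendsto_mul_deriv_div (S : StandingHyp g g' β δ) :
    Tendsto (fun y => y * g' y / g y) (𝓝[>] 0) (𝓝 β) := by
  simpa using tendsto_mul_deriv_div_of_rvAtZero (by linarith [S.one_lt]) S.delta_pos S.map_zero
    (S.continuousOn.mono Ico_subset_Ici_self) S.hasDerivAt S.continuousOn_deriv S.deriv_pos
    S.rvAtZero_deriv

lemma rvAtZero (S : StandingHyp g g' β δ) : RVatZero g β := by
  intro c hc
  have hβ : β ≠ 0 := by linarith [S.one_lt]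
  -- `g(cy)/g(y) = c · (g'(cy)/g'(y)) · (h(y)/h(cy))` with `h(y) = y g'(y)/g(y) → β`
  have hlim := ((tendsto_const_nhds (x := c)).mul (S.rvAtZero_deriv c hc)).mul
    (S.tendsto_mul_deriv_div.div
      (S.tendsto_mul_deriv_div.comp (tendsto_const_mul_nhdsGT_zero hc)) hβ)
  rw [div_self hβ, mul_one, ← rpow_one_add' hc.le (by linarith [S.one_lt]), add_sub_cancel] at hlim
  refine hlim.congr' ?_
  filter_upwards [Ioo_mem_nhdsGT S.delta_pos, Ioo_mem_nhdsGT (div_pos S.delta_pos hc)]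
    with y hy hcy
  have hcyδ : c * y ∈ Ioo 0 δ := ⟨mul_pos hc hy.1, (lt_div_iff₀' hc).1 hcy.2⟩
  have := S.deriv_pos y hy; have := S.deriv_pos _ hcyδ
  have := S.pos y hy.1; have := S.pos _ hcyδ.1; have := hy.1.ne'; have := hc.ne'
  simp only [Pi.div_apply, Function.comp_apply]
  field_simp

lemma exists_rpow_le_div_and_div_le_rpow (S : StandingHyp g g' β δ) {p P : ℝ} (hp : p < β)
    (hP : β < P) : ∃ y₀, 0 < y₀ ∧ ∀ z y, 0 < z → z ≤ y → y ≤ y₀ →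
      (z / y) ^ P ≤ g z / g y ∧ g z / g y ≤ (z / y) ^ p := by
  obtain ⟨y₁, hy₁, hmem⟩ := mem_nhdsGT_iff_exists_Ioo_subset.1
    ((S.tendsto_mul_deriv_div.eventually (Icc_mem_nhds hp hP)).and
      (Ioo_mem_nhdsGT S.delta_pos))
  refine ⟨y₁ / 2, half_pos hy₁, fun z y hz hzy hy => ?_⟩
  have hsub : Ioc 0 (y₁ / 2) ⊆ Ioo 0 y₁ := fun v hv => ⟨hv.1, by linarith [hv.2]⟩
  exact rpow_le_div_and_div_le_rpow (fun v hv => S.pos v hv.1)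
    (fun v hv => S.hasDerivAt v (hmem (hsub hv)).2) (fun v hv => (hmem (hsub hv)).1) hz hzy hy

lemma tendsto_div_self (S : StandingHyp g g' β δ) :
    Tendsto (fun y => g y / y) (𝓝[>] 0) (𝓝 0) := by
  obtain ⟨p, hp, hpβ⟩ := exists_between S.one_lt
  obtain ⟨y₀, hy₀, hbound⟩ := S.exists_rpow_le_div_and_div_le_rpow hpβ (lt_add_one β)
  have hgy₀ := S.pos y₀ hy₀
  have hlim : Tendsto (fun y => g y₀ / y₀ ^ p * y ^ (p - 1)) (𝓝[>] 0) (𝓝 0) := by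
    have := ((continuous_rpow_const (by linarith : 0 ≤ p - 1)).tendsto 0).const_mul (g y₀ / y₀ ^ p)
    rw [zero_rpow (by linarith), mul_zero] at this
    exact this.mono_left nhdsWithin_le_nhds
  refine tendsto_of_tendsto_of_tendsto_of_le_of_le' tendsto_const_nhds hlim ?_ ?_
  · filter_upwards [self_mem_nhdsWithin] with y hy
    exact (div_pos (S.pos y hy) hy).le
  · filter_upwards [Ioo_mem_nhdsGT hy₀] with y hy
    have h := (hbound y y₀ hy.1 hy.2.le le_rfl).2
    rw [div_le_iff₀ hgy₀, div_rpow hy.1.le hy₀.le] at h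
    rw [div_le_iff₀ hy.1]
    calc g y ≤ y ^ p / y₀ ^ p * g y₀ := h
      _ = g y₀ / y₀ ^ p * y ^ (p - 1) * y := by
        rw [mul_assoc, ← rpow_add_one hy.1.ne', sub_add_cancel]; ring

lemma intervalIntegrable_inv (S : StandingHyp g g' β δ) {a c : ℝ} (ha : 0 < a) (hc : 0 < c) :
    IntervalIntegrable (fun u => 1 / g u) volume a c := by
  refine ContinuousOn.intervalIntegrable (continuousOn_const.div (S.continuousOn.mono ?_) ?_)
  · exact fun u hu => (lt_min ha hc).le.trans hu.1
  · exact fun u hu => (S.pos u ((lt_min ha hc).trans_le hu.1)).ne'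

lemma Gfun_sub_Gfun (S : StandingHyp g g' β δ) {a c : ℝ} (ha : 0 < a) (hc : 0 < c) :
    Gfun g a - Gfun g c = ∫ u in a..c, 1 / g u := by
  rw [Gfun, Gfun, ← intervalIntegral.integral_add_adjacent_intervals
    (S.intervalIntegrable_inv ha hc) (S.intervalIntegrable_inv hc one_pos), add_sub_cancel_right]

lemma strictAntiOn_Gfun (S : StandingHyp g g' β δ) : StrictAntiOn (Gfun g) (Ioi 0) := by
  intro a ha c hc hac
  rw [← sub_pos, S.Gfun_sub_Gfun ha hc]
  exact intervalIntegral.intervalIntegral_pos_of_pos_on (S.intervalIntegrable_inv ha hc)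
    (fun u hu => one_div_pos.2 (S.pos u (mem_Ioi.1 ha |>.trans hu.1))) hac

lemma Gfun_pos (S : StandingHyp g g' β δ) {a : ℝ} (ha : 0 < a) (ha1 : a < 1) : 0 < Gfun g a := by
  simpa [Gfun] using S.strictAntiOn_Gfun ha (one_pos : (0:ℝ) < 1) ha1

lemma tendsto_Gfun_mul_div (S : StandingHyp g g' β δ) :
    Tendsto (fun y => Gfun g y * g y / y) (𝓝[>] 0) (𝓝 (β - 1)⁻¹) := by
  have hβ : 0 < β - 1 := by linarith [S.one_lt]
  have hlo : Tendsto (fun ε => (1 - ε) * (β - 1 + ε)⁻¹ - ε) (𝓝[>] 0) (𝓝 (β - 1)⁻¹) := by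
    have : ContinuousAt (fun ε => (1 - ε) * (β - 1 + ε)⁻¹ - ε) 0 := by
      fun_prop (disch := simp [hβ.ne'])
    simpa using this.tendsto.mono_left nhdsWithin_le_nhds
  have hhi : Tendsto (fun ε => (β - 1 - ε)⁻¹ + ε) (𝓝[>] 0) (𝓝 (β - 1)⁻¹) := by
    have : ContinuousAt (fun ε => (β - 1 - ε)⁻¹ + ε) 0 := by
      fun_prop (disch := simp [hβ.ne'])
    simpa using this.tendsto.mono_left nhdsWithin_le_nhds
  refine tendsto_of_forall_eventually_mem_Icc hlo hhi ?_
  filter_upwards [Ioo_mem_nhdsGT hβ] with ε hε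
  obtain ⟨y₀, hy₀, hratio⟩ := S.exists_rpow_le_div_and_div_le_rpow (p := β - ε) (P := β + ε)
    (by linarith [hε.1]) (by linarith [hε.1])
  have hsmall : Tendsto (fun y => y ^ (β + ε - 1) * y₀ ^ (1 - (β + ε))) (𝓝[>] 0) (𝓝 0) := by
    have := ((continuous_rpow_const (by linarith [hε.1] : 0 ≤ β + ε - 1)).tendsto 0).mul_const
      (y₀ ^ (1 - (β + ε)))
    rw [zero_rpow (by linarith [hε.1]), zero_mul] at this
    exact this.mono_left nhdsWithin_le_nhds
  have hG₀ := (S.tendsto_div_self.const_mul (Gfun g y₀)).abs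
  rw [mul_zero, abs_zero] at hG₀
  filter_upwards [Ioo_mem_nhdsGT hy₀, hsmall.eventually (eventually_le_nhds hε.1),
    hG₀.eventually (eventually_le_nhds hε.1)] with y hy hs hG
  have hI := mul_integral_inv_mem_Icc hy.1 hy.2.le (by linarith [hε.2]) (by linarith [hε.1])
    (fun v hv => S.pos v (hy.1.trans_le hv.1))
    (S.continuousOn.mono fun v hv => (hy.1.trans_le hv.1).le)
    (fun v hv => hratio y v hy.1 hv.1 hv.2)
  have hsplit : Gfun g y * g y / y
      = Gfun g y₀ * (g y / y) + (g y * ∫ v in y..y₀, 1 / g v) / y := by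
    rw [← S.Gfun_sub_Gfun hy.1 hy₀]; ring
  have hpow : 0 ≤ y ^ (β - ε - 1) * y₀ ^ (1 - (β - ε)) := by
    have := hy.1; positivity
  have hG' := abs_le.1 hG
  rw [show β + ε - 1 = β - 1 + ε by ring, show β - ε - 1 = β - 1 - ε by ring] at hI
  rw [show β + ε - 1 = β - 1 + ε by ring] at hs
  rw [show β - ε - 1 = β - 1 - ε by ring] at hpow
  rw [hsplit]
  have hinv₁ : 0 < (β - 1 + ε)⁻¹ := inv_pos.2 (by linarith [hε.1])
  have hinv₂ : 0 < (β - 1 - ε)⁻¹ := inv_pos.2 (by linarith [hε.2])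
  constructor
  · have : (1 - ε) * (β - 1 + ε)⁻¹ ≤ (g y * ∫ v in y..y₀, 1 / g v) / y := by
      rw [le_div_iff₀ hy.1]
      refine le_trans ?_ hI.1
      rw [div_eq_mul_inv]
      nlinarith [mul_nonneg (mul_nonneg (sub_nonneg.2 hs) hy.1.le) hinv₁.le]
    linarith
  · have : (g y * ∫ v in y..y₀, 1 / g v) / y ≤ (β - 1 - ε)⁻¹ := by
      rw [div_le_iff₀ hy.1]
      refine hI.2.trans ?_
      rw [div_eq_mul_inv]
      nlinarith [mul_nonneg (mul_nonneg hy.1.le hpow) hinv₂.le]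
    linarith

lemma rvAtZero_Gfun (S : StandingHyp g g' β δ) : RVatZero (Gfun g) (1 - β) := by
  intro μ hμ
  have hk := S.tendsto_Gfun_mul_div
  have hβ : (β - 1)⁻¹ ≠ 0 := inv_ne_zero (by linarith [S.one_lt])
  -- `G(μy)/G(y) = (k(μy)/k(y)) · μ · (g(μy)/g(y))⁻¹` with `k(y) = G(y) g(y)/y`
  have hlim := ((hk.comp (tendsto_const_mul_nhdsGT_zero hμ)).div hk hβ).mul
    ((tendsto_const_nhds (x := μ)).mul ((S.rvAtZero μ hμ).inv₀ (rpow_pos_of_pos hμ β).ne'))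
  rw [div_self hβ, one_mul, ← div_eq_mul_inv] at hlim
  rw [rpow_sub hμ, rpow_one]
  refine hlim.congr' ?_
  filter_upwards [Ioo_mem_nhdsGT one_pos] with y hy
  have := S.Gfun_pos hy.1 hy.2; have := S.pos y hy.1; have := S.pos _ (mul_pos hμ hy.1)
  have := hy.1.ne'; have := hμ.ne'
  simp only [Pi.div_apply, Function.comp_apply]
  field_simp

lemma monotoneOn (S : StandingHyp g g' β δ) : MonotoneOn g (Ioo 0 δ) :=
  monotoneOn_of_hasDerivWithinAt_nonneg (convex_Ioo 0 δ)
    (fun y hy => (S.hasDerivAt y hy).continuousAt.continuousWithinAt)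
    (fun y hy => (S.hasDerivAt y (interior_subset hy)).hasDerivWithinAt)
    fun y hy => (S.deriv_pos y (interior_subset hy)).le

lemma eventually_mul_rpow_mul_le (S : StandingHyp g g' β δ) {c θ : ℝ} (hc : 0 < c) (hθ : θ < 1) :
    ∀ᶠ y in 𝓝[>] 0, θ * c ^ β * g y ≤ g (c * y) := by
  have hlt : θ * c ^ β < c ^ β := mul_lt_of_lt_one_left (rpow_pos_of_pos hc β) hθ
  filter_upwards [(S.rvAtZero c hc).eventually (eventually_gt_nhds hlt), self_mem_nhdsWithin]
    with y hy hy0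
  exact ((lt_div_iff₀ (S.pos y hy0)).1 hy).le

lemma Ginv_le_Ginv (S : StandingHyp g g' β δ)
    (hGinv : ∀ z, 0 ≤ z → 0 < Ginv z ∧ Gfun g (Ginv z) = z) {z₁ z₂ : ℝ} (hz₁ : 0 ≤ z₁)
    (h : z₁ ≤ z₂) : Ginv z₂ ≤ Ginv z₁ := by
  have h₁ := hGinv z₁ hz₁
  have h₂ := hGinv z₂ (hz₁.trans h)
  exact (S.strictAntiOn_Gfun.le_iff_ge h₁.1 h₂.1).1 (by rwa [h₁.2, h₂.2])

lemma tendsto_Ginv (S : StandingHyp g g' β δ)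
    (hGinv : ∀ z, 0 ≤ z → 0 < Ginv z ∧ Gfun g (Ginv z) = z) :
    Tendsto Ginv atTop (𝓝[>] 0) := by
  refine tendsto_nhdsWithin_iff.2 ⟨tendsto_order.2 ⟨fun a ha => ?_, fun a ha => ?_⟩,
    eventually_atTop.2 ⟨0, fun z hz => (hGinv z hz).1⟩⟩
  · exact eventually_atTop.2 ⟨0, fun z hz => ha.trans (hGinv z hz).1⟩
  · filter_upwards [eventually_gt_atTop (max 0 (Gfun g a))] with z hz
    have h := hGinv z ((le_max_left _ _).trans hz.le)
    by_contra! hle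
    have := S.strictAntiOn_Gfun.antitoneOn ha h.1 hle
    rw [h.2] at this
    linarith [le_max_right 0 (Gfun g a)]

lemma eventually_mul_Ginv_le_Ginv_mul (S : StandingHyp g g' β δ)
    (hGinv : ∀ z, 0 ≤ z → 0 < Ginv z ∧ Gfun g (Ginv z) = z) {c μ : ℝ} (hc : 0 ≤ c)
    (hμ : 0 < μ) (hcμ : μ ^ (β - 1) * c < 1) : ∀ᶠ t in atTop, μ * Ginv t ≤ Ginv (c * t) := by
  have hlt : c < μ ^ (1 - β) := by
    rwa [show 1 - β = -(β - 1) by ring, rpow_neg hμ.le, ← one_div,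
      lt_div_iff₀ (rpow_pos_of_pos hμ _), mul_comm]
  have hev : ∀ᶠ y in 𝓝[>] 0, c * Gfun g y < Gfun g (μ * y) := by
    filter_upwards [(S.rvAtZero_Gfun μ hμ).eventually (eventually_gt_nhds hlt),
      Ioo_mem_nhdsGT one_pos] with y hy hy1
    rw [lt_div_iff₀ (S.Gfun_pos hy1.1 hy1.2)] at hy
    linarith
  filter_upwards [(S.tendsto_Ginv hGinv).eventually hev, eventually_ge_atTop 0] with t ht ht0
  have h₁ := hGinv t ht0
  have h₂ := hGinv (c * t) (mul_nonneg hc ht0)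
  rw [h₁.2, ← h₂.2] at ht
  exact ((S.strictAntiOn_Gfun.lt_iff_gt h₂.1 (mul_pos hμ h₁.1)).1 ht).le

lemma eventually_mul_rpow_g_Ginv_le_g (S : StandingHyp g g' β δ)
    (hGinv : ∀ z, 0 ≤ z → 0 < Ginv z ∧ Gfun g (Ginv z) = z) {x : ℝ → ℝ} {lam c θ : ℝ}
    (hx0 : Tendsto x atTop (𝓝 0))
    (hliminf : (lam : EReal) ≤ liminf (fun t => ((x t / Ginv t : ℝ) : EReal)) atTop)
    (hc : 0 < c) (hcl : c < lam) (hθ : θ < 1) :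
    ∀ᶠ t in atTop, θ * c ^ β * g (Ginv t) ≤ g (x t) := by
  have hx : ∀ᶠ t in atTop, c < x t / Ginv t :=
    (eventually_lt_of_lt_liminf ((EReal.coe_lt_coe_iff.2 hcl).trans_le hliminf)).mono
      fun t ht => EReal.coe_lt_coe_iff.1 ht
  filter_upwards [hx, hx0.eventually (eventually_lt_nhds S.delta_pos),
    (S.tendsto_Ginv hGinv).eventually (S.eventually_mul_rpow_mul_le hc hθ),
    eventually_ge_atTop 0] with t hxt hxδ hg ht0
  have hG := (hGinv t ht0).1
  have hcx : c * Ginv t < x t := (lt_div_iff₀ hG).1 hxt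
  exact hg.trans (S.monotoneOn ⟨mul_pos hc hG, hcx.trans hxδ⟩
    ⟨(mul_pos hc hG).trans hcx, hxδ⟩ hcx.le)

lemma eventually_mul_rpow_g_Ginv_le_g_Ginv (S : StandingHyp g g' β δ)
    (hGinv : ∀ z, 0 ≤ z → 0 < Ginv z ∧ Gfun g (Ginv z) = z) {s : ℝ → ℝ} {c μ θ : ℝ}
    (hs : Tendsto s atTop atTop) (hsc : ∀ᶠ t in atTop, s t ≤ c * t) (hc : 0 ≤ c) (hμ : 0 < μ)
    (hcμ : μ ^ (β - 1) * c < 1) (hθ : θ < 1) :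
    ∀ᶠ t in atTop, θ * μ ^ β * g (Ginv t) ≤ g (Ginv (s t)) := by
  filter_upwards [hsc, hs.eventually_ge_atTop 0, S.eventually_mul_Ginv_le_Ginv_mul hGinv hc hμ hcμ,
    (S.tendsto_Ginv hGinv).eventually (S.eventually_mul_rpow_mul_le hμ hθ),
    ((S.tendsto_Ginv hGinv).comp hs).eventually (Ioo_mem_nhdsGT S.delta_pos),
    eventually_ge_atTop 0] with t hst hs0 hμG hg hδ ht0
  have hle : μ * Ginv t ≤ Ginv (s t) := hμG.trans (S.Ginv_le_Ginv hGinv hs0 hst)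
  exact hg.trans (S.monotoneOn ⟨mul_pos hμ (hGinv t ht0).1, hle.trans_lt hδ.2⟩ hδ hle)

lemma eventually_boundConstant_le (S : StandingHyp g g' β δ)
    (hGinv : ∀ z, 0 ≤ z → 0 < Ginv z ∧ Gfun g (Ginv z) = z) {x τ : ℝ → ℝ} {b q lam θ : ℝ}
    (hx0 : Tendsto x atTop (𝓝 0))
    (hliminf : (lam : EReal) ≤ liminf (fun t => ((x t / Ginv t : ℝ) : EReal)) atTop)
    (httau : Tendsto (fun t => t - τ t) atTop atTop)
    (hτq : Tendsto (fun t => τ t / t) atTop (𝓝 q)) (hq1 : q < 1) (hlam : 0 < lam) (hb : 0 < b)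
    (hθ : θ ∈ Ioo 0 1) :
    ∀ᶠ t in atTop, boundConstant b β q lam θ ≤ b * g (x (t - τ t)) / g (Ginv t) := by
  have hq : 0 < 1 - q := by linarith
  set μ := (θ ^ 2 / (1 - q)) ^ (β - 1)⁻¹
  have hμ : 0 < μ := rpow_pos_of_pos (by have := hθ.1; positivity) _
  have hcμ : μ ^ (β - 1) * ((1 - q) / θ) < 1 := by
    rw [← rpow_mul (by positivity), inv_mul_cancel₀ (by linarith [S.one_lt]), rpow_one]
    field_simp
    nlinarith [hθ.1, hθ.2]
  have hx := httau.eventually (S.eventually_mul_rpow_g_Ginv_le_g hGinv hx0 hliminf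
    (mul_pos hlam hθ.1) (mul_lt_of_lt_one_right hlam hθ.2) hθ.2)
  have hsc := eventually_sub_le_mul_of_tendsto_div hτq
    ((lt_div_iff₀ hθ.1).2 (mul_lt_of_lt_one_right hq hθ.2))
  have hdelay := S.eventually_mul_rpow_g_Ginv_le_g_Ginv hGinv httau hsc (div_pos hq hθ.1).le
    hμ hcμ hθ.2
  filter_upwards [hx, hdelay, eventually_ge_atTop 0] with t hxt hdt ht0
  have hA : 0 ≤ θ * (lam * θ) ^ β := (mul_pos hθ.1 (rpow_pos_of_pos (mul_pos hlam hθ.1) β)).le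
  rw [le_div_iff₀ (S.pos _ (hGinv t ht0).1), boundConstant]
  calc b * (θ * (lam * θ) ^ β) * (θ * μ ^ β) * g (Ginv t)
      = b * (θ * (lam * θ) ^ β * (θ * μ ^ β * g (Ginv t))) := by ring
    _ ≤ b * g (x (t - τ t)) :=
      mul_le_mul_of_nonneg_left ((mul_le_mul_of_nonneg_left hdt hA).trans hxt) hb.le

end StandingHyp

theorem stmt16_general
    (b β q lam δ₁ : ℝ) (τ g g' x Ginv : ℝ → ℝ)
    -- hypotheses on g
    (hg0 : g 0 = 0)
    (hgpos : ∀ y : ℝ, 0 < y → 0 < g y)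
    (hgcont : ContinuousOn g (Set.Ici 0))
    (hδ₁ : 0 < δ₁)
    (hgderiv : ∀ y ∈ Set.Ioo (0:ℝ) δ₁, HasDerivAt g (g' y) y)
    (hg'cont : ContinuousOn g' (Set.Ioo 0 δ₁))
    (hg'pos : ∀ y ∈ Set.Ioo (0:ℝ) δ₁, 0 < g' y)
    (hβ : 1 < β)
    (hg'RV : RVatZero g' (β - 1))
    -- the inverse of G
    (hGinv_right : ∀ z : ℝ, 0 ≤ z → Ginv z ∈ Set.Ioc (0:ℝ) 1 ∧ Gfun g (Ginv z) = z)
    -- hypotheses on x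
    (hx0 : Filter.Tendsto x Filter.atTop (nhds 0))
    (hlam : 0 < lam)
    (hliminf : (lam : EReal) ≤
      Filter.liminf (fun t => ((x t / Ginv t : ℝ) : EReal)) Filter.atTop)
    -- hypotheses on τ
    (httau : Filter.Tendsto (fun t => t - τ t) Filter.atTop Filter.atTop)
    (hq1 : q < 1)
    (hτq : Filter.Tendsto (fun t => τ t / t) Filter.atTop (nhds q))
    (hbpos : 0 < b) :
    ((b * lam ^ β * (1 - q) ^ (-(β / (β - 1))) : ℝ) : EReal) ≤
      Filter.liminf
        (fun t => ((b * g (x (t - τ t)) / g (Ginv t) : ℝ) : EReal))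
        Filter.atTop := by
  have S : StandingHyp g g' β δ₁ :=
    ⟨hg0, hgpos, hgcont, hδ₁, hgderiv, hg'cont, hg'pos, hβ, hg'RV⟩
  have hGinv : ∀ z, 0 ≤ z → 0 < Ginv z ∧ Gfun g (Ginv z) = z :=
    fun z hz => ⟨(hGinv_right z hz).1.1, (hGinv_right z hz).2⟩
  refine (le_liminf_iff' (by isBoundedDefault) (by isBoundedDefault)).2 fun r hr => ?_
  obtain ⟨r, hr, hrK⟩ := EReal.lt_iff_exists_real_btwn.1 hr
  obtain ⟨θ, hrθ, hθ⟩ := (((tendsto_boundConstant (b := b) (β := β) hq1 hlam).eventually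
    (eventually_gt_nhds (EReal.coe_lt_coe_iff.1 hrK))).and (Ioo_mem_nhdsLT one_pos)).exists
  filter_upwards [S.eventually_boundConstant_le hGinv hx0 hliminf httau hτq hq1 hlam hbpos hθ]
    with t ht
  exact hr.le.trans (EReal.coe_le_coe_iff.2 (hrθ.le.trans ht))

theorem stmt16
    (b β q lam δ₁ : ℝ) (τ g g' x Ginv : ℝ → ℝ)
    -- hypotheses on g
    (hg0 : g 0 = 0)
    (hgpos : ∀ y : ℝ, 0 < y → 0 < g y)
    (hgcont : ContinuousOn g (Set.Ici 0))
    (hδ₁ : 0 < δ₁)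
    (hgderiv : ∀ y ∈ Set.Ioo (0:ℝ) δ₁, HasDerivAt g (g' y) y)
    (hg'cont : ContinuousOn g' (Set.Ioo 0 δ₁))
    (hg'pos : ∀ y ∈ Set.Ioo (0:ℝ) δ₁, 0 < g' y)
    (hβ : 1 < β)
    (hg'RV : RVatZero g' (β - 1))
    -- the inverse of G
    (hGinv_left : ∀ y ∈ Set.Ioc (0:ℝ) 1, Ginv (Gfun g y) = y)
    (hGinv_right : ∀ z : ℝ, 0 ≤ z → Ginv z ∈ Set.Ioc (0:ℝ) 1 ∧ Gfun g (Ginv z) = z)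
    -- hypotheses on x
    (hxcont : ContinuousOn x (Set.Ici 0))
    (hxpos : ∀ t : ℝ, 0 ≤ t → 0 < x t)
    (hx0 : Filter.Tendsto x Filter.atTop (nhds 0))
    (hlam : 0 < lam)
    (hliminf : (lam : EReal) ≤
      Filter.liminf (fun t => ((x t / Ginv t : ℝ) : EReal)) Filter.atTop)
    -- hypotheses on τ
    (hτcont : ContinuousOn τ (Set.Ici 0))
    (hτnn : ∀ t : ℝ, 0 ≤ t → 0 ≤ τ t)
    (httau : Filter.Tendsto (fun t => t - τ t) Filter.atTop Filter.atTop)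
    (hq0 : 0 < q) (hq1 : q < 1)
    (hτq : Filter.Tendsto (fun t => τ t / t) Filter.atTop (nhds q))
    (hbpos : 0 < b) :
    ((b * lam ^ β * (1 - q) ^ (-(β / (β - 1))) : ℝ) : EReal) ≤
      Filter.liminf
        (fun t => ((b * g (x (t - τ t)) / g (Ginv t) : ℝ) : EReal))
        Filter.atTop :=
  stmt16_general b β q lam δ₁ τ g g' x Ginv hg0 hgpos hgcont hδ₁ hgderiv hg'cont hg'pos hβ hg'RV
    hGinv_right hx0 hlam hliminf httau hq1 hτq hbpos
end
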